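/- arXiv:2212.07234 — 8 statements merged into one kernel-verified Lean document; each statement's English description precedes it below -/
import Mathlib

section
/- For every ε > 0 and every δ > 0 there exists a positive integer N such that for every n ≥ N there exists a simple graph G on n vertices whose independence number is at most δn, whose edge set can be partitioned into two sets E₁ and E₂ such that (V(G), E₁) contains no clique on 3 vertices and (V(G), E₂) contains no clique on 6 vertices, and which has at least (5/12 − ε)·n² edges. -/
/-!
Split the vertices into six parts by their residue mod 6 and join all pairs of vertices in
distinct parts: this Turán graph alone has (5/12 - o(1)) n² edges. Between parts, colour red
along a 5-cycle on the parts 1, …, 5 and blue otherwise (part 0 to everything, and the pentagram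
on 1, …, 5). Inside the parts put a triangle-free graph `H` with independence number o(n), red in
part 0 and blue in the parts 1, …, 5. An independent set then lies in one part and is independent
in `H`. A red triangle would need a triangle in the 5-cycle or in `H`. A blue clique meets part 0
in at most one vertex and every other part in at most two, and since the pentagram is
triangle-free it meets at most two of the parts 1, …, 5, so it has at most 1 + 2 + 2 = 5 vertices.

`H` is a disjoint union of copies of one triangle-free graph of small independence ratio, found by
the first moment and deletion method: the random graph on m = 8^L vertices with edge probability
4^(-L) has on average at most m/4 triangles and fewer than 1/2 independent sets of size
a ≈ 6L·4^L, so some outcome has fewer than m/2 triangles and no independent a-set, and removing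
one vertex from each triangle leaves more than m/2 vertices; a/m → 0.
-/

open Finset SimpleGraph Filter

namespace RamseyTuran

section GraphFacts

variable {α β : Type*} {G : SimpleGraph α}

lemma cliqueFree_of_hom {H : SimpleGraph β} {n : ℕ} (f : G →g H) (h : H.CliqueFree n) :
    G.CliqueFree n := by
  classical
  rintro t ⟨ht, rfl⟩
  have hinj : Set.InjOn f t := fun x hx y hy hxy =>
    by_contra fun hne => (f.map_adj (ht hx hy hne)).ne hxy
  refine h (t.image f) ⟨?_, card_image_of_injOn hinj⟩
  rw [coe_image]
  rintro _ ⟨x, hx, rfl⟩ _ ⟨y, hy, rfl⟩ hne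
  exact f.map_adj (ht hx hy fun h => hne (h ▸ rfl))

lemma indepNum_comap_le [Finite β] {G : SimpleGraph β} (f : α ↪ β) :
    (G.comap f).indepNum ≤ G.indepNum := by
  obtain ⟨S, hS⟩ := (G.comap f).exists_isNIndepSet_indepNum
  rw [← hS.card_eq, ← card_map f]
  refine IsIndepSet.card_le_indepNum ?_
  rw [coe_map]
  rintro _ ⟨x, hx, rfl⟩ _ ⟨y, hy, rfl⟩ hne
  exact hS.isIndepSet hx hy fun h => hne (h ▸ rfl)

lemma indepNum_lt_of_indepSetFree [Finite α] {a : ℕ} (h : G.IndepSetFree a) :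
    G.indepNum < a := by
  by_contra! hle
  obtain ⟨S, hS⟩ := G.exists_isNIndepSet_indepNum
  obtain ⟨T, hTS, hT⟩ := exists_subset_card_eq (hS.card_eq ▸ hle)
  exact h T ⟨hS.isIndepSet.mono (coe_subset.2 hTS), hT⟩

lemma exists_cliqueFree_three_comap [Fintype α] [DecidableEq α] [DecidableRel G.Adj] :
    ∃ s, Fintype.card α ≤ s + #(G.cliqueFinset 3) ∧
      ∃ f : Fin s ↪ α, (G.comap f).CliqueFree 3 := by
  have hmem : ∀ T ∈ G.cliqueFinset 3, ∃ v, v ∈ T := fun T hT =>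
    card_pos.1 (by rw [(mem_cliqueFinset_iff.1 hT).card_eq]; norm_num)
  choose g hg using hmem
  set D := (G.cliqueFinset 3).attach.image fun T => g T.1 T.2
  set W := univ \ D
  set f : Fin #W ↪ α :=
    W.equivFin.symm.toEmbedding.trans (Function.Embedding.subtype (· ∈ W))
  refine ⟨#W, ?_, f, fun T hT => ?_⟩
  · have h₁ : #(univ : Finset α) ≤ #W + #D := card_le_card_sdiff_add_card
    have h₂ : #D ≤ #(G.cliqueFinset 3) := card_image_le.trans card_attach.le
    rw [card_univ] at h₁
    omega
  · have hT' : T.map f ∈ G.cliqueFinset 3 :=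
      mem_cliqueFinset_iff.2 ((hT.map).mono (map_comap_le _ _))
    obtain ⟨i, -, hi⟩ := mem_map.1 (hg _ hT')
    have hW : f i ∈ W := (W.equivFin.symm i).2
    rw [hi] at hW
    exact (mem_sdiff.1 hW).2 (mem_image_of_mem _ (mem_attach _ ⟨_, hT'⟩))

end GraphFacts

section RandomGraph

open Fintype

lemma card_filter_forall_mem {D β : Type*} [Fintype D] [DecidableEq D] [Fintype β]
    [DecidableEq β] [Nonempty β] (T : Finset D) (B : Finset β) :
    (#{ω : D → β | ∀ e ∈ T, ω e ∈ B} : ℝ) = card (D → β) * (#B / card β) ^ #T := by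
  have hfilter : ({ω : D → β | ∀ e ∈ T, ω e ∈ B} : Finset (D → β))
      = piFinset fun e => if e ∈ T then B else univ := by
    ext ω
    simp only [mem_filter, mem_univ, true_and, mem_piFinset]
    exact ⟨fun h e => by split_ifs with he <;> simp [h e, he],
      fun h e he => by simpa [he] using h e⟩
  have hfactor : ∀ e : D, ((#(if e ∈ T then B else univ) : ℕ) : ℝ)
      = (card β : ℝ) * if e ∈ T then (#B : ℝ) / card β else 1 := by
    intro e
    split_ifs
    · field_simp
    · simp
  rw [hfilter, card_piFinset, Nat.cast_prod, prod_congr rfl fun e _ => hfactor e,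
    prod_mul_distrib, Fintype.prod_ite_mem, prod_const, prod_const, card_univ, card_fun,
    Nat.cast_pow]

variable {V β : Type*} [DecidableEq V]

/-- Only the values of `ω` on pairs matter; for uniformly random `ω` this is the random graph
with edge probability `#B / card β`. -/
def colouringGraph (B : Finset β) (ω : Finset V → β) : SimpleGraph V where
  Adj x y := x ≠ y ∧ ω {x, y} ∈ B
  symm := ⟨fun x y h => ⟨h.1.symm, pair_comm x y ▸ h.2⟩⟩
  loopless := ⟨fun _ h => h.1 rfl⟩

instance [DecidableEq β] (B : Finset β) (ω : Finset V → β) :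
    DecidableRel (colouringGraph B ω).Adj :=
  fun _ _ => inferInstanceAs (Decidable (_ ∧ _))

lemma forall_mem_powersetCard_two_iff {S : Finset V} {p : Finset V → Prop} :
    (∀ e ∈ S.powersetCard 2, p e) ↔ (S : Set V).Pairwise fun x y => p {x, y} := by
  simp only [mem_powersetCard, card_eq_two]
  constructor
  · intro h x hx y hy hxy
    exact h _ ⟨insert_subset hx (singleton_subset_iff.2 hy), x, y, hxy, rfl⟩
  · rintro h _ ⟨hS, x, y, hxy, rfl⟩
    rw [insert_subset_iff, singleton_subset_iff] at hS
    exact h hS.1 hS.2 hxy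

variable {B : Finset β} {ω : Finset V → β}

lemma isClique_colouringGraph_iff {S : Finset V} :
    (colouringGraph B ω).IsClique (S : Set V) ↔ ∀ e ∈ S.powersetCard 2, ω e ∈ B := by
  rw [forall_mem_powersetCard_two_iff]
  exact ⟨fun h x hx y hy hxy => (h hx hy hxy).2, fun h x hx y hy hxy => ⟨hxy, h hx hy hxy⟩⟩

lemma isIndepSet_colouringGraph_iff [Fintype β] [DecidableEq β] {S : Finset V} :
    (colouringGraph B ω).IsIndepSet (S : Set V) ↔ ∀ e ∈ S.powersetCard 2, ω e ∈ Bᶜ := by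
  rw [forall_mem_powersetCard_two_iff]
  refine ⟨fun h x hx y hy hxy => ?_, fun h x hx y hy hxy hadj => ?_⟩
  · simpa [colouringGraph, hxy] using h hx hy hxy
  · exact mem_compl.1 (h hx hy hxy) hadj.2

lemma cliqueFinset_colouringGraph [Fintype V] [DecidableEq β] (r : ℕ) :
    (colouringGraph B ω).cliqueFinset r
      = {S ∈ powersetCard r (univ : Finset V) | ∀ e ∈ S.powersetCard 2, ω e ∈ B} := by
  ext S
  simp [isNClique_iff, isClique_colouringGraph_iff, and_comm]

lemma indepSetFinset_colouringGraph [Fintype V] [Fintype β] [DecidableEq β] (r : ℕ) :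
    (colouringGraph B ω).indepSetFinset r
      = {S ∈ powersetCard r (univ : Finset V) | ∀ e ∈ S.powersetCard 2, ω e ∈ Bᶜ} := by
  ext S
  simp [isNIndepSet_iff, isIndepSet_colouringGraph_iff, and_comm]

lemma sum_card_filter_forall_powersetCard_two [Fintype V] [Fintype β] [DecidableEq β]
    [Nonempty β] (r : ℕ) (B : Finset β) :
    ∑ ω : Finset V → β,
        (#{S ∈ powersetCard r univ | ∀ e ∈ S.powersetCard 2, ω e ∈ B} : ℝ)
      = card (Finset V → β) * ((card V).choose r * (#B / card β) ^ r.choose 2) := by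
  have hS : ∀ S ∈ powersetCard r (univ : Finset V),
      (#{ω : Finset V → β | ∀ e ∈ S.powersetCard 2, ω e ∈ B} : ℝ)
        = card (Finset V → β) * (#B / card β) ^ r.choose 2 := by
    intro S hS
    rw [card_filter_forall_mem, card_powersetCard, (mem_powersetCard.1 hS).2]
  have hswap :
      ∑ ω : Finset V → β,
          #{S ∈ powersetCard r univ | ∀ e ∈ S.powersetCard 2, ω e ∈ B}
        = ∑ S ∈ powersetCard r univ,
            #{ω : Finset V → β | ∀ e ∈ S.powersetCard 2, ω e ∈ B} :=
    sum_card_bipartiteAbove_eq_sum_card_bipartiteBelow _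
  rw [← Nat.cast_sum, hswap, Nat.cast_sum, sum_congr rfl hS, sum_const, card_powersetCard,
    card_univ, nsmul_eq_mul]
  ring

/-- `htri` and `hind` bound the expected numbers of triangles and of independent `a`-sets. -/
lemma exists_colouringGraph_indepSetFree [Fintype V] [Nonempty V] [Fintype β] [DecidableEq β]
    [Nonempty β] (B : Finset β) (a : ℕ)
    (htri : (card V).choose 3 * ((#B : ℝ) / card β) ^ 3 ≤ card V / 4)
    (hind : (card V).choose a * ((#Bᶜ : ℝ) / card β) ^ a.choose 2 < 1 / 2) :
    ∃ ω : Finset V → β, 2 * #((colouringGraph B ω).cliqueFinset 3) < card V ∧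
      (colouringGraph B ω).IndepSetFree a := by
  have hV : (0 : ℝ) < card V := by exact_mod_cast Fintype.card_pos
  have hΩ : (0 : ℝ) < card (Finset V → β) := by exact_mod_cast Fintype.card_pos
  have hsum : ∑ ω : Finset V → β, (2 * #((colouringGraph B ω).cliqueFinset 3)
      + card V * #((colouringGraph B ω).indepSetFinset a) : ℝ)
        < ∑ _ω : Finset V → β, (card V : ℝ) := by
    simp only [cliqueFinset_colouringGraph, indepSetFinset_colouringGraph]
    rw [sum_add_distrib, ← mul_sum, ← mul_sum, sum_card_filter_forall_powersetCard_two,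
      sum_card_filter_forall_powersetCard_two, sum_const, card_univ, nsmul_eq_mul,
      show Nat.choose 3 2 = 3 from rfl]
    nlinarith [mul_lt_mul_of_pos_left hind (mul_pos hΩ hV), mul_le_mul_of_nonneg_left htri hΩ.le]
  obtain ⟨ω, -, hω⟩ := exists_lt_of_sum_lt hsum
  refine ⟨ω, by exact_mod_cast (le_add_of_nonneg_right (by positivity)).trans_lt hω, ?_⟩
  intro S hS
  have hpos : 1 ≤ #((colouringGraph B ω).indepSetFinset a) :=
    card_pos.2 ⟨S, mem_indepSetFinset_iff.2 hS⟩
  have : (card V : ℝ) ≤ card V * #((colouringGraph B ω).indepSetFinset a) :=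
    le_mul_of_one_le_right hV.le (by exact_mod_cast hpos)
  linarith [(by positivity : (0 : ℝ) ≤ 2 * #((colouringGraph B ω).cliqueFinset 3))]

end RandomGraph

section Numerics

open Real

lemma one_sub_inv_pow_le_half {k : ℕ} (hk : 0 < k) : (1 - (k : ℝ)⁻¹) ^ k ≤ 1 / 2 := by
  have hk' : (0 : ℝ) < k := by exact_mod_cast hk
  calc (1 - (k : ℝ)⁻¹) ^ k ≤ exp (-(k : ℝ)⁻¹) ^ k :=
        pow_le_pow_left₀ (sub_nonneg.2 (inv_le_one_of_one_le₀ (by exact_mod_cast hk)))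
          (one_sub_le_exp_neg _) k
    _ = exp (-1) := by rw [← exp_nat_mul, mul_neg, mul_inv_cancel₀ hk'.ne']
    _ ≤ 1 / 2 := by
        rw [exp_neg, one_div]
        exact inv_anti₀ two_pos (by linarith [add_one_le_exp (1 : ℝ)])

lemma choose_three_mul_inv_pow_le {m k : ℕ} (h : m ^ 2 ≤ k ^ 3) :
    (m.choose 3 : ℝ) * ((k : ℝ)⁻¹) ^ 3 ≤ m / 4 := by
  rcases Nat.eq_zero_or_pos k with rfl | hk
  · simp only [CharP.cast_eq_zero, inv_zero, ne_eq, OfNat.ofNat_ne_zero, not_false_eq_true,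
      zero_pow, mul_zero]
    positivity
  have hk' : (0 : ℝ) < (k : ℝ) ^ 3 := by positivity
  have hmk : (m : ℝ) ^ 2 ≤ (k : ℝ) ^ 3 := by exact_mod_cast h
  have hchoose := Nat.choose_le_pow_div (α := ℝ) 3 m
  rw [show (Nat.factorial 3 : ℝ) = 6 by norm_num] at hchoose
  calc (m.choose 3 : ℝ) * ((k : ℝ)⁻¹) ^ 3 ≤ (m : ℝ) ^ 3 / 6 * ((k : ℝ)⁻¹) ^ 3 := by
        gcongr
    _ = (m : ℝ) / 6 * ((m : ℝ) ^ 2 / (k : ℝ) ^ 3) := by ring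
    _ ≤ (m : ℝ) / 6 * 1 := by gcongr; exact div_le_one_of_le₀ hmk hk'.le
    _ ≤ (m : ℝ) / 4 := by linarith [(by positivity : (0 : ℝ) ≤ m)]

lemma choose_mul_one_sub_inv_pow_lt_half {t k a : ℕ} (hk : 0 < k) (ha : 2 ≤ a)
    (h : k * ((t + 1) * a) ≤ a.choose 2) :
    ((2 ^ t).choose a : ℝ) * (1 - (k : ℝ)⁻¹) ^ a.choose 2 < 1 / 2 := by
  have hq₀ : 0 ≤ 1 - (k : ℝ)⁻¹ :=
    sub_nonneg.2 (inv_le_one_of_one_le₀ (by exact_mod_cast hk))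
  have hq₁ : 1 - (k : ℝ)⁻¹ ≤ 1 := sub_le_self _ (by positivity)
  have hchoose : ((2 ^ t).choose a : ℝ) ≤ 2 ^ (t * a) := by
    rw [pow_mul]; exact_mod_cast Nat.choose_le_pow _ _
  have hpow : (1 - (k : ℝ)⁻¹) ^ a.choose 2 ≤ (1 / 2) ^ ((t + 1) * a) :=
    calc (1 - (k : ℝ)⁻¹) ^ a.choose 2 ≤ (1 - (k : ℝ)⁻¹) ^ (k * ((t + 1) * a)) :=
          pow_le_pow_of_le_one hq₀ hq₁ h
      _ ≤ (1 / 2) ^ ((t + 1) * a) := by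
          rw [pow_mul]
          exact pow_le_pow_left₀ (pow_nonneg hq₀ _) (one_sub_inv_pow_le_half hk) _
  have ha' : ((1 : ℝ) / 2) ^ a ≤ (1 / 2) ^ 2 :=
    pow_le_pow_of_le_one (by norm_num) (by norm_num) ha
  calc ((2 ^ t).choose a : ℝ) * (1 - (k : ℝ)⁻¹) ^ a.choose 2
      ≤ 2 ^ (t * a) * (1 / 2) ^ ((t + 1) * a) := by gcongr
    _ = (1 / 2) ^ a := by
        rw [add_mul, one_mul, pow_add, ← mul_assoc, ← mul_pow]; norm_num
    _ < 1 / 2 := by linarith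

end Numerics

/-- Uses the random graph on `m = 8 ^ L` vertices with edge probability `1 / k`, `k = 4 ^ L`, so
that `m ^ 2 = k ^ 3`; the bound `a = 2 k (3L + 1) + 1` makes `a.choose 2 = k (3L + 1) a`. -/
lemma exists_cliqueFree_three_indepNum_lt (L : ℕ) :
    ∃ s, 8 ^ L ≤ 2 * s ∧ ∃ H : SimpleGraph (Fin s), H.CliqueFree 3 ∧
      H.indepNum < 2 * 4 ^ L * (3 * L + 1) + 1 := by
  set k := 4 ^ L
  set a := 2 * k * (3 * L + 1) + 1
  have hk : 0 < k := by positivity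
  have : NeZero k := ⟨hk.ne'⟩
  have hchoose : a.choose 2 = k * ((3 * L + 1) * a) := by
    rw [Nat.choose_two_right, show a * (a - 1) = 2 * (k * ((3 * L + 1) * a)) by
      simp only [a, Nat.add_sub_cancel]; ring]
    exact Nat.mul_div_cancel_left _ two_pos
  have htri : ((Fintype.card (Fin (8 ^ L))).choose 3 : ℝ)
      * ((#({0} : Finset (Fin k)) : ℝ) / Fintype.card (Fin k)) ^ 3
        ≤ Fintype.card (Fin (8 ^ L)) / 4 := by
    rw [card_singleton, Fintype.card_fin, Fintype.card_fin, Nat.cast_one, one_div]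
    refine choose_three_mul_inv_pow_le ?_
    rw [← pow_mul, ← pow_mul, mul_comm L 2, mul_comm L 3, pow_mul, pow_mul]
    norm_num
  have hind : ((Fintype.card (Fin (8 ^ L))).choose a : ℝ)
      * ((#({0} : Finset (Fin k))ᶜ : ℝ) / Fintype.card (Fin k)) ^ a.choose 2 < 1 / 2 := by
    rw [card_compl, card_singleton, Fintype.card_fin, Fintype.card_fin, Nat.cast_sub hk,
      Nat.cast_one, sub_div, div_self (by positivity), one_div, show 8 ^ L = 2 ^ (3 * L) by
        rw [pow_mul]; norm_num]
    have : 0 < 2 * k * (3 * L + 1) := by positivity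
    exact choose_mul_one_sub_inv_pow_lt_half hk (by omega) hchoose.ge
  obtain ⟨ω, hfew, hfree⟩ := exists_colouringGraph_indepSetFree _ a htri hind
  obtain ⟨s, hs, f, hf⟩ := exists_cliqueFree_three_comap (G := colouringGraph {0} ω)
  rw [Fintype.card_fin] at hs hfew
  exact ⟨s, by omega, _, hf, (indepNum_comap_le f).trans_lt (indepNum_lt_of_indepSetFree hfree)⟩

lemma exists_cliqueFree_three_indepNum_le_mul {δ : ℝ} (hδ : 0 < δ) :
    ∃ s, 0 < s ∧ ∃ H : SimpleGraph (Fin s), H.CliqueFree 3 ∧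
      (H.indepNum : ℝ) ≤ δ * s := by
  have hlim := tendsto_pow_const_div_const_pow_of_one_lt 1 (one_lt_two : (1 : ℝ) < 2)
  obtain ⟨L, hL, hL1⟩ := ((hlim.eventually (gt_mem_nhds (by positivity : 0 < δ / 16))).and
    (eventually_ge_atTop 1)).exists
  obtain ⟨s, hs, H, hH, hα⟩ := exists_cliqueFree_three_indepNum_lt L
  refine ⟨s, by have := Nat.one_le_pow L 8 (by norm_num); omega, H, hH, ?_⟩
  have hαR : (H.indepNum : ℝ) ≤ 2 * 4 ^ L * (3 * L + 1) := by
    exact_mod_cast Nat.le_of_lt_succ hα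
  have hsR : (8 : ℝ) ^ L ≤ 2 * s := by exact_mod_cast hs
  have hLR : (1 : ℝ) ≤ L := by exact_mod_cast hL1
  rw [pow_one, div_lt_iff₀ (by positivity)] at hL
  have h8 : (8 : ℝ) ^ L = 4 ^ L * 2 ^ L := by rw [← mul_pow]; norm_num
  calc (H.indepNum : ℝ) ≤ 2 * 4 ^ L * (3 * L + 1) := hαR
    _ ≤ 8 * 4 ^ L * L := by nlinarith
    _ ≤ 8 * 4 ^ L * (δ / 16 * 2 ^ L) := by gcongr
    _ = δ * (8 ^ L / 2) := by rw [h8]; ring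
    _ ≤ δ * s := by gcongr; linarith

section BlockUnion

variable {s : ℕ} [NeZero s]

def blockUnion (H : SimpleGraph (Fin s)) (n : ℕ) : SimpleGraph (Fin n) where
  Adj u v := (u : ℕ) / s = v / s ∧ H.Adj (Fin.ofNat s u) (Fin.ofNat s v)
  symm := ⟨fun _ _ h => ⟨h.1.symm, h.2.symm⟩⟩
  loopless := ⟨fun _ h => H.irrefl h.2⟩

variable (H : SimpleGraph (Fin s)) (n : ℕ)

def blockUnionHom : blockUnion H n →g H where
  toFun u := Fin.ofNat s u
  map_rel' h := h.2

lemma blockUnion_cliqueFree {k : ℕ} (hH : H.CliqueFree k) : (blockUnion H n).CliqueFree k :=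
  cliqueFree_of_hom (blockUnionHom H n) hH

lemma indepNum_blockUnion_le : (blockUnion H n).indepNum ≤ H.indepNum * (n / s + 1) := by
  obtain ⟨S, hS⟩ := (blockUnion H n).exists_isNIndepSet_indepNum
  rw [← hS.card_eq]
  refine (card_le_mul_card_image (f := fun u : Fin n => (u : ℕ) / s) S _ fun b _ => ?_).trans
    (Nat.mul_le_mul_left _ ?_)
  · set F := {u ∈ S | u.val / s = b}
    have hinj : Set.InjOn (fun u : Fin n => Fin.ofNat s u) F := by
      intro u hu v hv huv
      simp only [F, coe_filter, Set.mem_ofPred_eq] at hu hv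
      have hmod := congrArg Fin.val huv
      simp only [Fin.val_ofNat] at hmod
      exact Fin.ext (Nat.ext_div_mod (hu.2.trans hv.2.symm) hmod)
    rw [← card_image_of_injOn hinj]
    refine IsIndepSet.card_le_indepNum ?_
    rw [coe_image]
    rintro _ ⟨u, hu, rfl⟩ _ ⟨v, hv, rfl⟩ hne hadj
    simp only [F, coe_filter, Set.mem_ofPred_eq] at hu hv
    exact hS.isIndepSet hu.1 hv.1 (fun h => hne (h ▸ rfl)) ⟨hu.2.trans hv.2.symm, hadj⟩
  · calc #(S.image fun u : Fin n => (u : ℕ) / s) ≤ #(range (n / s + 1)) :=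
          card_le_card fun b hb => by
            obtain ⟨u, -, rfl⟩ := mem_image.1 hb
            exact mem_range_succ_iff.2 (Nat.div_le_div_right u.2.le)
      _ = n / s + 1 := card_range _

end BlockUnion

lemma eventually_exists_cliqueFree_three_indepNum_le {δ : ℝ} (hδ : 0 < δ) :
    ∀ᶠ n in atTop, ∃ H : SimpleGraph (Fin n), H.CliqueFree 3 ∧
      (H.indepNum : ℝ) ≤ δ * n := by
  obtain ⟨s, hs, H, hH, hα⟩ := exists_cliqueFree_three_indepNum_le_mul (half_pos hδ)
  have : NeZero s := ⟨hs.ne'⟩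
  filter_upwards [eventually_ge_atTop s] with n hn
  refine ⟨blockUnion H n, blockUnion_cliqueFree H n hH, ?_⟩
  have h₁ : ((blockUnion H n).indepNum : ℝ) ≤ H.indepNum * ((n / s : ℕ) + 1) := by
    exact_mod_cast indepNum_blockUnion_le H n
  have h₂ : (s : ℝ) * (n / s : ℕ) ≤ n := by exact_mod_cast Nat.mul_div_le n s
  have h₃ : (s : ℝ) ≤ n := by exact_mod_cast hn
  calc ((blockUnion H n).indepNum : ℝ) ≤ δ / 2 * s * ((n / s : ℕ) + 1) :=
        h₁.trans (by gcongr)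
    _ = δ / 2 * (s * (n / s : ℕ) + s) := by ring
    _ ≤ δ / 2 * (n + n) := by gcongr
    _ = δ * n := by ring

section Pattern

variable {V ι : Type*} [DecidableEq ι]

def patternGraph (P : SimpleGraph ι) (A : Finset ι) (H : SimpleGraph V) (c : V → ι) :
    SimpleGraph V where
  Adj u v := P.Adj (c u) (c v) ∨ (c u = c v ∧ c u ∈ A ∧ H.Adj u v)
  symm := ⟨fun _ _ h => h.imp P.adj_symm fun ⟨h₁, h₂, h₃⟩ =>
    ⟨h₁.symm, h₁ ▸ h₂, H.adj_symm h₃⟩⟩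
  loopless := ⟨fun _ h => h.elim P.irrefl fun h => H.irrefl h.2.2⟩

variable {P : SimpleGraph ι} {A : Finset ι} {H : SimpleGraph V} {c : V → ι}

lemma patternGraph_inf_compl [Fintype ι] :
    patternGraph P A H c ⊓ patternGraph Pᶜ Aᶜ H c = ⊥ := by
  ext u v
  simp only [patternGraph, inf_adj, compl_adj, mem_compl, bot_adj, iff_false]
  rintro ⟨h | ⟨hc, hA, -⟩, ⟨hne, hP⟩ | ⟨hc', hA', -⟩⟩
  · exact hP h
  · exact P.irrefl (hc' ▸ h)
  · exact hne hc
  · exact hA' hA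

lemma patternGraph_sup_compl_adj [Fintype ι] {u v : V} :
    (patternGraph P A H c ⊔ patternGraph Pᶜ Aᶜ H c).Adj u v ↔
      c u ≠ c v ∨ H.Adj u v := by
  simp only [patternGraph, sup_adj, compl_adj, mem_compl]
  constructor
  · rintro ((h | ⟨-, -, h⟩) | (h | ⟨-, -, h⟩))
    exacts [Or.inl h.ne, Or.inr h, Or.inl h.1, Or.inr h]
  · by_cases hc : c u = c v
    · by_cases hA : c u ∈ A <;> simp_all
    · by_cases hP : P.Adj (c u) (c v) <;> simp_all

lemma card_filter_le_of_isClique_patternGraph (hH : H.CliqueFree 3) {t : Finset V}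
    (ht : (patternGraph P A H c).IsClique (t : Set V)) (p : ι) :
    #{u ∈ t | c u = p} ≤ if p ∈ A then 2 else 1 := by
  have hfib : ∀ u ∈ {u ∈ t | c u = p}, ∀ v ∈ {u ∈ t | c u = p}, u ≠ v →
      p ∈ A ∧ H.Adj u v := by
    intro u hu v hv huv
    simp only [mem_filter] at hu hv
    rcases ht hu.1 hv.1 huv with h | ⟨-, hA, h⟩
    · rw [hu.2, hv.2] at h
      exact absurd h P.irrefl
    · exact ⟨hu.2 ▸ hA, h⟩
  split_ifs with hA
  · by_contra! h
    obtain ⟨T, hT, hTcard⟩ := exists_subset_card_eq h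
    exact hH T ⟨fun u hu v hv huv => (hfib u (hT hu) v (hT hv) huv).2, hTcard⟩
  · exact card_le_one.2 fun u hu v hv => by_contra fun huv => hA (hfib u hu v hv huv).1

lemma patternGraph_cliqueFree (hH : H.CliqueFree 3) {k : ℕ}
    (hP : ∀ Q : Finset ι, P.IsClique (Q : Set ι) →
      ∑ p ∈ Q, (if p ∈ A then 2 else 1) < k) :
    (patternGraph P A H c).CliqueFree k := by
  classical
  rintro t ⟨ht, rfl⟩
  have hQ : P.IsClique (t.image c : Set ι) := by
    rw [coe_image]
    rintro _ ⟨u, hu, rfl⟩ _ ⟨v, hv, rfl⟩ hne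
    exact (ht hu hv fun h => hne (h ▸ rfl)).resolve_right fun h => hne h.1
  refine (hP _ hQ).not_ge ?_
  rw [card_eq_sum_card_image c t]
  exact sum_le_sum fun p _ => card_filter_le_of_isClique_patternGraph hH ht p

end Pattern

/-- The 5-cycle `1 - 2 - 3 - 4 - 5 - 1`; the vertex `0` is isolated. -/
def pentagon : SimpleGraph (Fin 6) :=
  fromRel fun p q => p ≠ 0 ∧ (q : ℕ) = p % 5 + 1

instance : DecidableRel pentagon.Adj := fun p q => by unfold pentagon; infer_instance

lemma sum_weight_lt_of_isClique_pentagon :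
    ∀ Q : Finset (Fin 6), pentagon.IsClique (Q : Set (Fin 6)) →
      ∑ p ∈ Q, (if p ∈ ({0} : Finset (Fin 6)) then 2 else 1) < 3 := by
  decide

lemma sum_weight_lt_of_isClique_compl_pentagon :
    ∀ Q : Finset (Fin 6), pentagonᶜ.IsClique (Q : Set (Fin 6)) →
      ∑ p ∈ Q, (if p ∈ ({0} : Finset (Fin 6))ᶜ then 2 else 1) < 6 := by
  decide

lemma card_filter_mod_eq_le (n r j : ℕ) : #{u : Fin n | (u : ℕ) % r = j} ≤ n / r + 1 := by
  have hinj : Set.InjOn (fun u : Fin n => (u : ℕ) / r)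
      ↑({u : Fin n | (u : ℕ) % r = j} : Finset _) := by
    intro u hu v hv huv
    simp only [coe_filter, mem_univ, true_and, Set.mem_ofPred_eq] at hu hv
    exact Fin.ext (Nat.ext_div_mod huv (hu.trans hv.symm))
  calc #{u : Fin n | (u : ℕ) % r = j} ≤ #(range (n / r + 1)) :=
        card_le_card_of_injOn _
          (fun u _ => mem_range_succ_iff.2 (Nat.div_le_div_right u.2.le)) hinj
    _ = n / r + 1 := card_range _

lemma le_degree_turanGraph (n r : ℕ) (v : Fin n) :
    n ≤ (turanGraph n r).degree v + (n / r + 1) := by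
  have hsplit := card_filter_add_card_filter_not (s := (univ : Finset (Fin n)))
    fun u => (turanGraph n r).Adj v u
  rw [card_univ, Fintype.card_fin, ← neighborFinset_eq_filter,
    card_neighborFinset_eq_degree] at hsplit
  have hclass : #{u : Fin n | ¬(turanGraph n r).Adj v u} ≤ n / r + 1 := by
    simpa only [turanGraph_adj, not_not, eq_comm] using card_filter_mod_eq_le n r (v % r)
  omega

lemma turanGraph_edgeSet_ncard_ge (n r : ℕ) :
    (1 - (r : ℝ)⁻¹) * n ^ 2 / 2 - n / 2 ≤ (turanGraph n r).edgeSet.ncard := by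
  have hsum : n * n ≤ 2 * #(turanGraph n r).edgeFinset + n * (n / r + 1) := by
    have := sum_le_sum fun v (_ : v ∈ (univ : Finset (Fin n))) => le_degree_turanGraph n r v
    rwa [sum_add_distrib, sum_degrees_eq_twice_card_edges, sum_const, sum_const, card_univ,
      Fintype.card_fin, smul_eq_mul, smul_eq_mul] at this
  have hsumR : (n : ℝ) * n ≤ 2 * #(turanGraph n r).edgeFinset + n * ((n / r : ℕ) + 1) := by
    exact_mod_cast hsum
  have hdiv : ((n / r : ℕ) : ℝ) ≤ n / r := Nat.cast_div_le
  rw [← coe_edgeFinset, Set.ncard_coe_finset]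
  have : (1 - (r : ℝ)⁻¹) * n ^ 2 = n * (n - n / r) := by ring
  nlinarith [(by positivity : (0 : ℝ) ≤ n)]

end RamseyTuran

open RamseyTuran in
/-- Lower bound half of ρ(3,6) = 5/12: for every ε > 0 and δ > 0 there is N such that
for every n ≥ N there is an n-vertex graph with independence number at most δn whose
edges can be 2-colored with no red K₃ and no blue K₆, having at least (5/12 − ε)n² edges. -/
theorem rt_3_6_lower :
    ∀ ε : ℝ, 0 < ε → ∀ δ : ℝ, 0 < δ → ∃ N : ℕ, 0 < N ∧
      ∀ n : ℕ, N ≤ n → ∃ G : SimpleGraph (Fin n),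
        (∀ s : Finset (Fin n),
            (∀ x ∈ s, ∀ y ∈ s, x ≠ y → ¬ G.Adj x y) → (s.card : ℝ) ≤ δ * n) ∧
        (∃ E₁ E₂ : SimpleGraph (Fin n),
            E₁ ⊔ E₂ = G ∧ E₁ ⊓ E₂ = ⊥ ∧ E₁.CliqueFree 3 ∧ E₂.CliqueFree 6) ∧
        (5 / 12 - ε) * n ^ 2 ≤ (G.edgeSet.ncard : ℝ) := by
  intro ε hε δ hδ
  obtain ⟨N, hN⟩ := eventually_atTop.1 ((eventually_exists_cliqueFree_three_indepNum_le hδ).and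
    (tendsto_natCast_atTop_atTop.eventually_ge_atTop (2 * ε)⁻¹))
  refine ⟨N + 1, N.succ_pos, fun n hn => ?_⟩
  obtain ⟨⟨H, hH, hα⟩, hnε⟩ := hN n (by omega)
  let part : Fin n → Fin 6 := fun u => ⟨u % 6, Nat.mod_lt _ (by norm_num)⟩
  let red := patternGraph pentagon {0} H part
  let blue := patternGraph pentagonᶜ {0}ᶜ H part
  refine ⟨red ⊔ blue, fun s hs => ?_, ⟨red, blue, rfl, patternGraph_inf_compl,
    patternGraph_cliqueFree hH sum_weight_lt_of_isClique_pentagon,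
    patternGraph_cliqueFree hH sum_weight_lt_of_isClique_compl_pentagon⟩, ?_⟩
  · have hs' : H.IsIndepSet (s : Set (Fin n)) := fun x hx y hy hxy hadj =>
      hs x hx y hy hxy (patternGraph_sup_compl_adj.2 (Or.inr hadj))
    exact (Nat.cast_le.2 hs'.card_le_indepNum).trans hα
  · have hturan : turanGraph n 6 ≤ red ⊔ blue := fun u v huv =>
      patternGraph_sup_compl_adj.2 (Or.inl fun h => huv (congrArg Fin.val h))
    have hle := Set.ncard_le_ncard (edgeSet_mono hturan) (Set.toFinite _)
    have hbound := turanGraph_edgeSet_ncard_ge n 6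
    rw [inv_le_iff_one_le_mul₀ (by positivity)] at hnε
    push_cast at hbound
    nlinarith [(Nat.cast_le (α := ℝ)).2 hle, (Nat.cast_nonneg n : (0 : ℝ) ≤ n)]
end

section
/- Let 0 < δ < 1, let G be a simple graph on n vertices with independence number at most δn, and let φ be a map from the edge set of G to {1, 2}. Then there is a partition V(G) = U₁ ⊔ U₂ such that for each k ∈ {1, 2}, every subset S of U_k with |S| > √δ·n contains an edge e of G with φ(e) = k. (Equivalently, the independence number of the graph on U_k formed by the edges of color k is at most √δ·n for each k.) -/
/-!
Take `m = ⌊√δ n⌋ + 1` and a maximal family `𝒫` of pairwise disjoint `m`-sets without edges of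
colour `0`; let `U 1 = ⋃ 𝒫` and `U 0` its complement. By maximality every `m`-subset of `U 0`
contains an edge of colour `0`. A set `T ⊆ U 1` without edges of colour `1` meets each `A ∈ 𝒫`
in an independent set of `G`, so `|T| ≤ |𝒫| δ n ≤ (n / m) δ n < √δ n`.
-/

open Finset

namespace Finset

variable {α : Type*} [DecidableEq α]

theorem exists_pairwiseDisjoint_forall_disjoint_biUnion_not [Fintype α] (p : Finset α → Prop)
    (hp : ∀ s, p s → s.Nonempty) :
    ∃ P : Finset (Finset α), (P : Set (Finset α)).PairwiseDisjoint id ∧ (∀ A ∈ P, p A) ∧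
      ∀ S, Disjoint S (P.biUnion id) → ¬ p S := by
  classical
  let packings := (univ.filter p).powerset.filter
    fun P : Finset (Finset α) => (P : Set (Finset α)).PairwiseDisjoint id
  obtain ⟨P, hP, hmax⟩ := Finset.exists_max_image packings Finset.card ⟨∅, by simp [packings]⟩
  simp only [packings, mem_filter, mem_powerset, subset_iff, mem_univ, true_and] at hP hmax
  refine ⟨P, hP.2, hP.1, fun S hS hpS => ?_⟩
  have hSP : S ∉ P := fun hSP =>
    (hp S hpS).ne_empty (disjoint_self.mp ((disjoint_biUnion_right _ _ _).mp hS S hSP))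
  have hins := hmax (insert S P) ⟨by simpa [hpS] using hP.1,
    by rw [coe_insert]; exact hP.2.insert fun A hA _ => (disjoint_biUnion_right _ _ _).mp hS A hA⟩
  rw [card_insert_of_notMem hSP] at hins
  omega

theorem card_biUnion_id_of_card_eq {P : Finset (Finset α)} {m : ℕ}
    (hP : (P : Set (Finset α)).PairwiseDisjoint id) (hm : ∀ A ∈ P, #A = m) :
    #(P.biUnion id) = #P * m := by
  rw [card_biUnion hP]; exact sum_const_nat hm

theorem card_le_card_mul_of_subset_biUnion {P : Finset (Finset α)} {T : Finset α} {a : ℕ}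
    (hT : T ⊆ P.biUnion id) (ha : ∀ A ∈ P, #(T ∩ A) ≤ a) : #T ≤ #P * a := by
  have hTeq : T = P.biUnion (T ∩ ·) := by
    rw [← inter_biUnion]; exact (inter_eq_left.mpr hT).symm
  calc #T = #(P.biUnion (T ∩ ·)) := congrArg card hTeq
    _ ≤ ∑ A ∈ P, #(T ∩ A) := card_biUnion_le
    _ ≤ #P * a := by simpa using sum_le_card_nsmul P _ a ha

end Finset

namespace SimpleGraph.EdgeLabeling

variable {V K : Type*} {G : SimpleGraph V} {C : G.EdgeLabeling K}

theorem not_isIndepSet_labelGraph_iff {k : K} {s : Set V} :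
    ¬ (C.labelGraph k).IsIndepSet s ↔ ∃ x ∈ s, ∃ y ∈ s, ∃ h : G.Adj x y, C ⟨s(x, y), h⟩ = k := by
  simp only [isIndepSet_iff, Set.Pairwise, labelGraph_adj, not_forall, not_not]
  constructor
  · rintro ⟨x, hx, y, hy, -, hxy⟩
    exact ⟨x, hx, y, hy, hxy⟩
  · rintro ⟨x, hx, y, hy, hadj, hk⟩
    exact ⟨x, hx, y, hy, hadj.ne, hadj, hk⟩

theorem isIndepSet_of_forall_isIndepSet_labelGraph {s : Set V}
    (h : ∀ k, (C.labelGraph k).IsIndepSet s) : G.IsIndepSet s := by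
  intro x hx y hy hne hadj
  exact h (C ⟨s(x, y), hadj⟩) hx hy hne ((labelGraph_adj x y).mpr ⟨hadj, rfl⟩)

theorem exists_partition_labelGraph_fin_two [Fintype V] [DecidableEq V]
    (C : G.EdgeLabeling (Fin 2)) {m : ℕ} (hm : 0 < m) :
    ∃ B : Finset V,
      (∀ T : Finset V, Disjoint T B → m ≤ #T → ¬ (C.labelGraph 0).IsIndepSet T) ∧
      ∀ T ⊆ B, (C.labelGraph 1).IsIndepSet T → #T * m ≤ Fintype.card V * G.indepNum := by
  obtain ⟨P, hdisj, hP, hmax⟩ := exists_pairwiseDisjoint_forall_disjoint_biUnion_not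
    (fun A : Finset V => #A = m ∧ (C.labelGraph 0).IsIndepSet A)
    fun A hA => card_pos.mp (hA.1 ▸ hm)
  refine ⟨P.biUnion id, fun T hT hmT hindep => ?_, fun T hT hindep => ?_⟩
  · obtain ⟨S, hST, hS⟩ := exists_subset_card_eq hmT
    exact hmax S (disjoint_of_subset_left hST hT) ⟨hS, hindep.mono (coe_subset.mpr hST)⟩
  · have hTA (A) (hA : A ∈ P) : #(T ∩ A) ≤ G.indepNum := by
      refine IsIndepSet.card_le_indepNum (isIndepSet_of_forall_isIndepSet_labelGraph (C := C) ?_)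
      rw [Fin.forall_fin_two, coe_inter]
      exact ⟨(hP A hA).2.mono Set.inter_subset_right, hindep.mono Set.inter_subset_left⟩
    calc #T * m ≤ #P * G.indepNum * m :=
          Nat.mul_le_mul_right _ (card_le_card_mul_of_subset_biUnion hT hTA)
      _ = #(P.biUnion id) * G.indepNum := by
          rw [card_biUnion_id_of_card_eq hdisj fun A hA => (hP A hA).1]; ring
      _ ≤ Fintype.card V * G.indepNum := Nat.mul_le_mul_right _ (card_le_univ _)

end SimpleGraph.EdgeLabeling

theorem partition_small_indep_general (δ : ℝ) (hδ0 : 0 < δ)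
    (n : ℕ) (G : SimpleGraph (Fin n))
    (hind : ∀ s : Finset (Fin n),
        (∀ x ∈ s, ∀ y ∈ s, x ≠ y → ¬ G.Adj x y) → (s.card : ℝ) ≤ δ * n)
    (φ : Sym2 (Fin n) → Fin 2) :
    ∃ U : Fin 2 → Set (Fin n), U 0 ∪ U 1 = Set.univ ∧ Disjoint (U 0) (U 1) ∧
      ∀ k : Fin 2, ∀ T : Finset (Fin n), ↑T ⊆ U k →
        Real.sqrt δ * n < (T.card : ℝ) →
        ∃ x ∈ T, ∃ y ∈ T, G.Adj x y ∧ φ (Sym2.mk x y) = k := by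
  let C : G.EdgeLabeling (Fin 2) := fun e => φ e
  have hα : (G.indepNum : ℝ) ≤ δ * n := by
    obtain ⟨s, hs⟩ := G.exists_isNIndepSet_indepNum
    exact hs.card_eq ▸ hind s fun x hx y hy => hs.isIndepSet hx hy
  set m := ⌊Real.sqrt δ * n⌋₊ + 1
  have hm : Real.sqrt δ * n < m := by exact_mod_cast Nat.lt_floor_add_one _
  obtain ⟨B, hB0, hB1⟩ := C.exists_partition_labelGraph_fin_two (Nat.succ_pos _)
  refine ⟨![(↑B)ᶜ, ↑B], by simp, by simp [disjoint_compl_left], fun k T hTU hT => ?_⟩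
  suffices ¬ (C.labelGraph k).IsIndepSet T by
    obtain ⟨x, hx, y, hy, hadj, hk⟩ :=
      SimpleGraph.EdgeLabeling.not_isIndepSet_labelGraph_iff.mp this
    exact ⟨x, hx, y, hy, hadj, hk⟩
  fin_cases k
  · refine hB0 T (by simpa [Set.subset_compl_iff_disjoint_right] using hTU) ?_
    exact (Nat.floor_lt (by positivity)).mpr hT
  · intro hindep
    have hTm := hB1 T (by simpa using hTU) hindep
    rw [Fintype.card_fin] at hTm
    have hsq : Real.sqrt δ * n * (Real.sqrt δ * n) = n * (δ * n) := by
      linear_combination (n : ℝ) ^ 2 * Real.sq_sqrt hδ0.le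
    have : (#T * m : ℝ) < #T * m := calc
      (#T * m : ℝ) ≤ n * G.indepNum := by exact_mod_cast hTm
      _ ≤ Real.sqrt δ * n * (Real.sqrt δ * n) := by rw [hsq]; gcongr
      _ ≤ Real.sqrt δ * n * m := by gcongr
      _ < #T * m := by gcongr
    exact this.false

/-- (Balogh–Liu–Sharifzadeh) If an n-vertex graph G has independence number at most δn
and its edges are 2-colored, then the vertices can be partitioned into U₁ ⊔ U₂ so that
for each color k, every subset of U_k of size exceeding √δ·n contains an edge of color k. -/
theorem partition_small_indep (δ : ℝ) (hδ0 : 0 < δ) (hδ1 : δ < 1)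
    (n : ℕ) (G : SimpleGraph (Fin n))
    (hind : ∀ s : Finset (Fin n),
        (∀ x ∈ s, ∀ y ∈ s, x ≠ y → ¬ G.Adj x y) → (s.card : ℝ) ≤ δ * n)
    (φ : Sym2 (Fin n) → Fin 2) :
    ∃ U : Fin 2 → Set (Fin n), U 0 ∪ U 1 = Set.univ ∧ Disjoint (U 0) (U 1) ∧
      ∀ k : Fin 2, ∀ T : Finset (Fin n), ↑T ⊆ U k →
        Real.sqrt δ * n < (T.card : ℝ) →
        ∃ x ∈ T, ∃ y ∈ T, G.Adj x y ∧ φ (Sym2.mk x y) = k :=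
  partition_small_indep_general δ hδ0 n G hind φ
end

section
/- Let k ≥ 1 be an integer, let 0 < η < 1, and let G be a simple graph on n vertices with at least (1 − 1/(k+1))·n²/2 − η·n² edges. Let A be a subset of the vertices of G with at most η·n² edges of G inside A, let m = n − |A|, and suppose the induced subgraph G − A on the complement of A has at most (1 − 1/k)·m²/2 + η·n² edges. Then |m − k·n/(k+1)| ≤ √(6η)·n, and G − A has at least (1 − 1/k)·m²/2 − 2η·n² edges. -/
lemma count_split_aux (n : ℕ) (G : SimpleGraph (Fin n)) (A : Finset (Fin n)) :
    G.edgeSet.ncard ≤ (G.induce (A : Set (Fin n))).edgeSet.ncard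
      + (G.induce ((A : Set (Fin n))ᶜ)).edgeSet.ncard + A.card * (n - A.card) := by
  have hsub : G.edgeSet ⊆
      (Sym2.map (Subtype.val) '' (G.induce (A : Set (Fin n))).edgeSet)
      ∪ (Sym2.map (Subtype.val) '' (G.induce ((A : Set (Fin n))ᶜ)).edgeSet)
      ∪ ((fun p : Fin n × Fin n => s(p.1, p.2)) '' ((A : Set (Fin n)) ×ˢ (A : Set (Fin n))ᶜ)) := by
    intro e
    induction e using Sym2.ind with
    | _ u v =>
      intro he
      rw [SimpleGraph.mem_edgeSet] at he
      by_cases hu : u ∈ A <;> by_cases hv : v ∈ A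
      · exact Or.inl (Or.inl ⟨s(⟨u, hu⟩, ⟨v, hv⟩), by simpa using he, rfl⟩)
      · exact Or.inr ⟨(u, v), ⟨hu, hv⟩, rfl⟩
      · exact Or.inr ⟨(v, u), ⟨hv, hu⟩, Sym2.eq_swap⟩
      · exact Or.inl (Or.inr ⟨s(⟨u, hu⟩, ⟨v, hv⟩), by simpa using he, rfl⟩)
  have h1 := Set.ncard_le_ncard hsub (by toFinite_tac)
  have h2 := Set.ncard_union_le
    ((Sym2.map (Subtype.val) '' (G.induce (A : Set (Fin n))).edgeSet)
      ∪ (Sym2.map (Subtype.val) '' (G.induce ((A : Set (Fin n))ᶜ)).edgeSet))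
    ((fun p : Fin n × Fin n => s(p.1, p.2)) '' ((A : Set (Fin n)) ×ˢ (A : Set (Fin n))ᶜ))
  have h3 := Set.ncard_union_le (Sym2.map (Subtype.val) '' (G.induce (A : Set (Fin n))).edgeSet)
    (Sym2.map (Subtype.val) '' (G.induce ((A : Set (Fin n))ᶜ)).edgeSet)
  have e1 : (Sym2.map (Subtype.val) '' (G.induce (A : Set (Fin n))).edgeSet).ncard
      = (G.induce (A : Set (Fin n))).edgeSet.ncard :=
    Set.ncard_image_of_injective _ (Sym2.map.injective Subtype.val_injective)
  have e2 : (Sym2.map (Subtype.val) '' (G.induce ((A : Set (Fin n))ᶜ)).edgeSet).ncard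
      = (G.induce ((A : Set (Fin n))ᶜ)).edgeSet.ncard :=
    Set.ncard_image_of_injective _ (Sym2.map.injective Subtype.val_injective)
  have e3 : ((fun p : Fin n × Fin n => s(p.1, p.2)) ''
      ((A : Set (Fin n)) ×ˢ (A : Set (Fin n))ᶜ)).ncard ≤ A.card * (n - A.card) := by
    refine le_trans (Set.ncard_image_le (by toFinite_tac)) ?_
    rw [← Finset.coe_compl, ← Finset.coe_product, Set.ncard_coe_finset, Finset.card_product,
      Finset.card_compl, Fintype.card_fin]
  omega

lemma equal_lemma_aux3 (K n m : ℝ) (hK1 : 1 ≤ K) :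
    ((n-m)*m*(2*K) + (K-1)*m^2) * (2*(K+1)) ≤ K*n^2 * (2*K) := by
  nlinarith [sq_nonneg ((K+1) * m - K * n)]

/-- Finitary version of Lemma `equal`: if e(G) ≥ (1 − 1/(k+1))n²/2 − ηn², the set A spans
at most ηn² edges, and e(G − A) ≤ (1 − 1/k)m²/2 + ηn² where m = n − |A|, then m is within
√(6η)·n of kn/(k+1) and e(G − A) ≥ (1 − 1/k)m²/2 − 2ηn². -/
theorem equal_lemma (k : ℕ) (hk : 1 ≤ k) (η : ℝ) (hη0 : 0 < η) (hη1 : η < 1)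
    (n : ℕ) (G : SimpleGraph (Fin n)) (A : Finset (Fin n)) (m : ℕ)
    (hm : m = n - A.card)
    (hG : (1 - 1 / ((k : ℝ) + 1)) * n ^ 2 / 2 - η * n ^ 2 ≤ (G.edgeSet.ncard : ℝ))
    (hA : (((G.induce (A : Set (Fin n))).edgeSet.ncard : ℝ)) ≤ η * n ^ 2)
    (hGA : (((G.induce ((A : Set (Fin n))ᶜ)).edgeSet.ncard : ℝ)) ≤
        (1 - 1 / (k : ℝ)) * m ^ 2 / 2 + η * n ^ 2) :
    |(m : ℝ) - k * n / (k + 1)| ≤ Real.sqrt (6 * η) * n ∧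
      (1 - 1 / (k : ℝ)) * m ^ 2 / 2 - 2 * η * n ^ 2 ≤
        (((G.induce ((A : Set (Fin n))ᶜ)).edgeSet.ncard : ℝ)) := by
  have hcount := count_split_aux n G A
  rw [← hm] at hcount
  have han : A.card ≤ n := le_trans (Finset.card_le_univ A) (by simp)
  set K : ℝ := (k : ℝ) with hKdef
  have hK1 : (1:ℝ) ≤ K := by rw [hKdef]; exact_mod_cast hk
  have hK0 : (0:ℝ) < K := lt_of_lt_of_le one_pos hK1
  have hK0' : (0:ℝ) < K + 1 := by linarith
  have hmn : (m : ℝ) = (n : ℝ) - A.card := by rw [hm, Nat.cast_sub han]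
  set eA : ℝ := ((G.induce (A : Set (Fin n))).edgeSet.ncard : ℝ) with heAdef
  set eC : ℝ := ((G.induce ((A : Set (Fin n))ᶜ)).edgeSet.ncard : ℝ) with heCdef
  have hcR : (G.edgeSet.ncard : ℝ) ≤ eA + eC + (A.card : ℝ) * m := by
    rw [heAdef, heCdef]; exact_mod_cast hcount
  have heq : (A.card : ℝ) * m = ((n:ℝ) - m) * m := by rw [hmn]; ring
  have hcountR : (G.edgeSet.ncard : ℝ) ≤ eA + eC + ((n:ℝ) - m) * m := by
    rw [← heq]; exact hcR
  clear_value K eA eC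
  have h2K : (2*K) ≠ 0 := by positivity
  have e1 : (1 - 1/(K+1)) * (n:ℝ)^2 / 2 = K * (n:ℝ)^2 / (2*(K+1)) := by
    rw [div_eq_div_iff two_ne_zero (by positivity)]
    linear_combination (-2*(n:ℝ)^2) * mul_inv_cancel₀ hK0'.ne'
  have e2 : (1 - 1/K) * (m:ℝ)^2 / 2 = (K-1) * (m:ℝ)^2 / (2*K) := by
    rw [div_eq_div_iff two_ne_zero h2K]
    linear_combination (-2*(m:ℝ)^2) * mul_inv_cancel₀ hK0.ne'
  rw [e1] at hG
  rw [e2] at hGA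
  have combined : K * (n:ℝ)^2 / (2*(K+1)) ≤
      ((K-1) * (m:ℝ)^2 + 2*K*(((n:ℝ)-m)*m + 3*η*n^2)) / (2*K) := by
    have hq : ((K-1) * (m:ℝ)^2 + 2*K*(((n:ℝ)-m)*m + 3*η*(n:ℝ)^2)) / (2*K)
        = (K-1) * (m:ℝ)^2 / (2*K) + ((n:ℝ)-m)*m + 3*η*(n:ℝ)^2 := by
      rw [div_eq_iff h2K]
      linear_combination (-((K-1)*(m:ℝ)^2)) * mul_inv_cancel₀ h2K
    rw [hq]; linarith
  rw [div_le_div_iff₀ (by positivity) (by positivity)] at combined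
  have ht : ((K+1) * (m:ℝ) - K * n)^2 ≤ 6 * η * (n:ℝ)^2 * K * (K+1) := by
    ring_nf at combined ⊢
    linarith
  constructor
  · have hrw : (m : ℝ) - K * n / (K+1) = ((K+1) * (m:ℝ) - K * n) / (K+1) := by
      field_simp
    have hsq : ((m : ℝ) - K * n / (K+1))^2 ≤ 6 * η * (n:ℝ)^2 := by
      rw [hrw, div_pow, div_le_iff₀ (by positivity)]
      nlinarith [ht, mul_nonneg (mul_nonneg hη0.le (sq_nonneg (n:ℝ))) hK0'.le]
    have hs : Real.sqrt (6*η*(n:ℝ)^2) = Real.sqrt (6*η) * n := by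
      rw [Real.sqrt_mul (by positivity), Real.sqrt_sq (by positivity)]
    rw [← hs, ← Real.sqrt_sq_eq_abs]
    exact Real.sqrt_le_sqrt hsq
  · rw [e2]
    have h3 : ((n:ℝ)-m)*m + (K-1)*(m:ℝ)^2/(2*K) ≤ K*(n:ℝ)^2/(2*(K+1)) := by
      have hq2 : ((n:ℝ)-m)*m + (K-1)*(m:ℝ)^2/(2*K)
          = (((n:ℝ)-m)*m*(2*K) + (K-1)*(m:ℝ)^2) / (2*K) := by
        rw [eq_div_iff h2K]
        linear_combination ((K-1)*(m:ℝ)^2) * mul_inv_cancel₀ h2K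
      rw [hq2, div_le_div_iff₀ (by positivity) (by positivity)]
      exact equal_lemma_aux3 K n m hK1
    linarith [hcountR, hG, hA, h3]
end

section
/- Let t, p, q, r, s be nonnegative integers with t ≥ 1 and 5p + 4q + 3r + 2s ≤ t. Let w be a symmetric real-valued function on pairs of distinct elements of {1, …, t} with 0 ≤ w(i, j) ≤ 1 for all pairs. Suppose {1, …, t} contains pairwise disjoint subsets S₁, …, S_p of size 5, T₁, …, T_q of size 4, R₁, …, R_r of size 3, and s pairwise disjoint pairs (all these sets being mutually disjoint), such that: each S_a carries a designated cycle of length 5 all of whose five edges have weight exactly 1/2; every pair within each T_b has weight exactly 1/2; every pair within each R_c has weight exactly 1/2; and each of the s designated pairs has weight exactly 1/2. Then for every u = (u₁, …, u_t) with u_i ≥ 0 and Σ u_i = 1, one has 2·Σ_{1 ≤ i < j ≤ t} w(i, j)·u_i·u_j ≤ 1 − 30/(30t − 75p − 72q − 45r − 20s). -/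
lemma engel2 (m n x y : ℝ) (hm : 0 ≤ m) (hn : 0 ≤ n) (hmx : m = 0 → x = 0)
    (hny : n = 0 → y = 0) : (x + y) ^ 2 / (m + n) ≤ x ^ 2 / m + y ^ 2 / n := by
  rcases eq_or_lt_of_le hm with h | hm'
  · rw [hmx h.symm, ← h]; simp
  rcases eq_or_lt_of_le hn with h | hn'
  · rw [hny h.symm, ← h]; simp
  rw [div_add_div _ _ (ne_of_gt hm') (ne_of_gt hn'),
    div_le_div_iff₀ (by positivity) (by positivity)]
  nlinarith [sq_nonneg (x * n - y * m), mul_pos hm' hn', sq_nonneg x, sq_nonneg y]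

lemma engelConst {α : Type*} (s : Finset α) (g : α → ℝ) (c : ℝ) (hc : 0 < c) :
    (∑ i ∈ s, g i) ^ 2 / (c * s.card) ≤ ∑ i ∈ s, (g i) ^ 2 / c := by
  rcases s.eq_empty_or_nonempty with h | h
  · simp [h]
  have hcard : (0:ℝ) < s.card := by exact_mod_cast Finset.card_pos.2 h
  rw [← Finset.sum_div]
  have h1 : (∑ i ∈ s, g i) ^ 2 ≤ s.card * ∑ i ∈ s, g i ^ 2 := sq_sum_le_card_mul_sum_sq
  rw [div_le_div_iff₀ (by positivity) hc]
  calc (∑ i ∈ s, g i) ^ 2 * c ≤ (s.card * ∑ i ∈ s, g i ^ 2) * c :=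
        mul_le_mul_of_nonneg_right h1 hc.le
    _ = (∑ i ∈ s, g i ^ 2) * (c * s.card) := by ring

lemma c5bound (x : Fin 5 → ℝ) :
    (∑ i, x i) ^ 2 / (5/2) ≤ ∑ i, x i ^ 2 + ∑ i, x i * x (i + 1) := by
  simp only [Fin.sum_univ_five]
  have h0 : (0:Fin 5) + 1 = 1 := by decide
  have h1 : (1:Fin 5) + 1 = 2 := by decide
  have h2 : (2:Fin 5) + 1 = 3 := by decide
  have h3 : (3:Fin 5) + 1 = 4 := by decide
  have h4 : (4:Fin 5) + 1 = 0 := by decide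
  rw [h0, h1, h2, h3, h4, div_le_iff₀ (by norm_num)]
  nlinarith [sq_nonneg (6*x 0 + x 1 - 4*x 2 - 4*x 3 + x 4),
    sq_nonneg (7*x 1 + 2*x 2 - 4*x 3 - 5*x 4),
    sq_nonneg (4*x 2 - x 3 - 3*x 4), sq_nonneg (x 3 - x 4)]

lemma k4bound (x : Fin 4 → ℝ) :
    (∑ i, x i) ^ 2 / (8/5) ≤ ∑ i, x i ^ 2 +
      ∑ i, ∑ j, (if i ≠ j then 1/2 * (x i * x j) else 0) := by
  simp (config := { decide := true }) only [Fin.sum_univ_four, ne_eq]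
  norm_num
  rw [div_le_iff₀ (by norm_num)]
  nlinarith [sq_nonneg (x 0 - x 1), sq_nonneg (x 0 - x 2), sq_nonneg (x 0 - x 3),
    sq_nonneg (x 1 - x 2), sq_nonneg (x 1 - x 3), sq_nonneg (x 2 - x 3)]

lemma k3bound (x : Fin 3 → ℝ) :
    (∑ i, x i) ^ 2 / (3/2) ≤ ∑ i, x i ^ 2 +
      ∑ i, ∑ j, (if i ≠ j then 1/2 * (x i * x j) else 0) := by
  simp (config := { decide := true }) only [Fin.sum_univ_three, ne_eq]
  norm_num
  rw [div_le_iff₀ (by norm_num)]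
  nlinarith [sq_nonneg (x 0 - x 1), sq_nonneg (x 0 - x 2), sq_nonneg (x 1 - x 2)]

lemma mbound (x y : ℝ) : (x + y) ^ 2 / (4/3) ≤ x ^ 2 + y ^ 2 + x * y := by
  rw [div_le_iff₀ (by norm_num)]; nlinarith [sq_nonneg (x - y)]

lemma offdiag_twice {n : ℕ} (v : Fin n → Fin n → ℝ) (hs : ∀ i j, v i j = v j i) :
    ∑ i, ∑ j, (if i ≠ j then v i j else 0) = 2 * ∑ i, ∑ j, (if i < j then v i j else 0) := by
  have h1 : ∀ i j : Fin n, (if i ≠ j then v i j else 0)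
      = (if i < j then v i j else 0) + (if j < i then v i j else 0) := by
    intro i j
    rcases lt_trichotomy i j with h | h | h
    · rw [if_pos h.ne, if_pos h, if_neg (asymm h), add_zero]
    · subst h; simp
    · rw [if_pos h.ne', if_neg (asymm h), if_pos h, zero_add]
  simp_rw [h1, Finset.sum_add_distrib]
  have h2 : ∑ i : Fin n, ∑ j : Fin n, (if j < i then v i j else 0)
      = ∑ i : Fin n, ∑ j : Fin n, (if i < j then v i j else 0) := by
    rw [Finset.sum_comm]
    exact Finset.sum_congr rfl fun i _ => Finset.sum_congr rfl fun j _ => by rw [hs j i]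
  rw [h2]; ring

section
variable {t p q r s : ℕ}

lemma aux_edge_sum (w : Fin t → Fin t → ℝ)
    (hsymm : ∀ i j, w i j = w j i)
    (hw : ∀ i j : Fin t, i ≠ j → 0 ≤ w i j ∧ w i j ≤ 1)
    (u : Fin t → ℝ) (hu : ∀ i, 0 ≤ u i)
    (f : (Fin p × Fin 5) ⊕ (Fin q × Fin 4) ⊕ (Fin r × Fin 3) ⊕ (Fin s × Fin 2) → Fin t)
    (hinj : Function.Injective f)
    (hC5 : ∀ a : Fin p, ∀ i : Fin 5,
        w (f (Sum.inl (a, i))) (f (Sum.inl (a, i + 1))) = 1 / 2)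
    (hK4 : ∀ b : Fin q, ∀ i j : Fin 4, i ≠ j →
        w (f (Sum.inr (Sum.inl (b, i)))) (f (Sum.inr (Sum.inl (b, j)))) = 1 / 2)
    (hK3 : ∀ c : Fin r, ∀ i j : Fin 3, i ≠ j →
        w (f (Sum.inr (Sum.inr (Sum.inl (c, i)))))
          (f (Sum.inr (Sum.inr (Sum.inl (c, j))))) = 1 / 2)
    (hM : ∀ e : Fin s,
        w (f (Sum.inr (Sum.inr (Sum.inr (e, 0)))))
          (f (Sum.inr (Sum.inr (Sum.inr (e, 1))))) = 1 / 2) :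
    (∑ a : Fin p, ∑ i : Fin 5,
        u (f (Sum.inl (a, i))) * u (f (Sum.inl (a, i + 1))))
    + (∑ b : Fin q, ∑ i : Fin 4, ∑ j : Fin 4, if i ≠ j then
        1/2 * (u (f (Sum.inr (Sum.inl (b, i)))) * u (f (Sum.inr (Sum.inl (b, j))))) else 0)
    + (∑ c : Fin r, ∑ i : Fin 3, ∑ j : Fin 3, if i ≠ j then
        1/2 * (u (f (Sum.inr (Sum.inr (Sum.inl (c, i))))) *
          u (f (Sum.inr (Sum.inr (Sum.inl (c, j)))))) else 0)
    + (∑ e : Fin s, u (f (Sum.inr (Sum.inr (Sum.inr (e, 0))))) *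
        u (f (Sum.inr (Sum.inr (Sum.inr (e, 1))))))
    ≤ ∑ i, ∑ j, if i ≠ j then (1 - w i j) * (u i * u j) else 0 := by
  classical
  set g : Fin t × Fin t → ℝ :=
    fun z => if z.1 ≠ z.2 then (1 - w z.1 z.2) * (u z.1 * u z.2) else 0 with hg
  have hgnn : ∀ z, 0 ≤ g z := by
    intro z
    rw [hg]
    dsimp only
    split
    · rename_i h
      exact mul_nonneg (by linarith [(hw z.1 z.2 h).2]) (mul_nonneg (hu z.1) (hu z.2))
    · exact le_refl 0
  set φ : ((Fin p × (Fin 5 × Bool)) ⊕ ((Fin q × (Fin 4 × Fin 4)) ⊕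
      ((Fin r × (Fin 3 × Fin 3)) ⊕ (Fin s × Bool)))) → Fin t × Fin t :=
    Sum.elim
      (fun z => cond z.2.2 (f (Sum.inl (z.1, z.2.1)), f (Sum.inl (z.1, z.2.1 + 1)))
        (f (Sum.inl (z.1, z.2.1 + 1)), f (Sum.inl (z.1, z.2.1))))
      (Sum.elim
        (fun z => (f (Sum.inr (Sum.inl (z.1, z.2.1))), f (Sum.inr (Sum.inl (z.1, z.2.2)))))
        (Sum.elim
          (fun z => (f (Sum.inr (Sum.inr (Sum.inl (z.1, z.2.1)))),
            f (Sum.inr (Sum.inr (Sum.inl (z.1, z.2.2))))))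
          (fun z => cond z.2 (f (Sum.inr (Sum.inr (Sum.inr (z.1, 0)))),
              f (Sum.inr (Sum.inr (Sum.inr (z.1, 1)))))
            (f (Sum.inr (Sum.inr (Sum.inr (z.1, 1)))),
              f (Sum.inr (Sum.inr (Sum.inr (z.1, 0)))))))) with hφ
  have hφinj : Function.Injective φ := by
    intro z1 z2 h
    rcases z1 with ⟨a,i,b⟩|⟨⟨b1,i,j⟩|⟨⟨c1,i,j⟩|⟨e,b⟩⟩⟩ <;>
      rcases z2 with ⟨a',i',b'⟩|⟨⟨b1',i',j'⟩|⟨⟨c1',i',j'⟩|⟨e',b''⟩⟩⟩ <;>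
      simp only [hφ, Sum.elim_inl, Sum.elim_inr] at h <;>
      clear_value φ g <;>
      clear hφ hg hgnn hw hsymm hC5 hK4 hK3 hM φ g w <;>
      (try cases b) <;> (try cases b') <;> (try cases b'') <;>
      simp_all [Prod.ext_iff, hinj.eq_iff] <;>
      omega
  have himg : ∑ z, g (φ z) ≤ ∑ z : Fin t × Fin t, g z := by
    rw [← Finset.sum_image (f := g) (g := φ) (fun x _ y _ hxy => hφinj hxy)]
    exact Finset.sum_le_sum_of_subset_of_nonneg (Finset.subset_univ _) (fun z _ _ => hgnn z)
  have hT : ∑ i, ∑ j, (if i ≠ j then (1 - w i j) * (u i * u j) else 0)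
      = ∑ z : Fin t × Fin t, g z := by
    rw [Fintype.sum_prod_type, hg]
  have hA : (∑ a : Fin p, ∑ i : Fin 5,
      u (f (Sum.inl (a, i))) * u (f (Sum.inl (a, i + 1))))
      = ∑ x : Fin p × (Fin 5 × Bool), g (φ (Sum.inl x)) := by
    rw [Fintype.sum_prod_type]
    refine Finset.sum_congr rfl (fun a _ => ?_)
    rw [Fintype.sum_prod_type]
    refine Finset.sum_congr rfl (fun i _ => ?_)
    rw [Fintype.sum_bool]
    have hne : f (Sum.inl (a, i)) ≠ f (Sum.inl (a, i + 1)) := by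
      intro hcon
      have := hinj hcon
      simp only [Sum.inl.injEq, Prod.mk.injEq] at this
      omega
    simp only [hφ, Sum.elim_inl, cond_true, cond_false, hg]
    rw [if_pos hne, if_pos (Ne.symm hne), hC5 a i, hsymm, hC5 a i]
    ring
  have hB : (∑ b : Fin q, ∑ i : Fin 4, ∑ j : Fin 4, if i ≠ j then
      1/2 * (u (f (Sum.inr (Sum.inl (b, i)))) * u (f (Sum.inr (Sum.inl (b, j))))) else 0)
      = ∑ x : Fin q × (Fin 4 × Fin 4), g (φ (Sum.inr (Sum.inl x))) := by
    rw [Fintype.sum_prod_type]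
    refine Finset.sum_congr rfl (fun b _ => ?_)
    rw [Fintype.sum_prod_type]
    refine Finset.sum_congr rfl (fun i _ => ?_)
    refine Finset.sum_congr rfl (fun j _ => ?_)
    simp only [hφ, Sum.elim_inl, Sum.elim_inr, hg]
    by_cases hij : i = j
    · subst hij
      rw [if_neg (by simp), if_neg (by simp)]
    · have hne : f (Sum.inr (Sum.inl (b, i))) ≠ f (Sum.inr (Sum.inl (b, j))) := by
        intro hcon
        have := hinj hcon
        simp only [Sum.inr.injEq, Sum.inl.injEq, Prod.mk.injEq] at this
        exact hij this.2
      rw [if_pos hij, if_pos hne, hK4 b i j hij]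
      ring
  have hC : (∑ c : Fin r, ∑ i : Fin 3, ∑ j : Fin 3, if i ≠ j then
      1/2 * (u (f (Sum.inr (Sum.inr (Sum.inl (c, i))))) *
        u (f (Sum.inr (Sum.inr (Sum.inl (c, j)))))) else 0)
      = ∑ x : Fin r × (Fin 3 × Fin 3), g (φ (Sum.inr (Sum.inr (Sum.inl x)))) := by
    rw [Fintype.sum_prod_type]
    refine Finset.sum_congr rfl (fun c _ => ?_)
    rw [Fintype.sum_prod_type]
    refine Finset.sum_congr rfl (fun i _ => ?_)
    refine Finset.sum_congr rfl (fun j _ => ?_)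
    simp only [hφ, Sum.elim_inl, Sum.elim_inr, hg]
    by_cases hij : i = j
    · subst hij
      rw [if_neg (by simp), if_neg (by simp)]
    · have hne : f (Sum.inr (Sum.inr (Sum.inl (c, i)))) ≠
          f (Sum.inr (Sum.inr (Sum.inl (c, j)))) := by
        intro hcon
        have := hinj hcon
        simp only [Sum.inr.injEq, Sum.inl.injEq, Prod.mk.injEq] at this
        exact hij this.2
      rw [if_pos hij, if_pos hne, hK3 c i j hij]
      ring
  have hD : (∑ e : Fin s, u (f (Sum.inr (Sum.inr (Sum.inr (e, 0))))) *
      u (f (Sum.inr (Sum.inr (Sum.inr (e, 1))))))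
      = ∑ x : Fin s × Bool, g (φ (Sum.inr (Sum.inr (Sum.inr x)))) := by
    rw [Fintype.sum_prod_type]
    refine Finset.sum_congr rfl (fun e _ => ?_)
    rw [Fintype.sum_bool]
    have hne : f (Sum.inr (Sum.inr (Sum.inr (e, 0)))) ≠
        f (Sum.inr (Sum.inr (Sum.inr (e, 1)))) := by
      intro hcon
      have := hinj hcon
      simp only [Sum.inr.injEq, Prod.mk.injEq] at this
      exact absurd this.2 (by decide)
    simp only [hφ, Sum.elim_inl, Sum.elim_inr, cond_true, cond_false, hg]
    rw [if_pos hne, if_pos (Ne.symm hne), hM e, hsymm, hM e]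
    ring
  have hsplit : ∑ z, g (φ z)
      = (∑ x : Fin p × (Fin 5 × Bool), g (φ (Sum.inl x)))
      + ((∑ x : Fin q × (Fin 4 × Fin 4), g (φ (Sum.inr (Sum.inl x))))
      + ((∑ x : Fin r × (Fin 3 × Fin 3), g (φ (Sum.inr (Sum.inr (Sum.inl x)))))
      + (∑ x : Fin s × Bool, g (φ (Sum.inr (Sum.inr (Sum.inr x))))))) := by
    rw [Fintype.sum_sum_type, Fintype.sum_sum_type, Fintype.sum_sum_type]
  rw [hT, hA, hB, hC, hD]
  calc _ = ∑ z, g (φ z) := by rw [hsplit]; ring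
    _ ≤ _ := himg

lemma engel5 (m0 m1 m2 m3 m4 x0 x1 x2 x3 x4 : ℝ)
    (h0 : 0 ≤ m0) (h1 : 0 ≤ m1) (h2 : 0 ≤ m2) (h3 : 0 ≤ m3) (h4 : 0 ≤ m4)
    (z0 : m0 = 0 → x0 = 0) (z1 : m1 = 0 → x1 = 0) (z2 : m2 = 0 → x2 = 0)
    (z3 : m3 = 0 → x3 = 0) (z4 : m4 = 0 → x4 = 0) :
    (x0 + x1 + x2 + x3 + x4) ^ 2 / (m0 + m1 + m2 + m3 + m4)
      ≤ x0 ^ 2 / m0 + x1 ^ 2 / m1 + x2 ^ 2 / m2 + x3 ^ 2 / m3 + x4 ^ 2 / m4 := by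
  have e1 := engel2 m0 m1 x0 x1 h0 h1 z0 z1
  have e2 := engel2 (m0 + m1) m2 (x0 + x1) x2 (by linarith) h2
    (fun h => by rw [z0 (by linarith), z1 (by linarith)]; ring) z2
  have e3 := engel2 (m0 + m1 + m2) m3 (x0 + x1 + x2) x3 (by linarith) h3
    (fun h => by rw [z0 (by linarith), z1 (by linarith), z2 (by linarith)]; ring) z3
  have e4 := engel2 (m0 + m1 + m2 + m3) m4 (x0 + x1 + x2 + x3) x4 (by linarith) h4
    (fun h => by
      rw [z0 (by linarith), z1 (by linarith), z2 (by linarith), z3 (by linarith)]; ring) z4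
  linarith


set_option maxHeartbeats 1000000 in
/-- Lemma 1: if a weighted complete graph on t vertices contains p disjoint half C₅'s,
q disjoint half K₄'s, r disjoint half K₃'s and s independent half edges, all mutually
vertex-disjoint, then twice its density is at most
1 − 30/(30t − 75p − 72q − 45r − 20s). -/
theorem half_structures_density_bound_36 (t p q r s : ℕ) (ht : 1 ≤ t)
    (hsize : 5 * p + 4 * q + 3 * r + 2 * s ≤ t)
    (w : Fin t → Fin t → ℝ)
    (hsymm : ∀ i j, w i j = w j i)
    (hw : ∀ i j : Fin t, i ≠ j → 0 ≤ w i j ∧ w i j ≤ 1)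
    (f : (Fin p × Fin 5) ⊕ (Fin q × Fin 4) ⊕ (Fin r × Fin 3) ⊕ (Fin s × Fin 2) → Fin t)
    (hinj : Function.Injective f)
    (hC5 : ∀ a : Fin p, ∀ i : Fin 5,
        w (f (Sum.inl (a, i))) (f (Sum.inl (a, i + 1))) = 1 / 2)
    (hK4 : ∀ b : Fin q, ∀ i j : Fin 4, i ≠ j →
        w (f (Sum.inr (Sum.inl (b, i)))) (f (Sum.inr (Sum.inl (b, j)))) = 1 / 2)
    (hK3 : ∀ c : Fin r, ∀ i j : Fin 3, i ≠ j →
        w (f (Sum.inr (Sum.inr (Sum.inl (c, i)))))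
          (f (Sum.inr (Sum.inr (Sum.inl (c, j))))) = 1 / 2)
    (hM : ∀ e : Fin s,
        w (f (Sum.inr (Sum.inr (Sum.inr (e, 0)))))
          (f (Sum.inr (Sum.inr (Sum.inr (e, 1))))) = 1 / 2) :
    ∀ u : Fin t → ℝ, (∀ i, 0 ≤ u i) → ∑ i, u i = 1 →
      2 * (∑ i, ∑ j, if i < j then w i j * u i * u j else 0) ≤
        1 - 30 / (30 * (t : ℝ) - 75 * p - 72 * q - 45 * r - 20 * s) := by
  intro u hu husum
  classical
  have husq : ∑ i, ∑ j, u i * u j = 1 := by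
    rw [← Finset.sum_mul_sum, husum, one_mul]
  have hdiag : ∑ i, ∑ j, (if i = j then u i * u j else 0) = ∑ i, u i ^ 2 :=
    Finset.sum_congr rfl fun i _ => by rw [Finset.sum_ite_eq]; simp [sq]
  have hoff : ∑ i, ∑ j, (if i ≠ j then u i * u j else 0) = 1 - ∑ i, u i ^ 2 := by
    have hterm : ∀ i j : Fin t, (if i ≠ j then u i * u j else 0)
        = u i * u j - (if i = j then u i * u j else 0) := by
      intro i j; by_cases h : i = j <;> simp [h]
    simp_rw [hterm, Finset.sum_sub_distrib]
    rw [husq, hdiag]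
  have hw2 : ∑ i, ∑ j, (if i ≠ j then (1 - w i j) * (u i * u j) else 0)
      = (1 - ∑ i, u i ^ 2) - ∑ i, ∑ j, (if i ≠ j then w i j * u i * u j else 0) := by
    have hterm : ∀ i j : Fin t, (if i ≠ j then (1 - w i j) * (u i * u j) else 0)
        = (if i ≠ j then u i * u j else 0) - (if i ≠ j then w i j * u i * u j else 0) := by
      intro i j
      by_cases h : i ≠ j
      · rw [if_pos h, if_pos h, if_pos h]; ring
      · rw [if_neg h, if_neg h, if_neg h]; ring
    simp_rw [hterm, Finset.sum_sub_distrib]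
    rw [hoff]
  have hWtwice : ∑ i, ∑ j, (if i ≠ j then w i j * u i * u j else 0)
      = 2 * ∑ i, ∑ j, (if i < j then w i j * u i * u j else 0) :=
    offdiag_twice _ (fun i j => by rw [hsymm i j]; ring)
  have hSE := aux_edge_sum w hsymm hw u hu f hinj hC5 hK4 hK3 hM
  set A : Finset (Fin t) := Finset.image f Finset.univ with hA
  have himgsum : ∀ v : Fin t → ℝ, ∑ i, v i = (∑ i ∈ Aᶜ, v i) + ∑ x, v (f x) := by
    intro v
    rw [← Finset.sum_image (f := v) (g := f) (fun x _ y _ hxy => hinj hxy), ← hA]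
    exact (Finset.sum_compl_add_sum A v).symm
  have hdom : ∀ v : Fin t → ℝ, ∑ x, v (f x)
      = (∑ a : Fin p, ∑ i : Fin 5, v (f (Sum.inl (a, i))))
      + (∑ b : Fin q, ∑ i : Fin 4, v (f (Sum.inr (Sum.inl (b, i)))))
      + (∑ c : Fin r, ∑ i : Fin 3, v (f (Sum.inr (Sum.inr (Sum.inl (c, i))))))
      + (∑ e : Fin s, (v (f (Sum.inr (Sum.inr (Sum.inr (e, 0)))))
          + v (f (Sum.inr (Sum.inr (Sum.inr (e, 1))))))) := by
    intro v
    rw [Fintype.sum_sum_type, Fintype.sum_sum_type, Fintype.sum_sum_type]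
    simp only [Fintype.sum_prod_type, Fin.sum_univ_two]
    ring
  have h0bound : (∑ i ∈ Aᶜ, u i) ^ 2 / ((Aᶜ.card : ℝ)) ≤ ∑ i ∈ Aᶜ, u i ^ 2 := by
    have h1 := engelConst Aᶜ u 1 one_pos
    simp only [one_mul, div_one] at h1
    exact h1
  have hPbound : (∑ a : Fin p, ∑ i, u (f (Sum.inl (a, i)))) ^ 2 / (5/2 * p)
      ≤ ∑ a : Fin p, ((∑ i, u (f (Sum.inl (a, i))) ^ 2)
        + ∑ i, u (f (Sum.inl (a, i))) * u (f (Sum.inl (a, i + 1)))) := by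
    have h1 := engelConst Finset.univ
      (fun a : Fin p => ∑ i, u (f (Sum.inl (a, i)))) (5/2) (by norm_num)
    simp only [Finset.card_univ, Fintype.card_fin] at h1
    exact h1.trans (Finset.sum_le_sum fun a _ => c5bound fun i => u (f (Sum.inl (a, i))))
  have hQbound : (∑ b : Fin q, ∑ i, u (f (Sum.inr (Sum.inl (b, i))))) ^ 2 / (8/5 * q)
      ≤ ∑ b : Fin q, ((∑ i, u (f (Sum.inr (Sum.inl (b, i)))) ^ 2)
        + ∑ i, ∑ j, if i ≠ j then
          1/2 * (u (f (Sum.inr (Sum.inl (b, i)))) * u (f (Sum.inr (Sum.inl (b, j))))) else 0) := by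
    have h1 := engelConst Finset.univ
      (fun b : Fin q => ∑ i, u (f (Sum.inr (Sum.inl (b, i))))) (8/5) (by norm_num)
    simp only [Finset.card_univ, Fintype.card_fin] at h1
    exact h1.trans (Finset.sum_le_sum fun b _ => k4bound fun i => u (f (Sum.inr (Sum.inl (b, i)))))
  have hRbound : (∑ c : Fin r, ∑ i, u (f (Sum.inr (Sum.inr (Sum.inl (c, i)))))) ^ 2 / (3/2 * r)
      ≤ ∑ c : Fin r, ((∑ i, u (f (Sum.inr (Sum.inr (Sum.inl (c, i))))) ^ 2)
        + ∑ i, ∑ j, if i ≠ j then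
          1/2 * (u (f (Sum.inr (Sum.inr (Sum.inl (c, i))))) *
            u (f (Sum.inr (Sum.inr (Sum.inl (c, j)))))) else 0) := by
    have h1 := engelConst Finset.univ
      (fun c : Fin r => ∑ i, u (f (Sum.inr (Sum.inr (Sum.inl (c, i)))))) (3/2) (by norm_num)
    simp only [Finset.card_univ, Fintype.card_fin] at h1
    exact h1.trans (Finset.sum_le_sum fun c _ =>
      k3bound fun i => u (f (Sum.inr (Sum.inr (Sum.inl (c, i))))))
  have hSbound : (∑ e : Fin s, (u (f (Sum.inr (Sum.inr (Sum.inr (e, 0)))))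
        + u (f (Sum.inr (Sum.inr (Sum.inr (e, 1))))))) ^ 2 / (4/3 * s)
      ≤ ∑ e : Fin s, ((u (f (Sum.inr (Sum.inr (Sum.inr (e, 0))))) ^ 2
        + u (f (Sum.inr (Sum.inr (Sum.inr (e, 1))))) ^ 2)
        + u (f (Sum.inr (Sum.inr (Sum.inr (e, 0))))) *
          u (f (Sum.inr (Sum.inr (Sum.inr (e, 1)))))) := by
    have h1 := engelConst Finset.univ
      (fun e : Fin s => u (f (Sum.inr (Sum.inr (Sum.inr (e, 0)))))
        + u (f (Sum.inr (Sum.inr (Sum.inr (e, 1)))))) (4/3) (by norm_num)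
    simp only [Finset.card_univ, Fintype.card_fin] at h1
    refine h1.trans (Finset.sum_le_sum fun e _ => ?_)
    have := mbound (u (f (Sum.inr (Sum.inr (Sum.inr (e, 0))))))
      (u (f (Sum.inr (Sum.inr (Sum.inr (e, 1))))))
    linarith
  have hle' : A.card ≤ t := by
    have := Finset.card_le_univ A
    simpa [Fintype.card_fin] using this
  have hAcard : (A.card : ℝ) = 5*p + 4*q + 3*r + 2*s := by
    rw [hA, Finset.card_image_of_injective _ hinj]
    simp [Fintype.card_sum, Fintype.card_prod, Fintype.card_fin]
    push_cast
    ring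
  have hm0 : ((Aᶜ.card : ℕ) : ℝ) = (t : ℝ) - (5*p + 4*q + 3*r + 2*s) := by
    rw [Finset.card_compl, Fintype.card_fin, Nat.cast_sub hle', hAcard]
  have h0z : ((Aᶜ.card : ℕ) : ℝ) = 0 → (∑ i ∈ Aᶜ, u i) = 0 := by
    intro h
    have h2 : (Aᶜ : Finset (Fin t)) = ∅ := Finset.card_eq_zero.1 (by exact_mod_cast h)
    rw [h2, Finset.sum_empty]
  have hPz : (5/2 * (p:ℝ)) = 0 → (∑ a : Fin p, ∑ i, u (f (Sum.inl (a, i)))) = 0 := by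
    intro h
    have hp : p = 0 := by
      have : (p:ℝ) = 0 := by linarith
      exact_mod_cast this
    subst hp; simp
  have hQz : (8/5 * (q:ℝ)) = 0 → (∑ b : Fin q, ∑ i, u (f (Sum.inr (Sum.inl (b, i))))) = 0 := by
    intro h
    have hq : q = 0 := by
      have : (q:ℝ) = 0 := by linarith
      exact_mod_cast this
    subst hq; simp
  have hRz : (3/2 * (r:ℝ)) = 0 →
      (∑ c : Fin r, ∑ i, u (f (Sum.inr (Sum.inr (Sum.inl (c, i)))))) = 0 := by
    intro h
    have hr : r = 0 := by
      have : (r:ℝ) = 0 := by linarith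
      exact_mod_cast this
    subst hr; simp
  have hSz : (4/3 * (s:ℝ)) = 0 → (∑ e : Fin s, (u (f (Sum.inr (Sum.inr (Sum.inr (e, 0)))))
      + u (f (Sum.inr (Sum.inr (Sum.inr (e, 1))))))) = 0 := by
    intro h
    have hs : s = 0 := by
      have : (s:ℝ) = 0 := by linarith
      exact_mod_cast this
    subst hs; simp
  have hchain := engel5 ((Aᶜ.card : ℕ) : ℝ) (5/2 * p) (8/5 * q) (3/2 * r) (4/3 * s)
    (∑ i ∈ Aᶜ, u i) (∑ a : Fin p, ∑ i, u (f (Sum.inl (a, i))))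
    (∑ b : Fin q, ∑ i, u (f (Sum.inr (Sum.inl (b, i)))))
    (∑ c : Fin r, ∑ i, u (f (Sum.inr (Sum.inr (Sum.inl (c, i))))))
    (∑ e : Fin s, (u (f (Sum.inr (Sum.inr (Sum.inr (e, 0)))))
      + u (f (Sum.inr (Sum.inr (Sum.inr (e, 1)))))))
    (Nat.cast_nonneg _) (by positivity) (by positivity) (by positivity) (by positivity)
    h0z hPz hQz hRz hSz
  have hxsum : (∑ i ∈ Aᶜ, u i) + (∑ a : Fin p, ∑ i, u (f (Sum.inl (a, i))))
      + (∑ b : Fin q, ∑ i, u (f (Sum.inr (Sum.inl (b, i)))))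
      + (∑ c : Fin r, ∑ i, u (f (Sum.inr (Sum.inr (Sum.inl (c, i))))))
      + (∑ e : Fin s, (u (f (Sum.inr (Sum.inr (Sum.inr (e, 0)))))
        + u (f (Sum.inr (Sum.inr (Sum.inr (e, 1))))))) = 1 := by
    have h1 := himgsum u
    have h2 := hdom u
    rw [husum] at h1
    linarith
  have hcast : (5*(p:ℝ) + 4*q + 3*r + 2*s) ≤ (t:ℝ) := by exact_mod_cast hsize
  have htR : (1:ℝ) ≤ t := by exact_mod_cast ht
  have hpn : (0:ℝ) ≤ p := Nat.cast_nonneg p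
  have hqn : (0:ℝ) ≤ q := Nat.cast_nonneg q
  have hrn : (0:ℝ) ≤ r := Nat.cast_nonneg r
  have hsn : (0:ℝ) ≤ s := Nat.cast_nonneg s
  have hden1 : (0:ℝ) < 30 * (t : ℝ) - 75 * p - 72 * q - 45 * r - 20 * s := by linarith
  have hden2 : (0:ℝ) < ((Aᶜ.card : ℕ) : ℝ) + 5/2 * p + 8/5 * q + 3/2 * r + 4/3 * s := by
    rw [hm0]; linarith
  have hdeneq : (30:ℝ) / (30 * (t : ℝ) - 75 * p - 72 * q - 45 * r - 20 * s)
      = 1 / (((Aᶜ.card : ℕ) : ℝ) + 5/2 * p + 8/5 * q + 3/2 * r + 4/3 * s) := by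
    rw [div_eq_div_iff hden1.ne' hden2.ne', hm0]; ring
  have hfinal : 30 / (30 * (t : ℝ) - 75 * p - 72 * q - 45 * r - 20 * s)
      ≤ (∑ i, u i ^ 2)
      + ((∑ a : Fin p, ∑ i : Fin 5,
          u (f (Sum.inl (a, i))) * u (f (Sum.inl (a, i + 1))))
      + (∑ b : Fin q, ∑ i : Fin 4, ∑ j : Fin 4, if i ≠ j then
          1/2 * (u (f (Sum.inr (Sum.inl (b, i)))) * u (f (Sum.inr (Sum.inl (b, j))))) else 0)
      + (∑ c : Fin r, ∑ i : Fin 3, ∑ j : Fin 3, if i ≠ j then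
          1/2 * (u (f (Sum.inr (Sum.inr (Sum.inl (c, i))))) *
            u (f (Sum.inr (Sum.inr (Sum.inl (c, j)))))) else 0)
      + (∑ e : Fin s, u (f (Sum.inr (Sum.inr (Sum.inr (e, 0))))) *
          u (f (Sum.inr (Sum.inr (Sum.inr (e, 1))))))) := by
    rw [hdeneq]
    calc 1 / (((Aᶜ.card : ℕ) : ℝ) + 5/2 * p + 8/5 * q + 3/2 * r + 4/3 * s)
        = ((∑ i ∈ Aᶜ, u i) + (∑ a : Fin p, ∑ i, u (f (Sum.inl (a, i))))
          + (∑ b : Fin q, ∑ i, u (f (Sum.inr (Sum.inl (b, i)))))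
          + (∑ c : Fin r, ∑ i, u (f (Sum.inr (Sum.inr (Sum.inl (c, i))))))
          + (∑ e : Fin s, (u (f (Sum.inr (Sum.inr (Sum.inr (e, 0)))))
            + u (f (Sum.inr (Sum.inr (Sum.inr (e, 1)))))))) ^ 2
          / (((Aᶜ.card : ℕ) : ℝ) + 5/2 * p + 8/5 * q + 3/2 * r + 4/3 * s) := by
          rw [hxsum]; norm_num
      _ ≤ _ := hchain.trans ?_
    have hsum5 := add_le_add (add_le_add (add_le_add (add_le_add h0bound hPbound)
      hQbound) hRbound) hSbound
    refine hsum5.trans (le_of_eq ?_)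
    rw [himgsum (fun i => u i ^ 2), hdom (fun i => u i ^ 2)]
    simp only [Finset.sum_add_distrib]
    ring
  linarith [hw2, hWtwice, hSE, hfinal]
end
end

section
/- Let ℓ, ℓ′ ≥ 1 and let A be a symmetric ℓ × ℓ real matrix and A′ a symmetric ℓ′ × ℓ′ real matrix, both with all diagonal entries 0 and all off-diagonal entries in [0, 1]. Let C be the symmetric (ℓ + ℓ′) × (ℓ + ℓ′) matrix whose top-left block is A, bottom-right block is A′, and whose two off-diagonal blocks consist entirely of 1's. Suppose every maximizer of x ↦ x A xᵀ over the standard simplex in ℝ^ℓ has all coordinates strictly positive, and every maximizer of y ↦ y A′ yᵀ over the standard simplex in ℝ^{ℓ′} has all coordinates strictly positive. Then every maximizer of u ↦ u C uᵀ over the standard simplex in ℝ^{ℓ+ℓ′} has all coordinates strictly positive. -/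
/-- Scaling a vector by `c` scales the quadratic form by `c ^ 2`. -/
lemma quad_scale {ι : Type*} [Fintype ι] (B : ι → ι → ℝ) (c : ℝ) (z : ι → ℝ) :
    ∑ i, ∑ j, B i j * (c * z i) * (c * z j) = c ^ 2 * ∑ i, ∑ j, B i j * z i * z j := by
  rw [Finset.mul_sum]
  refine Finset.sum_congr rfl fun i _ => ?_
  rw [Finset.mul_sum]
  exact Finset.sum_congr rfl fun j _ => by ring

/-- Dividing a vector by a nonzero `c` divides the quadratic form by `c ^ 2`. -/
lemma quad_div {ι : Type*} [Fintype ι] (B : ι → ι → ℝ) (c : ℝ) (hc : c ≠ 0) (x : ι → ℝ) :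
    c ^ 2 * ∑ i, ∑ j, B i j * (x i / c) * (x j / c) = ∑ i, ∑ j, B i j * x i * x j := by
  rw [Finset.mul_sum]
  refine Finset.sum_congr rfl fun i _ => ?_
  rw [Finset.mul_sum]
  refine Finset.sum_congr rfl fun j _ => ?_
  field_simp

/-- Expansion of the join quadratic form into blocks. -/
lemma quad_expand (l l' : ℕ) (C : (Fin l ⊕ Fin l') → (Fin l ⊕ Fin l') → ℝ)
    (A : Fin l → Fin l → ℝ) (A' : Fin l' → Fin l' → ℝ)
    (hC1 : ∀ a b, C (Sum.inl a) (Sum.inl b) = A a b)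
    (hC2 : ∀ a b, C (Sum.inr a) (Sum.inr b) = A' a b)
    (hC3 : ∀ a b, C (Sum.inl a) (Sum.inr b) = 1)
    (hC4 : ∀ a b, C (Sum.inr a) (Sum.inl b) = 1)
    (u : (Fin l ⊕ Fin l') → ℝ) :
    ∑ i, ∑ j, C i j * u i * u j
      = (∑ i, ∑ j, A i j * u (Sum.inl i) * u (Sum.inl j))
      + (∑ i, ∑ j, A' i j * u (Sum.inr i) * u (Sum.inr j))
      + 2 * (∑ i, u (Sum.inl i)) * (∑ j, u (Sum.inr j)) := by
  simp only [Fintype.sum_sum_type, hC1, hC2, hC3, hC4, one_mul,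
    ← Finset.mul_sum, Finset.sum_add_distrib, ← Finset.sum_mul]
  ring

/-- The quadratic form of a weight matrix at a simplex point is nonneg and `< 1`. -/
lemma quad_bounds {ι : Type*} [Fintype ι] [DecidableEq ι] (B : ι → ι → ℝ)
    (hdiag : ∀ i, B i i = 0) (hij : ∀ i j, i ≠ j → 0 ≤ B i j ∧ B i j ≤ 1)
    (y : ι → ℝ) (hy : ∀ i, 0 ≤ y i) (hsum : ∑ i, y i = 1) :
    0 ≤ ∑ i, ∑ j, B i j * y i * y j ∧ ∑ i, ∑ j, B i j * y i * y j < 1 := by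
  constructor
  · apply Finset.sum_nonneg
    intro i _
    apply Finset.sum_nonneg
    intro j _
    rcases eq_or_ne i j with rfl | hne
    · simp [hdiag]
    · exact mul_nonneg (mul_nonneg (hij i j hne).1 (hy i)) (hy j)
  · have key : ∀ i : ι, ∑ j, B i j * y i * y j ≤ (∑ j, y i * y j) - y i * y i := by
      intro i
      have h1 : ∀ j : ι, B i j * y i * y j ≤ y i * y j - (if j = i then y i * y i else 0) := by
        intro j
        rcases eq_or_ne j i with rfl | hne
        · simp [hdiag]
        · simp only [if_neg hne, sub_zero]
          have h2 : 0 ≤ (1 - B i j) * (y i * y j) :=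
            mul_nonneg (by linarith [(hij i j (Ne.symm hne)).2]) (mul_nonneg (hy i) (hy j))
          nlinarith [h2]
      calc ∑ j, B i j * y i * y j
          ≤ ∑ j, (y i * y j - if j = i then y i * y i else 0) :=
            Finset.sum_le_sum fun j _ => h1 j
        _ = (∑ j, y i * y j) - y i * y i := by
            rw [Finset.sum_sub_distrib,
              Finset.sum_ite_eq' Finset.univ i (fun _ => y i * y i)]
            simp
    have key2 : ∑ i, ((∑ j, y i * y j) - y i * y i) = 1 - ∑ i, y i * y i := by
      rw [Finset.sum_sub_distrib]
      congr 1
      rw [← Finset.sum_mul_sum]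
      simp [hsum]
    have hle : ∑ i, ∑ j, B i j * y i * y j ≤ 1 - ∑ i, y i * y i := by
      calc ∑ i, ∑ j, B i j * y i * y j
          ≤ ∑ i, ((∑ j, y i * y j) - y i * y i) := Finset.sum_le_sum fun i _ => key i
        _ = 1 - ∑ i, y i * y i := key2
    have hpos : 0 < ∑ i, y i * y i := by
      have hne : ∃ i, y i ≠ 0 := by
        by_contra h
        push_neg at h
        simp [h] at hsum
      obtain ⟨i, hi⟩ := hne
      have hyi : 0 < y i := (hy i).lt_of_ne (Ne.symm hi)
      exact lt_of_lt_of_le (mul_pos hyi hyi)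
        (Finset.single_le_sum (fun j _ => mul_self_nonneg (y j)) (Finset.mem_univ i))
    linarith

/-- Claim: the complete join of two dense weighted structures is dense. If every maximizer
of the quadratic form of A (resp. A′) over the standard simplex has all coordinates
positive, the same holds for the block matrix C with blocks A, A′ and all-ones off-blocks. -/
theorem join_of_dense_is_dense (l l' : ℕ) (hl : 1 ≤ l) (hl' : 1 ≤ l')
    (A : Fin l → Fin l → ℝ) (A' : Fin l' → Fin l' → ℝ)
    (hAsymm : ∀ i j, A i j = A j i) (hAdiag : ∀ i, A i i = 0)
    (hAij : ∀ i j, i ≠ j → 0 ≤ A i j ∧ A i j ≤ 1)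
    (hA'symm : ∀ i j, A' i j = A' j i) (hA'diag : ∀ i, A' i i = 0)
    (hA'ij : ∀ i j, i ≠ j → 0 ≤ A' i j ∧ A' i j ≤ 1)
    (C : (Fin l ⊕ Fin l') → (Fin l ⊕ Fin l') → ℝ)
    (hC1 : ∀ a b, C (Sum.inl a) (Sum.inl b) = A a b)
    (hC2 : ∀ a b, C (Sum.inr a) (Sum.inr b) = A' a b)
    (hC3 : ∀ a b, C (Sum.inl a) (Sum.inr b) = 1)
    (hC4 : ∀ a b, C (Sum.inr a) (Sum.inl b) = 1)
    (hAdense : ∀ x : Fin l → ℝ, (∀ i, 0 ≤ x i) → ∑ i, x i = 1 →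
        (∀ y : Fin l → ℝ, (∀ i, 0 ≤ y i) → ∑ i, y i = 1 →
          ∑ i, ∑ j, A i j * y i * y j ≤ ∑ i, ∑ j, A i j * x i * x j) →
        ∀ i, 0 < x i)
    (hA'dense : ∀ x : Fin l' → ℝ, (∀ i, 0 ≤ x i) → ∑ i, x i = 1 →
        (∀ y : Fin l' → ℝ, (∀ i, 0 ≤ y i) → ∑ i, y i = 1 →
          ∑ i, ∑ j, A' i j * y i * y j ≤ ∑ i, ∑ j, A' i j * x i * x j) →
        ∀ i, 0 < x i) :
    ∀ u : (Fin l ⊕ Fin l') → ℝ, (∀ i, 0 ≤ u i) → ∑ i, u i = 1 →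
      (∀ v : (Fin l ⊕ Fin l') → ℝ, (∀ i, 0 ≤ v i) → ∑ i, v i = 1 →
        ∑ i, ∑ j, C i j * v i * v j ≤ ∑ i, ∑ j, C i j * u i * u j) →
      ∀ i, 0 < u i := by
  intro u hu hsum hmax
  set s : ℝ := ∑ i, u (Sum.inl i) with hs_def
  set t : ℝ := ∑ j, u (Sum.inr j) with ht_def
  have hst : s + t = 1 := by rw [hs_def, ht_def, ← Fintype.sum_sum_type]; exact hsum
  have hs0 : 0 ≤ s := Finset.sum_nonneg fun i _ => hu _
  have ht0 : 0 ≤ t := Finset.sum_nonneg fun j _ => hu _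
  have hexp := quad_expand l l' C A A' hC1 hC2 hC3 hC4 u
  -- Step 1: s > 0
  have hspos : 0 < s := by
    rcases hs0.lt_or_eq with h | h
    · exact h
    exfalso
    have hx0 : ∀ i, u (Sum.inl i) = 0 := by
      intro i
      exact (Finset.sum_eq_zero_iff_of_nonneg (fun i _ => hu (Sum.inl i))).1 h.symm i
        (Finset.mem_univ i)
    have ht1 : t = 1 := by linarith
    set q : ℝ := ∑ i, ∑ j, A' i j * u (Sum.inr i) * u (Sum.inr j) with hq_def
    have hqb : 0 ≤ q ∧ q < 1 :=
      quad_bounds A' hA'diag hA'ij (fun j => u (Sum.inr j)) (fun j => hu _) ht1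
    have hQu : ∑ i, ∑ j, C i j * u i * u j = q := by
      rw [hexp]
      simp only [hx0, mul_zero, zero_mul, Finset.sum_const_zero, zero_add, add_zero]
    set s0 : ℝ := (1 - q) / 2 with hs0_def
    have hs0pos : 0 < s0 := by rw [hs0_def]; linarith [hqb.2]
    have hs0le : s0 ≤ 1 / 2 := by rw [hs0_def]; linarith [hqb.1]
    set i0 : Fin l := ⟨0, hl⟩ with hi0
    set v : (Fin l ⊕ Fin l') → ℝ :=
      Sum.elim (fun i => if i = i0 then s0 else 0) (fun j => (1 - s0) * u (Sum.inr j)) with hv_def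
    have hvnn : ∀ i, 0 ≤ v i := by
      rintro (i | j)
      · simp only [hv_def, Sum.elim_inl]
        split <;> [exact hs0pos.le; exact le_refl 0]
      · exact mul_nonneg (by linarith) (hu _)
    have hvsum : ∑ i, v i = 1 := by
      rw [Fintype.sum_sum_type]
      simp only [hv_def, Sum.elim_inl, Sum.elim_inr]
      rw [Finset.sum_ite_eq' Finset.univ i0 (fun _ => s0), ← Finset.mul_sum, ← ht_def, ht1]
      simp only [Finset.mem_univ, if_true, mul_one]
      ring
    have hA0 : (∑ i, ∑ j, A i j * (if i = i0 then s0 else 0) * (if j = i0 then s0 else 0))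
        = 0 := by
      simp [mul_ite, ite_mul, mul_zero, zero_mul, Finset.sum_ite_eq', hAdiag]
    have hQv : ∑ i, ∑ j, C i j * v i * v j = (1 - s0) ^ 2 * q + 2 * s0 * (1 - s0) := by
      rw [quad_expand l l' C A A' hC1 hC2 hC3 hC4 v]
      simp only [hv_def, Sum.elim_inl, Sum.elim_inr]
      rw [hA0, quad_scale A' (1 - s0) (fun j => u (Sum.inr j)),
        Finset.sum_ite_eq' Finset.univ i0 (fun _ => s0), ← Finset.mul_sum, ← ht_def, ht1]
      simp only [Finset.mem_univ, if_true, mul_one, zero_add, ← hq_def]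
      try ring
    have hcontra := hmax v hvnn hvsum
    rw [hQv, hQu] at hcontra
    rw [hs0_def] at hcontra
    nlinarith [hqb.1, hqb.2,
      mul_pos (mul_pos (sub_pos.2 hqb.2) (sub_pos.2 hqb.2))
        (by linarith [hqb.1] : (0:ℝ) < q + 2)]
  -- Step 2: t > 0 (symmetric)
  have htpos : 0 < t := by
    rcases ht0.lt_or_eq with h | h
    · exact h
    exfalso
    have hy0 : ∀ j, u (Sum.inr j) = 0 := by
      intro j
      exact (Finset.sum_eq_zero_iff_of_nonneg (fun j _ => hu (Sum.inr j))).1 h.symm j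
        (Finset.mem_univ j)
    have hs1 : s = 1 := by linarith
    set q : ℝ := ∑ i, ∑ j, A i j * u (Sum.inl i) * u (Sum.inl j) with hq_def
    have hqb : 0 ≤ q ∧ q < 1 :=
      quad_bounds A hAdiag hAij (fun i => u (Sum.inl i)) (fun i => hu _) hs1
    have hQu : ∑ i, ∑ j, C i j * u i * u j = q := by
      rw [hexp]
      simp only [hy0, mul_zero, zero_mul, Finset.sum_const_zero, zero_add, add_zero]
    set s0 : ℝ := (1 - q) / 2 with hs0_def
    have hs0pos : 0 < s0 := by rw [hs0_def]; linarith [hqb.2]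
    have hs0le : s0 ≤ 1 / 2 := by rw [hs0_def]; linarith [hqb.1]
    set j0 : Fin l' := ⟨0, hl'⟩ with hj0
    set v : (Fin l ⊕ Fin l') → ℝ :=
      Sum.elim (fun i => (1 - s0) * u (Sum.inl i)) (fun j => if j = j0 then s0 else 0) with hv_def
    have hvnn : ∀ i, 0 ≤ v i := by
      rintro (i | j)
      · exact mul_nonneg (by linarith) (hu _)
      · simp only [hv_def, Sum.elim_inr]
        split <;> [exact hs0pos.le; exact le_refl 0]
    have hvsum : ∑ i, v i = 1 := by
      rw [Fintype.sum_sum_type]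
      simp only [hv_def, Sum.elim_inl, Sum.elim_inr]
      rw [Finset.sum_ite_eq' Finset.univ j0 (fun _ => s0), ← Finset.mul_sum, ← hs_def, hs1]
      simp only [Finset.mem_univ, if_true, mul_one]
      ring
    have hA0 : (∑ i, ∑ j, A' i j * (if i = j0 then s0 else 0) * (if j = j0 then s0 else 0))
        = 0 := by
      simp [mul_ite, ite_mul, mul_zero, zero_mul, Finset.sum_ite_eq', hA'diag]
    have hQv : ∑ i, ∑ j, C i j * v i * v j = (1 - s0) ^ 2 * q + 2 * s0 * (1 - s0) := by
      rw [quad_expand l l' C A A' hC1 hC2 hC3 hC4 v]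
      simp only [hv_def, Sum.elim_inl, Sum.elim_inr]
      rw [hA0, quad_scale A (1 - s0) (fun i => u (Sum.inl i)),
        Finset.sum_ite_eq' Finset.univ j0 (fun _ => s0), ← Finset.mul_sum, ← hs_def, hs1]
      simp only [Finset.mem_univ, if_true, mul_one, add_zero, ← hq_def]
      try ring
    have hcontra := hmax v hvnn hvsum
    rw [hQv, hQu] at hcontra
    rw [hs0_def] at hcontra
    nlinarith [hqb.1, hqb.2,
      mul_pos (mul_pos (sub_pos.2 hqb.2) (sub_pos.2 hqb.2))
        (by linarith [hqb.1] : (0:ℝ) < q + 2)]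
  -- Step 3: left positivity
  have hleft : ∀ i, 0 < u (Sum.inl i) := by
    have hx' : ∀ i, 0 < u (Sum.inl i) / s := by
      apply hAdense
      · intro i; exact div_nonneg (hu _) hs0
      · rw [← Finset.sum_div, ← hs_def, div_self hspos.ne']
      · intro z hz hzsum
        set w : (Fin l ⊕ Fin l') → ℝ :=
          Sum.elim (fun i => s * z i) (fun j => u (Sum.inr j)) with hw_def
        have hwnn : ∀ i, 0 ≤ w i := by
          rintro (i | j)
          · exact mul_nonneg hs0 (hz i)
          · exact hu _
        have hwsum : ∑ i, w i = 1 := by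
          rw [Fintype.sum_sum_type]
          simp only [hw_def, Sum.elim_inl, Sum.elim_inr]
          rw [← Finset.mul_sum, hzsum, ← ht_def]
          linarith
        have hkey := hmax w hwnn hwsum
        rw [quad_expand l l' C A A' hC1 hC2 hC3 hC4 w, hexp] at hkey
        simp only [hw_def, Sum.elim_inl, Sum.elim_inr] at hkey
        rw [quad_scale A s z, ← Finset.mul_sum, hzsum, mul_one,
          ← quad_div A s hspos.ne' (fun i => u (Sum.inl i)),
          ← hs_def, ← ht_def] at hkey
        have hs2 : 0 < s ^ 2 := by positivity
        have h2 : s ^ 2 * ∑ i, ∑ j, A i j * z i * z j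
            ≤ s ^ 2 * ∑ i, ∑ j, A i j * (u (Sum.inl i) / s) * (u (Sum.inl j) / s) := by
          linarith
        exact le_of_mul_le_mul_left h2 hs2
    intro i
    have h := mul_pos (hx' i) hspos
    rwa [div_mul_cancel₀ _ hspos.ne'] at h
  -- Step 4: right positivity
  have hright : ∀ j, 0 < u (Sum.inr j) := by
    have hy' : ∀ j, 0 < u (Sum.inr j) / t := by
      apply hA'dense
      · intro j; exact div_nonneg (hu _) ht0
      · rw [← Finset.sum_div, ← ht_def, div_self htpos.ne']
      · intro z hz hzsum
        set w : (Fin l ⊕ Fin l') → ℝ :=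
          Sum.elim (fun i => u (Sum.inl i)) (fun j => t * z j) with hw_def
        have hwnn : ∀ i, 0 ≤ w i := by
          rintro (i | j)
          · exact hu _
          · exact mul_nonneg ht0 (hz j)
        have hwsum : ∑ i, w i = 1 := by
          rw [Fintype.sum_sum_type]
          simp only [hw_def, Sum.elim_inl, Sum.elim_inr]
          rw [← Finset.mul_sum, hzsum, ← hs_def]
          linarith
        have hkey := hmax w hwnn hwsum
        rw [quad_expand l l' C A A' hC1 hC2 hC3 hC4 w, hexp] at hkey
        simp only [hw_def, Sum.elim_inl, Sum.elim_inr] at hkey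
        rw [quad_scale A' t z, ← Finset.mul_sum, hzsum, mul_one,
          ← quad_div A' t htpos.ne' (fun j => u (Sum.inr j)),
          ← hs_def, ← ht_def] at hkey
        have ht2 : 0 < t ^ 2 := by positivity
        have h2 : t ^ 2 * ∑ i, ∑ j, A' i j * z i * z j
            ≤ t ^ 2 * ∑ i, ∑ j, A' i j * (u (Sum.inr i) / t) * (u (Sum.inr j) / t) := by
          linarith
        exact le_of_mul_le_mul_left h2 ht2
    intro j
    have h := mul_pos (hy' j) htpos
    rwa [div_mul_cancel₀ _ htpos.ne'] at h
  rintro (i | j)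
  · exact hleft i
  · exact hright j
end

section
/- Let t and ℓ₁, …, ℓ₇ be nonnegative integers with t ≥ 1 and 8ℓ₁ + 5ℓ₂ + 5ℓ₃ + 4ℓ₄ + 4ℓ₅ + 3ℓ₆ + 2ℓ₇ ≤ t. Let w be a symmetric real-valued function on pairs of distinct elements of {1, …, t} with 0 ≤ w(i, j) ≤ 1 for all pairs. Suppose {1, …, t} contains mutually vertex-disjoint subsets as follows: ℓ₁ sets of size 8, each carrying a designated cycle of length 8 all of whose eight edges have weight exactly 1/2; ℓ₂ sets of size 5 with every pair inside of weight exactly 1/2; ℓ₃ sets of size 5, each carrying a designated cycle of length 5 whose five edges have weight exactly 1/2; ℓ₄ sets of size 4 with every pair inside of weight exactly 1/2; ℓ₅ sets of size 4, each carrying a designated cycle of length 4 whose four edges have weight exactly 1/2; ℓ₆ sets of size 3 with every pair inside of weight exactly 1/2; and ℓ₇ pairwise disjoint pairs each of weight exactly 1/2. Then for every u = (u₁, …, u_t) with u_i ≥ 0 and Σ u_i = 1, one has 2·Σ_{1 ≤ i < j ≤ t} w(i, j)·u_i·u_j ≤ 1 − 30/(30t − 120ℓ₁ − 100ℓ₂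 − 75ℓ₃ − 72ℓ₄ − 60ℓ₅ − 45ℓ₆ − 20ℓ₇). -/
/-!
Since `∑ u = 1`, one has `1 - 2 ∑_{i<j} w_ij u_i u_j = ∑_{i,j} s_ij u_i u_j` with `s_ii = 1` and
`s_ij = 1 - w_ij ≥ 0` (`slackForm`). Dropping the terms between different structures, this is at
least the sum of the forms restricted to the structures and to the remaining vertices. On a half
copy of a graph `H` the restricted form is at least `∑ v_a² + ∑_{ab ∈ E(H)} v_a v_b` (`halfForm`),
which by Cauchy–Schwarz is at least `(∑ v_a)² / c` with `c = n/2` for `C_n` and `c = 2n/(n+1)` for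
`K_n`; the remaining vertices contribute with `c = 1` each. Engel's form of Cauchy–Schwarz bounds
the total below by `1 / ∑ c`, and `30 ∑ c = 30t − 120ℓ₁ − 100ℓ₂ − 75ℓ₃ − 72ℓ₄ − 60ℓ₅ − 45ℓ₆ − 20ℓ₇`.
-/

open Finset SimpleGraph Function

lemma two_mul_sum_ite_lt_eq {V : Type*} [Fintype V] [LinearOrder V] {g : V → V → ℝ}
    (hg : ∀ i j, g i j = g j i) :
    2 * (∑ i, ∑ j, if i < j then g i j else 0) = ∑ i, ∑ j, (if i ≠ j then g i j else 0) := by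
  have hsplit : ∀ i j, (if i ≠ j then g i j else 0) =
      (if i < j then g i j else 0) + (if j < i then g j i else 0) := by
    intro i j
    rcases lt_trichotomy i j with h | rfl | h
    · simp [h.ne, h, h.not_gt]
    · simp
    · simp [h.ne', h, h.not_gt, hg i j]
  simp_rw [hsplit, sum_add_distrib]
  rw [sum_comm (f := fun i j => if j < i then g j i else 0)]
  ring

section Slack

variable {V : Type*} [DecidableEq V]

def slack (w : V → V → ℝ) (i j : V) : ℝ := if i = j then 1 else 1 - w i j

def slackForm (w : V → V → ℝ) (S : Finset V) (u : V → ℝ) : ℝ :=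
  ∑ i ∈ S, ∑ j ∈ S, slack w i j * u i * u j

variable {w : V → V → ℝ} {u : V → ℝ}

lemma slackForm_univ_add_sum_ite_ne [Fintype V] :
    slackForm w univ u + ∑ i, ∑ j, (if i ≠ j then w i j * u i * u j else 0) = (∑ i, u i) ^ 2 := by
  have hpoint : ∀ i j, slack w i j * u i * u j + (if i ≠ j then w i j * u i * u j else 0) =
      u i * u j := by
    intro i j
    by_cases h : i = j
    · simp [slack, h]
    · simp [slack, h]; ring
  rw [slackForm, ← sum_add_distrib, sq, sum_mul_sum]
  simp_rw [← sum_add_distrib, hpoint]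

variable (hw : ∀ i j, i ≠ j → w i j ≤ 1) (hu : ∀ i, 0 ≤ u i)
include hw hu

lemma slack_mul_nonneg (i j : V) : 0 ≤ slack w i j * u i * u j := by
  have : 0 ≤ slack w i j := by
    unfold slack
    split_ifs with h
    · exact zero_le_one
    · linarith [hw i j h]
  exact mul_nonneg (mul_nonneg this (hu i)) (hu j)

lemma slackForm_nonneg (S : Finset V) : 0 ≤ slackForm w S u :=
  sum_nonneg fun i _ => sum_nonneg fun j _ => slack_mul_nonneg hw hu i j

lemma sq_sum_le_card_mul_slackForm (S : Finset V) :
    (∑ i ∈ S, u i) ^ 2 ≤ #S * slackForm w S u := by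
  have hdiag : ∑ i ∈ S, u i ^ 2 ≤ slackForm w S u := by
    refine sum_le_sum fun i hi => ?_
    calc u i ^ 2 = slack w i i * u i * u i := by simp [slack, sq]
      _ ≤ ∑ j ∈ S, slack w i j * u i * u j :=
        single_le_sum (fun j _ => slack_mul_nonneg hw hu i j) hi
  exact sq_sum_le_card_mul_sum_sq.trans (by gcongr)

lemma slackForm_add_le_union {S T : Finset V} (hST : Disjoint S T) :
    slackForm w S u + slackForm w T u ≤ slackForm w (S ∪ T) u := by
  rw [slackForm, slackForm, slackForm, sum_union hST]
  exact add_le_add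
    (sum_le_sum fun i _ => sum_le_sum_of_subset_of_nonneg subset_union_left
      fun j _ _ => slack_mul_nonneg hw hu i j)
    (sum_le_sum fun i _ => sum_le_sum_of_subset_of_nonneg subset_union_right
      fun j _ _ => slack_mul_nonneg hw hu i j)

lemma sum_slackForm_le_biUnion {ι : Type*} {s : Finset ι} {B : ι → Finset V}
    (hB : (s : Set ι).PairwiseDisjoint B) :
    ∑ k ∈ s, slackForm w (B k) u ≤ slackForm w (s.biUnion B) u := by
  rw [slackForm, sum_biUnion hB]
  exact sum_le_sum fun k hk => sum_le_sum fun i _ =>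
    sum_le_sum_of_subset_of_nonneg (subset_biUnion_of_mem B hk)
      fun j _ _ => slack_mul_nonneg hw hu i j

lemma sq_sum_union_le {S T : Finset V} (hST : Disjoint S T) {c d : ℝ} (hc : 0 ≤ c) (hd : 0 ≤ d)
    (hS : (∑ i ∈ S, u i) ^ 2 ≤ c * slackForm w S u)
    (hT : (∑ i ∈ T, u i) ^ 2 ≤ d * slackForm w T u) :
    (∑ i ∈ S ∪ T, u i) ^ 2 ≤ (c + d) * slackForm w (S ∪ T) u := by
  have hengel := sum_sq_le_sum_mul_sum_of_sq_le_mul univ (r := ![∑ i ∈ S, u i, ∑ i ∈ T, u i])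
    (f := ![c, d]) (g := ![slackForm w S u, slackForm w T u])
    (by simp [Fin.forall_fin_two, hc, hd])
    (by simp [Fin.forall_fin_two, slackForm_nonneg hw hu]) (by simp [Fin.forall_fin_two, hS, hT])
  simp only [Fin.sum_univ_two, Matrix.cons_val_zero, Matrix.cons_val_one] at hengel
  rw [sum_union hST]
  exact hengel.trans (by gcongr; exact slackForm_add_le_union hw hu hST)

lemma sq_sum_biUnion_le {ι : Type*} {s : Finset ι} {B : ι → Finset V}
    (hB : (s : Set ι).PairwiseDisjoint B) {c : ι → ℝ} (hc : ∀ k ∈ s, 0 ≤ c k)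
    (h : ∀ k ∈ s, (∑ i ∈ B k, u i) ^ 2 ≤ c k * slackForm w (B k) u) :
    (∑ i ∈ s.biUnion B, u i) ^ 2 ≤ (∑ k ∈ s, c k) * slackForm w (s.biUnion B) u := by
  rw [sum_biUnion hB]
  calc _ ≤ (∑ k ∈ s, c k) * ∑ k ∈ s, slackForm w (B k) u :=
        sum_sq_le_sum_mul_sum_of_sq_le_mul s hc (fun k _ => slackForm_nonneg hw hu _) h
    _ ≤ _ := by gcongr; exacts [sum_nonneg hc, sum_slackForm_le_biUnion hw hu hB]

end Slack

lemma two_mul_sum_ite_lt_eq_one_sub_slackForm {V : Type*} [Fintype V] [LinearOrder V]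
    {w : V → V → ℝ} {u : V → ℝ}
    (hsymm : ∀ i j, w i j = w j i) (hsum : ∑ i, u i = 1) :
    2 * (∑ i, ∑ j, if i < j then w i j * u i * u j else 0) = 1 - slackForm w univ u := by
  rw [two_mul_sum_ite_lt_eq fun i j => by rw [hsymm]; ring, ← one_pow 2, ← hsum,
    ← slackForm_univ_add_sum_ite_ne (w := w)]
  ring

section HalfForm

variable {α : Type*} [Fintype α]

noncomputable def halfForm (H : SimpleGraph α) [DecidableRel H.Adj] (v : α → ℝ) : ℝ :=
  ∑ a, v a ^ 2 + 1 / 2 * ∑ a, ∑ b ∈ H.neighborFinset a, v a * v b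

lemma halfForm_top [DecidableEq α] (v : α → ℝ) :
    halfForm ⊤ v = ((∑ a, v a) ^ 2 + ∑ a, v a ^ 2) / 2 := by
  have hrow : ∀ a, ∑ b ∈ (⊤ : SimpleGraph α).neighborFinset a, v a * v b =
      v a * ∑ b, v b - v a ^ 2 := by
    intro a
    rw [neighborFinset_top, ← mul_sum, Fintype.sum_eq_add_sum_compl a v]
    ring
  simp only [halfForm, hrow, sum_sub_distrib, ← sum_mul]
  ring

lemma sq_sum_le_halfForm_top [DecidableEq α] (v : α → ℝ) :
    (∑ a, v a) ^ 2 ≤ 2 * Fintype.card α / (Fintype.card α + 1) * halfForm ⊤ v := by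
  have hcs : (∑ a, v a) ^ 2 ≤ Fintype.card α * ∑ a, v a ^ 2 := by
    simpa using sq_sum_le_card_mul_sum_sq (s := univ) (f := v)
  rw [halfForm_top, div_mul_eq_mul_div, le_div_iff₀ (by positivity)]
  nlinarith

lemma halfForm_cycleGraph (n : ℕ) (v : Fin (n + 3) → ℝ) :
    halfForm (cycleGraph (n + 3)) v = ∑ a, v a ^ 2 + ∑ a, v a * v (a + 1) := by
  have hrow : ∀ a, ∑ b ∈ (cycleGraph (n + 3)).neighborFinset a, v a * v b =
      v a * v (a - 1) + v a * v (a + 1) := by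
    intro a
    have hne : a - 1 ≠ a + 1 := by
      simp only [ne_eq, sub_eq_iff_eq_add, add_assoc a, left_eq_add]
      exact ne_of_beq_false rfl
    rw [cycleGraph_neighborFinset, sum_pair hne]
  have hshift : ∑ a, v a * v (a - 1) = ∑ a, v a * v (a + 1) :=
    Fintype.sum_equiv (Equiv.subRight 1) _ _ fun a => by simp [mul_comm]
  simp only [halfForm, hrow, sum_add_distrib, hshift]
  ring

lemma sq_sum_le_halfForm_cycleGraph {n : ℕ} (hn : 3 ≤ n) (v : Fin n → ℝ) :
    (∑ a, v a) ^ 2 ≤ n / 2 * halfForm (cycleGraph n) v := by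
  obtain ⟨m, rfl⟩ : ∃ m, n = m + 3 := ⟨n - 3, by omega⟩
  have hcs := sq_sum_le_card_mul_sum_sq (s := univ) (f := fun a => v a + v (a + 1))
  have hshift : ∀ g : Fin (m + 3) → ℝ, ∑ a, g (a + 1) = ∑ a, g a := fun g =>
    Fintype.sum_equiv (Equiv.addRight 1) _ _ fun _ => rfl
  have hlin : ∑ a, (v a + v (a + 1)) = 2 * ∑ a, v a := by
    rw [sum_add_distrib, hshift v]; ring
  have hquad : ∑ a, (v a + v (a + 1)) ^ 2 = 2 * halfForm (cycleGraph (m + 3)) v := by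
    simp only [halfForm_cycleGraph, add_sq, sum_add_distrib, hshift (v · ^ 2), mul_assoc, ← mul_sum]
    ring
  rw [hlin, hquad, card_univ, Fintype.card_fin] at hcs
  push_cast at hcs ⊢
  nlinarith

end HalfForm

lemma eq_half_of_cycleGraph_adj {V : Type*} {w : V → V → ℝ} (hsymm : ∀ i j, w i j = w j i)
    {n : ℕ} {q : Fin (n + 2) → V} (hcyc : ∀ a, w (q a) (q (a + 1)) = 1 / 2) :
    ∀ a b, (cycleGraph (n + 2)).Adj a b → w (q a) (q b) = 1 / 2 := by
  intro a b hab
  rcases cycleGraph_adj.1 hab with h | h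
  · rw [sub_eq_iff_eq_add'] at h
    rw [h, hsymm, hcyc]
  · rw [sub_eq_iff_eq_add'] at h
    rw [h, hcyc]

lemma eq_half_of_ne_fin_two {V : Type*} {w : V → V → ℝ} (hsymm : ∀ i j, w i j = w j i)
    {q : Fin 2 → V} (h : w (q 0) (q 1) = 1 / 2) :
    ∀ a b, a ≠ b → w (q a) (q b) = 1 / 2 := by
  intro a b hab
  fin_cases a <;> fin_cases b <;> simp_all [hsymm (q 1)]

section Blocks

variable {V : Type*} [DecidableEq V] {w : V → V → ℝ} {u : V → ℝ}
  (hw : ∀ i j, i ≠ j → w i j ≤ 1) (hu : ∀ i, 0 ≤ u i)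
include hw hu

lemma halfForm_le_slackForm_image {α : Type*} [Fintype α] (H : SimpleGraph α) [DecidableRel H.Adj]
    {q : α → V} (hq : Injective q) (hhalf : ∀ a b, H.Adj a b → w (q a) (q b) = 1 / 2) :
    halfForm H (u ∘ q) ≤ slackForm w (univ.image q) u := by
  classical
  rw [slackForm, sum_image fun a _ b _ h => hq h, halfForm, mul_sum, ← sum_add_distrib]
  refine sum_le_sum fun a _ => ?_
  have hnbr : 1 / 2 * ∑ b ∈ H.neighborFinset a, (u ∘ q) a * (u ∘ q) b ≤
      ∑ b ∈ {a}ᶜ, slack w (q a) (q b) * u (q a) * u (q b) := by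
    rw [mul_sum]
    calc _ = ∑ b ∈ H.neighborFinset a, slack w (q a) (q b) * u (q a) * u (q b) := by
          refine sum_congr rfl fun b hb => ?_
          have hadj := (mem_neighborFinset H a b).1 hb
          simp only [slack, hq.ne hadj.ne, if_false, hhalf a b hadj, comp_apply]
          ring
      _ ≤ _ := sum_le_sum_of_subset_of_nonneg
          (fun b hb => by simpa using ((mem_neighborFinset H a b).1 hb).ne')
          fun b _ _ => slack_mul_nonneg hw hu _ _
  rw [sum_image fun a _ b _ h => hq h, Fintype.sum_eq_add_sum_compl a]
  simp only [slack, if_true, one_mul, comp_apply, sq] at hnbr ⊢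
  linarith

lemma sq_sum_image_le_of_half {α : Type*} [Fintype α] (H : SimpleGraph α) [DecidableRel H.Adj]
    {c : ℝ} (hc : 0 ≤ c) (hH : ∀ v : α → ℝ, (∑ a, v a) ^ 2 ≤ c * halfForm H v)
    {q : α → V} (hq : Injective q) (hhalf : ∀ a b, H.Adj a b → w (q a) (q b) = 1 / 2) :
    (∑ i ∈ univ.image q, u i) ^ 2 ≤ c * slackForm w (univ.image q) u := by
  rw [sum_image fun a _ b _ h => hq h]
  exact (hH (u ∘ q)).trans
    (mul_le_mul_of_nonneg_left (halfForm_le_slackForm_image hw hu H hq hhalf) hc)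

lemma sq_sum_image_prod_le {X α : Type*} [Fintype X] [Fintype α] (H : SimpleGraph α)
    [DecidableRel H.Adj] {c : ℝ} (hc : 0 ≤ c)
    (hH : ∀ v : α → ℝ, (∑ a, v a) ^ 2 ≤ c * halfForm H v)
    {g : X × α → V} (hg : Injective g)
    (hhalf : ∀ x a b, H.Adj a b → w (g (x, a)) (g (x, b)) = 1 / 2) :
    (∑ i ∈ univ.image g, u i) ^ 2 ≤ (Fintype.card X * c) * slackForm w (univ.image g) u := by
  have himage : univ.image g = univ.biUnion fun x => univ.image fun a => g (x, a) := by
    ext; simp [Prod.exists]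
  have hdisj :
      ((univ : Finset X) : Set X).PairwiseDisjoint fun x => univ.image fun a => g (x, a) := by
    intro x _ y _ hxy
    simp only [Finset.disjoint_left, mem_image, mem_univ, true_and]
    rintro _ ⟨a, rfl⟩ ⟨b, hab⟩
    exact hxy (congrArg Prod.fst (hg hab)).symm
  rw [himage]
  simpa using sq_sum_biUnion_le hw hu hdisj (fun _ _ => hc) fun x _ =>
    sq_sum_image_le_of_half hw hu H hc hH (hg.comp (Prod.mk_right_injective x)) (hhalf x)

lemma sq_sum_image_prod_le_top {X α : Type*} [Fintype X] [Fintype α] [DecidableEq α]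
    {g : X × α → V} (hg : Injective g)
    (hK : ∀ x a b, a ≠ b → w (g (x, a)) (g (x, b)) = 1 / 2) :
    (∑ i ∈ univ.image g, u i) ^ 2 ≤
      (Fintype.card X * (2 * Fintype.card α / (Fintype.card α + 1))) *
        slackForm w (univ.image g) u :=
  sq_sum_image_prod_le hw hu ⊤ (by positivity) sq_sum_le_halfForm_top hg fun x a b hab =>
    hK x a b ((top_adj a b).1 hab)

lemma sq_sum_image_prod_le_cycleGraph {X : Type*} [Fintype X] (hsymm : ∀ i j, w i j = w j i)
    {n : ℕ} [NeZero n] (hn : 3 ≤ n) {g : X × Fin n → V} (hg : Injective g)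
    (hcyc : ∀ x a, w (g (x, a)) (g (x, a + 1)) = 1 / 2) :
    (∑ i ∈ univ.image g, u i) ^ 2 ≤ (Fintype.card X * (n / 2)) * slackForm w (univ.image g) u := by
  obtain ⟨m, rfl⟩ : ∃ m, n = m + 2 := ⟨n - 2, by omega⟩
  exact sq_sum_image_prod_le hw hu (cycleGraph (m + 2)) (by positivity)
    (sq_sum_le_halfForm_cycleGraph hn) hg fun x => eq_half_of_cycleGraph_adj hsymm (hcyc x)

-- The halves' bounds may assume injectivity, so that nested applications need not prove it.
lemma sq_sum_image_sum_le {A B : Type*} [Fintype A] [Fintype B] {f : A ⊕ B → V} (hf : Injective f)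
    {c d : ℝ} (hc : 0 ≤ c) (hd : 0 ≤ d)
    (hA : Injective (f ∘ Sum.inl) → (∑ i ∈ univ.image (f ∘ Sum.inl), u i) ^ 2 ≤
      c * slackForm w (univ.image (f ∘ Sum.inl)) u)
    (hB : Injective (f ∘ Sum.inr) → (∑ i ∈ univ.image (f ∘ Sum.inr), u i) ^ 2 ≤
      d * slackForm w (univ.image (f ∘ Sum.inr)) u) :
    (∑ i ∈ univ.image f, u i) ^ 2 ≤ (c + d) * slackForm w (univ.image f) u := by
  have himage : univ.image f = univ.image (f ∘ Sum.inl) ∪ univ.image (f ∘ Sum.inr) := by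
    ext; simp [Sum.exists]
  have hdisj : Disjoint (univ.image (f ∘ Sum.inl)) (univ.image (f ∘ Sum.inr)) := by
    simp only [Finset.disjoint_left, mem_image, mem_univ, true_and, comp_apply]
    rintro _ ⟨a, rfl⟩ ⟨b, hab⟩
    exact Sum.inr_ne_inl (hf hab)
  rw [himage]
  exact sq_sum_union_le hw hu hdisj hc hd (hA (hf.comp Sum.inl_injective))
    (hB (hf.comp Sum.inr_injective))

lemma one_le_mul_slackForm_univ [Fintype V] (hsum : ∑ i, u i = 1) {D : Type*} [Fintype D]
    {f : D → V} (hf : Injective f) {c : ℝ} (hc : 0 ≤ c)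
    (hf_bound : (∑ i ∈ univ.image f, u i) ^ 2 ≤ c * slackForm w (univ.image f) u) :
    1 ≤ (c + (Fintype.card V - Fintype.card D)) * slackForm w univ u := by
  have hcard : (#(univ.image f)ᶜ : ℝ) = Fintype.card V - Fintype.card D := by
    rw [eq_sub_iff_add_eq, ← card_univ (α := D), ← card_image_of_injective _ hf]
    exact_mod_cast card_compl_add_card _
  have h := sq_sum_union_le hw hu disjoint_compl_right hc (Nat.cast_nonneg _) hf_bound
    (sq_sum_le_card_mul_slackForm hw hu (univ.image f)ᶜ)
  rwa [union_compl, hsum, one_pow, hcard] at h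

end Blocks

theorem half_structures_density_bound_37_general
    (t l1 l2 l3 l4 l5 l6 l7 : ℕ)
    (w : Fin t → Fin t → ℝ)
    (hsymm : ∀ i j, w i j = w j i)
    (hw : ∀ i j : Fin t, i ≠ j → 0 ≤ w i j ∧ w i j ≤ 1)
    (f : (Fin l1 × Fin 8) ⊕ (Fin l2 × Fin 5) ⊕ (Fin l3 × Fin 5) ⊕ (Fin l4 × Fin 4) ⊕
          (Fin l5 × Fin 4) ⊕ (Fin l6 × Fin 3) ⊕ (Fin l7 × Fin 2) → Fin t)
    (hinj : Function.Injective f)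
    (hC8 : ∀ a : Fin l1, ∀ i : Fin 8,
        w (f (Sum.inl (a, i))) (f (Sum.inl (a, i + 1))) = 1 / 2)
    (hK5 : ∀ a : Fin l2, ∀ i j : Fin 5, i ≠ j →
        w (f (Sum.inr (Sum.inl (a, i)))) (f (Sum.inr (Sum.inl (a, j)))) = 1 / 2)
    (hC5 : ∀ a : Fin l3, ∀ i : Fin 5,
        w (f (Sum.inr (Sum.inr (Sum.inl (a, i)))))
          (f (Sum.inr (Sum.inr (Sum.inl (a, i + 1))))) = 1 / 2)
    (hK4 : ∀ a : Fin l4, ∀ i j : Fin 4, i ≠ j →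
        w (f (Sum.inr (Sum.inr (Sum.inr (Sum.inl (a, i))))))
          (f (Sum.inr (Sum.inr (Sum.inr (Sum.inl (a, j)))))) = 1 / 2)
    (hC4 : ∀ a : Fin l5, ∀ i : Fin 4,
        w (f (Sum.inr (Sum.inr (Sum.inr (Sum.inr (Sum.inl (a, i)))))))
          (f (Sum.inr (Sum.inr (Sum.inr (Sum.inr (Sum.inl (a, i + 1))))))) = 1 / 2)
    (hK3 : ∀ a : Fin l6, ∀ i j : Fin 3, i ≠ j →
        w (f (Sum.inr (Sum.inr (Sum.inr (Sum.inr (Sum.inr (Sum.inl (a, i))))))))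
          (f (Sum.inr (Sum.inr (Sum.inr (Sum.inr (Sum.inr (Sum.inl (a, j)))))))) = 1 / 2)
    (hM : ∀ e : Fin l7,
        w (f (Sum.inr (Sum.inr (Sum.inr (Sum.inr (Sum.inr (Sum.inr (e, 0))))))))
          (f (Sum.inr (Sum.inr (Sum.inr (Sum.inr (Sum.inr (Sum.inr (e, 1)))))))) = 1 / 2) :
    ∀ u : Fin t → ℝ, (∀ i, 0 ≤ u i) → ∑ i, u i = 1 →
      2 * (∑ i, ∑ j, if i < j then w i j * u i * u j else 0) ≤
        1 - 30 / (30 * (t : ℝ) - 120 * l1 - 100 * l2 - 75 * l3 - 72 * l4 - 60 * l5 -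
          45 * l6 - 20 * l7) := by
  intro u hu hsum
  have hw1 : ∀ i j, i ≠ j → w i j ≤ 1 := fun i j h => (hw i j h).2
  have hstruct := sq_sum_image_sum_le hw1 hu hinj (by positivity) (by positivity)
    (sq_sum_image_prod_le_cycleGraph hw1 hu hsymm (by norm_num) · hC8) <|
    (sq_sum_image_sum_le hw1 hu · (by positivity) (by positivity)
      (sq_sum_image_prod_le_top hw1 hu · hK5) <|
    (sq_sum_image_sum_le hw1 hu · (by positivity) (by positivity)
      (sq_sum_image_prod_le_cycleGraph hw1 hu hsymm (by norm_num) · hC5) <|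
    (sq_sum_image_sum_le hw1 hu · (by positivity) (by positivity)
      (sq_sum_image_prod_le_top hw1 hu · hK4) <|
    (sq_sum_image_sum_le hw1 hu · (by positivity) (by positivity)
      (sq_sum_image_prod_le_cycleGraph hw1 hu hsymm (by norm_num) · hC4) <|
    (sq_sum_image_sum_le hw1 hu · (by positivity) (by positivity)
      (sq_sum_image_prod_le_top hw1 hu · hK3)
      (sq_sum_image_prod_le_top hw1 hu · fun e => eq_half_of_ne_fin_two hsymm (hM e)))))))
  have hall := one_le_mul_slackForm_univ hw1 hu hsum hinj (by positivity) hstruct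
  simp only [Fintype.card_fin, Fintype.card_sum, Fintype.card_prod] at hall
  push_cast at hall
  have hQ := slackForm_nonneg hw1 hu univ
  rw [two_mul_sum_ite_lt_eq_one_sub_slackForm hsymm hsum, sub_le_sub_iff_left,
    div_le_iff₀ (by nlinarith)]
  linarith

/-- Lemma: if a weighted complete graph on t vertices contains ℓ₁ disjoint half C₈'s,
ℓ₂ disjoint half K₅'s, ℓ₃ disjoint half C₅'s, ℓ₄ disjoint half K₄'s, ℓ₅ disjoint half
C₄'s, ℓ₆ disjoint half K₃'s and ℓ₇ independent half edges, all mutually vertex-disjoint,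
then twice its density is at most
1 − 30/(30t − 120ℓ₁ − 100ℓ₂ − 75ℓ₃ − 72ℓ₄ − 60ℓ₅ − 45ℓ₆ − 20ℓ₇). -/
theorem half_structures_density_bound_37
    (t l1 l2 l3 l4 l5 l6 l7 : ℕ) (ht : 1 ≤ t)
    (hsize : 8 * l1 + 5 * l2 + 5 * l3 + 4 * l4 + 4 * l5 + 3 * l6 + 2 * l7 ≤ t)
    (w : Fin t → Fin t → ℝ)
    (hsymm : ∀ i j, w i j = w j i)
    (hw : ∀ i j : Fin t, i ≠ j → 0 ≤ w i j ∧ w i j ≤ 1)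
    (f : (Fin l1 × Fin 8) ⊕ (Fin l2 × Fin 5) ⊕ (Fin l3 × Fin 5) ⊕ (Fin l4 × Fin 4) ⊕
          (Fin l5 × Fin 4) ⊕ (Fin l6 × Fin 3) ⊕ (Fin l7 × Fin 2) → Fin t)
    (hinj : Function.Injective f)
    (hC8 : ∀ a : Fin l1, ∀ i : Fin 8,
        w (f (Sum.inl (a, i))) (f (Sum.inl (a, i + 1))) = 1 / 2)
    (hK5 : ∀ a : Fin l2, ∀ i j : Fin 5, i ≠ j →
        w (f (Sum.inr (Sum.inl (a, i)))) (f (Sum.inr (Sum.inl (a, j)))) = 1 / 2)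
    (hC5 : ∀ a : Fin l3, ∀ i : Fin 5,
        w (f (Sum.inr (Sum.inr (Sum.inl (a, i)))))
          (f (Sum.inr (Sum.inr (Sum.inl (a, i + 1))))) = 1 / 2)
    (hK4 : ∀ a : Fin l4, ∀ i j : Fin 4, i ≠ j →
        w (f (Sum.inr (Sum.inr (Sum.inr (Sum.inl (a, i))))))
          (f (Sum.inr (Sum.inr (Sum.inr (Sum.inl (a, j)))))) = 1 / 2)
    (hC4 : ∀ a : Fin l5, ∀ i : Fin 4,
        w (f (Sum.inr (Sum.inr (Sum.inr (Sum.inr (Sum.inl (a, i)))))))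
          (f (Sum.inr (Sum.inr (Sum.inr (Sum.inr (Sum.inl (a, i + 1))))))) = 1 / 2)
    (hK3 : ∀ a : Fin l6, ∀ i j : Fin 3, i ≠ j →
        w (f (Sum.inr (Sum.inr (Sum.inr (Sum.inr (Sum.inr (Sum.inl (a, i))))))))
          (f (Sum.inr (Sum.inr (Sum.inr (Sum.inr (Sum.inr (Sum.inl (a, j)))))))) = 1 / 2)
    (hM : ∀ e : Fin l7,
        w (f (Sum.inr (Sum.inr (Sum.inr (Sum.inr (Sum.inr (Sum.inr (e, 0))))))))
          (f (Sum.inr (Sum.inr (Sum.inr (Sum.inr (Sum.inr (Sum.inr (e, 1)))))))) = 1 / 2) :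
    ∀ u : Fin t → ℝ, (∀ i, 0 ≤ u i) → ∑ i, u i = 1 →
      2 * (∑ i, ∑ j, if i < j then w i j * u i * u j else 0) ≤
        1 - 30 / (30 * (t : ℝ) - 120 * l1 - 100 * l2 - 75 * l3 - 72 * l4 - 60 * l5 -
          45 * l6 - 20 * l7) :=
  half_structures_density_bound_37_general t l1 l2 l3 l4 l5 l6 l7 w hsymm hw f hinj hC8 hK5 hC5 hK4
    hC4 hK3 hM
end

section
/- Consider a weighted 2-colored complete graph on the vertex set {1, …, 9} (each pair of distinct vertices has a weight in {1/2, 1} and a color, red or blue) which contains no blue triangle and no red generalized K₆. Suppose X is a set of 4 vertices such that every pair of distinct vertices of X is colored red. Then some pair of distinct vertices in the complement {1, …, 9} \ X has weight 1/2. -/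
def g5 (b01 b02 b03 b04 b12 b13 b14 b23 b24 b34 : Bool) : Fin 5 → Fin 5 → Bool := fun i j =>
  match i, j with
  | 0, 1 => b01 | 1, 0 => b01
  | 0, 2 => b02 | 2, 0 => b02
  | 0, 3 => b03 | 3, 0 => b03
  | 0, 4 => b04 | 4, 0 => b04
  | 1, 2 => b12 | 2, 1 => b12
  | 1, 3 => b13 | 3, 1 => b13
  | 1, 4 => b14 | 4, 1 => b14
  | 2, 3 => b23 | 3, 2 => b23
  | 2, 4 => b24 | 4, 2 => b24
  | 3, 4 => b34 | 4, 3 => b34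
  | _, _ => false

set_option maxHeartbeats 4000000 in
set_option synthInstance.maxHeartbeats 2000000 in
set_option synthInstance.maxSize 3000 in
theorem aux5 (b01 b02 b03 b04 b12 b13 b14 b23 b24 b34 : Bool)
    (hblue : ∀ a b c : Fin 5, a ≠ b → a ≠ c → b ≠ c →
      (g5 b01 b02 b03 b04 b12 b13 b14 b23 b24 b34 a b
        || g5 b01 b02 b03 b04 b12 b13 b14 b23 b24 b34 a c
        || g5 b01 b02 b03 b04 b12 b13 b14 b23 b24 b34 b c) = true)
    (hred : ∀ a b c : Fin 5, a ≠ b → a ≠ c → b ≠ c →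
      (g5 b01 b02 b03 b04 b12 b13 b14 b23 b24 b34 a b
        && g5 b01 b02 b03 b04 b12 b13 b14 b23 b24 b34 a c
        && g5 b01 b02 b03 b04 b12 b13 b14 b23 b24 b34 b c) = false) :
    (Finset.univ.filter (fun p : Fin 5 × Fin 5 =>
        g5 b01 b02 b03 b04 b12 b13 b14 b23 b24 b34 p.1 p.2 = true)).card ≤ 10 ∧
    ∀ B : Fin 5 → Bool, (∀ u u' : Fin 5, B u = true → B u' = true → u ≠ u' →
        g5 b01 b02 b03 b04 b12 b13 b14 b23 b24 b34 u u' = true) →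
      4 ≤ (Finset.univ.filter (fun p : Fin 5 × Fin 5 =>
        g5 b01 b02 b03 b04 b12 b13 b14 b23 b24 b34 p.1 p.2 = true
          ∧ B p.1 = false ∧ B p.2 = false)).card := by
  revert b01 b02 b03 b04 b12 b13 b14 b23 b24 b34 hblue hred
  decide

/-- Claim 40: in a weighted 2-colored K₉ (weights in {1/2, 1}) with no blue triangle and
no red generalized K₆, if X is a red 4-clique, then some pair outside X has weight 1/2. -/
theorem half_edge_outside_red_K4 (w : Fin 9 → Fin 9 → ℝ) (red : Fin 9 → Fin 9 → Prop)
    (hwsymm : ∀ i j, w i j = w j i)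
    (hwval : ∀ i j : Fin 9, i ≠ j → w i j = 1 / 2 ∨ w i j = 1)
    (hredsymm : ∀ i j, red i j ↔ red j i)
    (hnoBlueTriangle : ∀ a b c : Fin 9, a ≠ b → a ≠ c → b ≠ c →
        red a b ∨ red a c ∨ red b c)
    (hnoRedGenK6 : ¬ ∃ X Y : Finset (Fin 9), Y ⊆ X ∧ X.card + Y.card = 6 ∧
        (∀ i ∈ X, ∀ j ∈ X, i ≠ j → red i j) ∧
        (∀ i ∈ Y, ∀ j ∈ Y, i ≠ j → w i j = 1))
    (X : Finset (Fin 9)) (hX : X.card = 4)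
    (hXred : ∀ i ∈ X, ∀ j ∈ X, i ≠ j → red i j) :
    ∃ i j : Fin 9, i ∉ X ∧ j ∉ X ∧ i ≠ j ∧ w i j = 1 / 2 := by
  classical
  by_contra hcon
  push_neg at hcon
  have hw1 : ∀ i j : Fin 9, i ∉ X → j ∉ X → i ≠ j → w i j = 1 := by
    intro i j hi hj hij
    rcases hwval i j hij with h | h
    · exact absurd h (hcon i j hi hj hij)
    · exact h
  have hS : Xᶜ.card = 5 := by
    rw [Finset.card_compl, hX]
    rfl
  set f : Fin 5 → Fin 9 := fun i => ((Xᶜ.orderIsoOfFin hS) i : Fin 9) with hf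
  have hfnot : ∀ i, f i ∉ X := fun i => Finset.mem_compl.mp ((Xᶜ.orderIsoOfFin hS) i).2
  have hfinj : Function.Injective f := fun i j h =>
    (Xᶜ.orderIsoOfFin hS).injective (Subtype.ext h)
  set g : Fin 5 → Fin 5 → Bool :=
    fun i j => decide (i ≠ j) && decide (red (f i) (f j)) with hg
  have hgtrue : ∀ i j, g i j = true ↔ (i ≠ j ∧ red (f i) (f j)) := by
    intro i j; simp [hg]
  have hgsymm : ∀ i j, g i j = g j i := by
    intro i j
    rw [Bool.eq_iff_iff, hgtrue, hgtrue]
    exact ⟨fun ⟨h1, h2⟩ => ⟨h1.symm, (hredsymm _ _).mp h2⟩,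
      fun ⟨h1, h2⟩ => ⟨h1.symm, (hredsymm _ _).mp h2⟩⟩
  set G : Fin 5 → Fin 5 → Bool :=
    g5 (g 0 1) (g 0 2) (g 0 3) (g 0 4) (g 1 2) (g 1 3) (g 1 4) (g 2 3) (g 2 4) (g 3 4)
    with hG
  have hgeq : g = G := by
    funext i j
    fin_cases i <;> fin_cases j <;>
      first
        | rfl
        | exact hgsymm _ _
        | (show g _ _ = false; rw [Bool.eq_iff_iff, hgtrue]; simp)
  -- distinctness transfer
  have hfne : ∀ {a b : Fin 5}, a ≠ b → f a ≠ f b := fun h h' => h (hfinj h')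
  -- no red triangle outside
  have hredtri : ∀ a b c : Fin 5, a ≠ b → a ≠ c → b ≠ c → (G a b && G a c && G b c) = false := by
    intro a b c hab hac hbc
    rw [← hgeq]
    by_contra h
    have ht : (g a b && g a c && g b c) = true := by
      revert h; cases (g a b && g a c && g b c) <;> simp
    rw [Bool.and_eq_true, Bool.and_eq_true] at ht
    obtain ⟨⟨h1, h2⟩, h3⟩ := ht
    have hrab := ((hgtrue a b).mp h1).2
    have hrac := ((hgtrue a c).mp h2).2
    have hrbc := ((hgtrue b c).mp h3).2
    have hout : ∀ i ∈ ({f a, f b, f c} : Finset (Fin 9)), i ∉ X := by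
      intro i hi
      simp only [Finset.mem_insert, Finset.mem_singleton] at hi
      rcases hi with rfl | rfl | rfl <;> exact hfnot _
    refine hnoRedGenK6 ⟨{f a, f b, f c}, {f a, f b, f c}, subset_rfl, ?_, ?_, ?_⟩
    · have : ({f a, f b, f c} : Finset (Fin 9)).card = 3 := by
        rw [Finset.card_insert_of_notMem (by simp [hfne hab, hfne hac]),
          Finset.card_insert_of_notMem (by simp [hfne hbc]), Finset.card_singleton]
      omega
    · intro i hi j hj hij
      simp only [Finset.mem_insert, Finset.mem_singleton] at hi hj
      rcases hi with rfl | rfl | rfl <;> rcases hj with rfl | rfl | rfl <;>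
        first
          | exact absurd rfl hij
          | assumption
          | exact (hredsymm _ _).mpr (by assumption)
    · intro i hi j hj hij
      exact hw1 i j (hout i hi) (hout j hj) hij
  -- no blue triangle outside
  have hbluetri : ∀ a b c : Fin 5, a ≠ b → a ≠ c → b ≠ c → (G a b || G a c || G b c) = true := by
    intro a b c hab hac hbc
    rw [← hgeq]
    rcases hnoBlueTriangle (f a) (f b) (f c) (hfne hab) (hfne hac) (hfne hbc) with h | h | h
    · rw [(hgtrue a b).mpr ⟨hab, h⟩]; simp
    · rw [(hgtrue a c).mpr ⟨hac, h⟩]; simp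
    · rw [(hgtrue b c).mpr ⟨hbc, h⟩]; simp
  obtain ⟨hEdges10, hBpart⟩ :=
    aux5 (g 0 1) (g 0 2) (g 0 3) (g 0 4) (g 1 2) (g 1 3) (g 1 4) (g 2 3) (g 2 4) (g 3 4)
      hbluetri hredtri
  set B : Fin 9 → Fin 5 → Bool := fun x u => decide (¬ red x (f u)) with hB
  have hBfalse : ∀ x u, B x u = false → red x (f u) := by
    intro x u h
    by_contra hr
    rw [hB] at h
    simp only [decide_eq_false_iff_not, not_not] at h
    exact hr h
  have hBtrue : ∀ x u, B x u = true → ¬ red x (f u) := by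
    intro x u h
    rw [hB] at h
    simpa using h
  set E : Fin 9 → Finset (Fin 5 × Fin 5) := fun x =>
    Finset.univ.filter (fun p : Fin 5 × Fin 5 =>
      G p.1 p.2 = true ∧ B x p.1 = false ∧ B x p.2 = false) with hE
  have hxne : ∀ x ∈ X, ∀ u : Fin 5, x ≠ f u := by
    intro x hx u h
    exact hfnot u (h ▸ hx)
  have h4 : ∀ x ∈ X, 4 ≤ (E x).card := by
    intro x hx
    refine hBpart (B x) ?_
    intro u u' hu hu' huu'
    rw [← hG, ← hgeq, hgtrue]
    refine ⟨huu', ?_⟩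
    rcases hnoBlueTriangle x (f u) (f u') (hxne x hx u) (hxne x hx u') (hfne huu') with h | h | h
    · exact absurd h (hBtrue x u hu)
    · exact absurd h (hBtrue x u' hu')
    · exact h
  have hdisj : ∀ x ∈ X, ∀ x' ∈ X, x ≠ x' → Disjoint (E x) (E x') := by
    intro x hx x' hx' hxx'
    rw [Finset.disjoint_left]
    intro p hp hp'
    rw [hE] at hp hp'
    simp only [Finset.mem_filter, Finset.mem_univ, true_and] at hp hp'
    obtain ⟨hgp, hb1, hb2⟩ := hp
    obtain ⟨-, hb1', hb2'⟩ := hp'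
    rw [← hgeq, hgtrue] at hgp
    obtain ⟨hpne, hpred⟩ := hgp
    have r1 := hBfalse x p.1 hb1
    have r2 := hBfalse x p.2 hb2
    have r3 := hBfalse x' p.1 hb1'
    have r4 := hBfalse x' p.2 hb2'
    have r5 : red x x' := hXred x hx x' hx' hxx'
    have hxu1 := hxne x hx p.1
    have hxu2 := hxne x hx p.2
    have hx'u1 := hxne x' hx' p.1
    have hx'u2 := hxne x' hx' p.2
    have hu12 := hfne hpne
    refine hnoRedGenK6 ⟨{x, x', f p.1, f p.2}, {f p.1, f p.2}, ?_, ?_, ?_, ?_⟩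
    · intro i hi
      simp only [Finset.mem_insert, Finset.mem_singleton] at hi ⊢
      tauto
    · have hc4 : ({x, x', f p.1, f p.2} : Finset (Fin 9)).card = 4 := by
        rw [Finset.card_insert_of_notMem (by simp [hxx', hxu1, hxu2]),
          Finset.card_insert_of_notMem (by simp [hx'u1, hx'u2]),
          Finset.card_insert_of_notMem (by simp [hu12]), Finset.card_singleton]
      have hc2 : ({f p.1, f p.2} : Finset (Fin 9)).card = 2 := by
        rw [Finset.card_insert_of_notMem (by simp [hu12]), Finset.card_singleton]
      omega
    · intro i hi j hj hij
      simp only [Finset.mem_insert, Finset.mem_singleton] at hi hj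
      rcases hi with rfl | rfl | rfl | rfl <;> rcases hj with rfl | rfl | rfl | rfl <;>
        first
          | exact absurd rfl hij
          | assumption
          | exact (hredsymm _ _).mpr (by assumption)
    · intro i hi j hj hij
      simp only [Finset.mem_insert, Finset.mem_singleton] at hi hj
      have hiX : i ∉ X := by rcases hi with rfl | rfl <;> exact hfnot _
      have hjX : j ∉ X := by rcases hj with rfl | rfl <;> exact hfnot _
      exact hw1 i j hiX hjX hij
  have hsum : (X.biUnion E).card = ∑ x ∈ X, (E x).card := Finset.card_biUnion hdisj
  have h16 : 16 ≤ ∑ x ∈ X, (E x).card := by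
    calc (16 : ℕ) = ∑ _x ∈ X, 4 := by rw [Finset.sum_const, hX]; decide
      _ ≤ ∑ x ∈ X, (E x).card := Finset.sum_le_sum h4
  have hsub : X.biUnion E ⊆ Finset.univ.filter (fun p : Fin 5 × Fin 5 => G p.1 p.2 = true) := by
    intro p hp
    rw [Finset.mem_biUnion] at hp
    obtain ⟨x, hx, hpx⟩ := hp
    rw [hE] at hpx
    simp only [Finset.mem_filter, Finset.mem_univ, true_and] at hpx ⊢
    exact hpx.1
  have hle : (X.biUnion E).card ≤ 10 := le_trans (Finset.card_le_card hsub) hEdges10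
  omega
end

section
/- Consider a weighted 2-colored complete graph on the vertex set {1, …, 13} (each pair of distinct vertices has a weight in {1/2, 1} and a color, red or blue) which contains no blue triangle and no red generalized K₇, and whose density g(w) = max over the standard simplex of Σ_{1 ≤ i < j ≤ 13} w(i, j)·u_i·u_j satisfies g(w) ≥ 7/16. Then every vertex is incident to at least two edges of weight 1/2. -/
/-!
Suppose some vertex `v` meets at most one half edge. Then the graph of full edges has no `K₆`:
otherwise there is a full `K₆` through `v`, and a case analysis of the colouring around `v`,
based on `R(3, 3) = 6`, `R(3, 4) = 9` and the three shapes of a forbidden red generalized `K₇`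
(a red `K₆`; a red `K₅` with a full edge; a red `K₄` with a full triangle), produces a blue
triangle or a red generalized `K₇`. By the Motzkin–Straus inequality the full edges then carry
weight at most `(1 - 1/5) / 2`, so the density is at most `(1 - ∑ uᵢ²) / 4 + 1 / 5`, which by
Cauchy–Schwarz is at most `3 / 13 + 1 / 5 = 28 / 65 < 7 / 16`.
-/

open Finset Fintype Matrix

namespace SimpleGraph

variable {α : Type*} {G : SimpleGraph α} {n : ℕ}

theorem IsClique.card_lt_of_cliqueFree (hG : G.CliqueFree n) {s : Finset α}
    (hs : G.IsClique (s : Set α)) : #s < n := by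
  by_contra! h
  obtain ⟨t, hts, rfl⟩ := exists_subset_card_eq h
  exact hG t ⟨hs.subset hts, rfl⟩

theorem card_le_one_of_isClique_compl {s t : Finset α} (hs : G.IsClique (s : Set α))
    (ht : Gᶜ.IsClique (t : Set α)) (hst : s ⊆ t) : #s ≤ 1 := by
  by_contra! h
  obtain ⟨a, ha, b, hb, hab⟩ := one_lt_card.mp h
  exact ((compl_adj G a b).mp (ht (hst ha) (hst hb) hab)).2 (hs ha hb hab)

theorem CliqueFree.compl_induce (s : Set α) (h : Gᶜ.CliqueFree n) :
    (G.induce s)ᶜ.CliqueFree n :=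
  h.comap ⟨(Embedding.complEquiv (Embedding.induce s)).toCopy⟩

theorem exists_isNClique_mem_of_subsingleton [DecidableEq α] {v : α}
    (hv : (Gᶜ.neighborSet v).Subsingleton) {s : Finset α} (hs : G.IsNClique (n + 1) s) :
    ∃ t : Finset α, v ∈ t ∧ G.IsNClique (n + 1) t := by
  by_cases hvs : v ∈ s
  · exact ⟨s, hvs, hs⟩
  have hcompl : ∀ a ∈ s, ¬ G.Adj v a → a ∈ Gᶜ.neighborSet v := fun a ha hna => by
    have hva : v ≠ a := by rintro rfl; exact hvs ha
    simp [hva, hna]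
  obtain ⟨x, hx, hxv⟩ : ∃ x ∈ s, ∀ a ∈ s.erase x, G.Adj v a := by
    by_contra! hbad
    obtain ⟨x₀, hx₀⟩ := card_pos.mp (show 0 < #s by rw [hs.card_eq]; omega)
    obtain ⟨a, ha, hna⟩ := hbad x₀ hx₀
    obtain ⟨b, hb, hnb⟩ := hbad a (mem_of_mem_erase ha)
    exact ne_of_mem_erase hb
      (hv (hcompl b (mem_of_mem_erase hb) hnb) (hcompl a (mem_of_mem_erase ha) hna))
  exact ⟨insert v (s.erase x), mem_insert_self v _, (hs.erase_of_mem hx).insert hxv⟩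

variable [Fintype α] [DecidableRel G.Adj]

theorem degree_lt_of_cliqueFree (h : G.CliqueFree 3) (hc : Gᶜ.CliqueFree n) (a : α) :
    G.degree a < n := by
  refine IsClique.card_lt_of_cliqueFree hc ?_
  rw [coe_neighborFinset, isClique_compl]
  exact isIndepSet_neighborSet_of_triangleFree _ h a

theorem notMem_of_subset_neighborFinset {s : Finset α} {v : α} (hs : s ⊆ G.neighborFinset v) :
    v ∉ s :=
  fun hv => G.loopless.irrefl v ((mem_neighborFinset _ _ _).mp (hs hv))

variable [DecidableEq α]

theorem card_le_five_of_cliqueFree (h : G.CliqueFree 3) (hc : Gᶜ.CliqueFree 3) :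
    card α ≤ 5 := by
  cases isEmpty_or_nonempty α with
  | inl _ => simp
  | inr hα =>
    obtain ⟨a⟩ := hα
    have := G.degree_lt_of_cliqueFree h hc a
    have := Gᶜ.degree_lt_of_cliqueFree hc (by rwa [compl_compl]) a
    have := G.degree_compl a
    omega

theorem degree_le_five_of_cliqueFree (h : G.CliqueFree 4) (hc : Gᶜ.CliqueFree 3) (a : α) :
    G.degree a ≤ 5 := by
  have hnbhd : (G.induce (G.neighborSet a)).CliqueFree 3 := by
    rw [cliqueFree_induce_iff]
    simpa using CliqueFreeOn.of_succ _ (h.cliqueFreeOn (s := Set.univ)) (Set.mem_univ a)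
  rw [← card_neighborSet_eq_degree]
  exact card_le_five_of_cliqueFree hnbhd (hc.compl_induce _)

theorem card_le_eight_of_cliqueFree (h : G.CliqueFree 4) (hc : Gᶜ.CliqueFree 3) :
    card α ≤ 8 := by
  by_contra! hα
  have hcompl : ∀ a, Gᶜ.degree a = 3 ∧ card α = 9 := fun a => by
    have := Gᶜ.degree_lt_of_cliqueFree hc (by rwa [compl_compl]) a
    have := G.degree_compl a
    have := G.degree_le_five_of_cliqueFree h hc a
    omega
  -- nine vertices of degree three in `Gᶜ` contradict the handshake lemma
  have hsum := Gᶜ.sum_degrees_eq_twice_card_edges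
  simp only [fun a => (hcompl a).1, sum_const, card_univ, smul_eq_mul] at hsum
  obtain ⟨a⟩ : Nonempty α := card_pos_iff.mp (by omega)
  have := (hcompl a).2
  omega

theorem isClique_insert_of_subset_neighborFinset {s : Finset α} {v : α}
    (hs : G.IsClique (s : Set α)) (hsv : s ⊆ G.neighborFinset v) :
    G.IsClique ((insert v s : Finset α) : Set α) := by
  rw [coe_insert]
  exact hs.insert fun c hc _ => (mem_neighborFinset _ _ _).mp (hsv hc)

theorem adjMatrix_dotProduct_mulVec_le {u : α → ℝ} (hu : ∀ i, 0 ≤ u i) :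
    u ⬝ᵥ G.adjMatrix ℝ *ᵥ u ≤ (∑ i, u i) ^ 2 - ∑ i, u i ^ 2 := by
  have hsq : (∑ i, u i) ^ 2 - ∑ i, u i ^ 2 = ∑ i, ∑ j, if i = j then 0 else u i * u j := by
    rw [sq, Finset.sum_mul_sum, ← sum_sub_distrib]
    refine sum_congr rfl fun i _ => ?_
    rw [sum_ite, sum_const_zero, zero_add]
    simp_rw [← ne_eq]
    rw [filter_ne, sum_erase_eq_sub (mem_univ i), sq]
  rw [hsq, dotProduct]
  refine sum_le_sum fun i _ => ?_
  rw [mulVec, dotProduct, mul_sum]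
  refine sum_le_sum fun j _ => ?_
  by_cases hij : i = j
  · simp [hij]
  · by_cases hadj : G.Adj i j <;> simp [hij, hadj, mul_nonneg (hu i) (hu j)]

theorem adjMatrix_dotProduct_mulVec_le_of_support {r : ℕ} {s : Finset α} (hs : #s ≤ r)
    {u : α → ℝ} (hu : ∀ i, 0 ≤ u i) (hsupp : ∀ i ∉ s, u i = 0) :
    u ⬝ᵥ G.adjMatrix ℝ *ᵥ u ≤ (1 - (r : ℝ)⁻¹) * (∑ i, u i) ^ 2 := by
  have hcs : (∑ i, u i) ^ 2 ≤ r * ∑ i, u i ^ 2 := by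
    rw [← sum_subset (subset_univ s) fun i _ hi => hsupp i hi]
    calc (∑ i ∈ s, u i) ^ 2 ≤ #s * ∑ i ∈ s, u i ^ 2 := sq_sum_le_card_mul_sum_sq
      _ ≤ r * ∑ i, u i ^ 2 :=
        mul_le_mul (by exact_mod_cast hs)
          (sum_le_sum_of_subset_of_nonneg (subset_univ s) fun i _ _ => sq_nonneg _)
          (sum_nonneg fun i _ => sq_nonneg _) (Nat.cast_nonneg r)
  have : (r : ℝ)⁻¹ * (∑ i, u i) ^ 2 ≤ ∑ i, u i ^ 2 := by
    rcases (Nat.cast_nonneg r : (0 : ℝ) ≤ r).eq_or_lt with hr | hr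
    · simp [← hr, sum_nonneg fun i _ => sq_nonneg (u i)]
    · rwa [inv_mul_le_iff₀ hr]
  linarith [adjMatrix_dotProduct_mulVec_le (G := G) hu]

theorem adjMatrix_dotProduct_mulVec_le_shift {p q : α} (hpq : ¬ G.Adj p q) (u : α → ℝ)
    (hdeg : (G.adjMatrix ℝ *ᵥ u) q ≤ (G.adjMatrix ℝ *ᵥ u) p) {t : ℝ} (ht : 0 ≤ t) :
    u ⬝ᵥ G.adjMatrix ℝ *ᵥ u ≤
      (u + t • (Pi.single p 1 - Pi.single q 1)) ⬝ᵥ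
        G.adjMatrix ℝ *ᵥ (u + t • (Pi.single p 1 - Pi.single q 1)) := by
  set A := G.adjMatrix ℝ
  set e : α → ℝ := Pi.single p 1 - Pi.single q 1
  have hsymm : u ⬝ᵥ A *ᵥ e = e ⬝ᵥ A *ᵥ u := by
    rw [dotProduct_mulVec, ← mulVec_transpose, transpose_adjMatrix, dotProduct_comm]
  have hlin : e ⬝ᵥ A *ᵥ u = (A *ᵥ u) p - (A *ᵥ u) q := by
    simp [e, sub_dotProduct, single_dotProduct]
  have hquad : e ⬝ᵥ A *ᵥ e = 0 := by
    have hqp : ¬ G.Adj q p := fun h => hpq h.symm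
    simp [e, A, mulVec_sub, sub_dotProduct, single_dotProduct, hpq, hqp]
  have : 0 ≤ t * (e ⬝ᵥ A *ᵥ u) := mul_nonneg ht (by rw [hlin]; linarith)
  simp only [mulVec_add, mulVec_smul, dotProduct_add, add_dotProduct, dotProduct_smul,
    smul_dotProduct, hsymm, hquad, smul_eq_mul]
  nlinarith

/-- The Motzkin–Straus inequality. -/
theorem adjMatrix_dotProduct_mulVec_le_of_cliqueFree {r : ℕ} (hG : G.CliqueFree (r + 1))
    {u : α → ℝ} (hu : ∀ i, 0 ≤ u i) :
    u ⬝ᵥ G.adjMatrix ℝ *ᵥ u ≤ (1 - (r : ℝ)⁻¹) * (∑ i, u i) ^ 2 := by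
  suffices ∀ s : Finset α, ∀ u : α → ℝ, (∀ i, 0 ≤ u i) → (∀ i ∉ s, u i = 0) →
      u ⬝ᵥ G.adjMatrix ℝ *ᵥ u ≤ (1 - (r : ℝ)⁻¹) * (∑ i, u i) ^ 2 from
    this univ u hu (by simp)
  intro s
  induction s using Finset.strongInduction with
  | H s ih =>
  intro u hu hsupp
  by_cases hs : G.IsClique (s : Set α)
  · exact adjMatrix_dotProduct_mulVec_le_of_support
      (Nat.lt_succ_iff.mp (hs.card_lt_of_cliqueFree hG)) hu hsupp
  obtain ⟨p, hp, q, hq, hpq, hadj⟩ : ∃ p ∈ s, ∃ q ∈ s, p ≠ q ∧ ¬ G.Adj p q := by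
    simpa [IsClique, Set.Pairwise] using hs
  wlog hdeg : (G.adjMatrix ℝ *ᵥ u) q ≤ (G.adjMatrix ℝ *ᵥ u) p generalizing p q
  · exact this q hq p hp hpq.symm (fun h => hadj h.symm) (le_of_not_ge hdeg)
  set u' := u + u q • (Pi.single p 1 - Pi.single q 1)
  have hu' : ∀ i, 0 ≤ u' i := by
    intro i
    by_cases hip : i = p <;> by_cases hiq : i = q <;> simp [u', hip, hiq, hpq] <;>
      linarith [hu i, hu p, hu q]
  have hsupp' : ∀ i ∉ s.erase q, u' i = 0 := by
    intro i hi
    by_cases hiq : i = q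
    · simp [u', hiq, hpq.symm]
    · have hip : i ≠ p := by rintro rfl; exact hi (mem_erase.mpr ⟨hpq, hp⟩)
      simp [u', hip, hiq, hsupp i (fun h => hi (mem_erase.mpr ⟨hiq, h⟩))]
  have hsum : ∑ i, u' i = ∑ i, u i := by simp [u', sum_add_distrib, ← mul_sum]
  calc u ⬝ᵥ G.adjMatrix ℝ *ᵥ u ≤ u' ⬝ᵥ G.adjMatrix ℝ *ᵥ u' :=
        adjMatrix_dotProduct_mulVec_le_shift hadj u hdeg (hu q)
    _ ≤ _ := ih _ (erase_ssubset hq) u' hu' hsupp'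
    _ = _ := by rw [hsum]

end SimpleGraph

open SimpleGraph

theorem Fintype.two_mul_sum_ite_lt {ι : Type*} [Fintype ι] [LinearOrder ι] (g : ι → ι → ℝ)
    (hg : ∀ i j, g i j = g j i) :
    2 * ∑ i, ∑ j, (if i < j then g i j else 0) = ∑ i, ∑ j, g i j - ∑ i, g i i := by
  have hsplit : ∀ i j, g i j = (if i < j then g i j else 0) + (if j < i then g j i else 0) +
      (if i = j then g i j else 0) := fun i j => by
    rcases lt_trichotomy i j with hij | rfl | hij
    · simp [hij, hij.ne, hij.not_gt]
    · simp
    · simp [hij, hij.ne', hij.not_gt, hg i j]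
  have htotal : ∑ i, ∑ j, g i j = ∑ i, ∑ j, (if i < j then g i j else 0) +
      ∑ i, ∑ j, (if j < i then g j i else 0) + ∑ i, ∑ j, (if i = j then g i j else 0) := by
    simp only [← sum_add_distrib]
    exact Finset.sum_congr rfl fun i _ => Finset.sum_congr rfl fun j _ => hsplit i j
  rw [htotal, Finset.sum_comm (f := fun i j => if j < i then g j i else 0)]
  simp only [sum_ite_eq]
  ring

theorem four_mul_sum_ite_lt_le {ι : Type*} [Fintype ι] [LinearOrder ι] (w : ι → ι → ℝ)
    (hw : ∀ i j, i ≠ j → w i j = 1 / 2 ∨ w i j = 1) {u : ι → ℝ} (hu : ∀ i, 0 ≤ u i) :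
    4 * ∑ i, ∑ j, (if i < j then w i j * u i * u j else 0) ≤
      (∑ i, u i) ^ 2 - ∑ i, u i ^ 2 +
        u ⬝ᵥ (fromRel fun i j => w i j = 1).adjMatrix ℝ *ᵥ u := by
  set A := (fromRel fun i j => w i j = 1).adjMatrix ℝ
  have hpt : ∀ i j, (if i < j then w i j * u i * u j else 0) ≤
      if i < j then (1 + A i j) / 2 * (u i * u j) else 0 := fun i j => by
    split_ifs with hij
    · have huu := mul_nonneg (hu i) (hu j)
      rcases hw i j hij.ne with hwij | hwij
      · have : 0 ≤ A i j := by simp only [A, adjMatrix_apply]; split_ifs <;> norm_num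
        rw [hwij]; nlinarith
      · have : A i j = 1 := by simp [A, adjMatrix_apply, hij.ne, hwij]
        rw [hwij, this]; nlinarith
    · rfl
  have hle : ∑ i, ∑ j, (if i < j then w i j * u i * u j else 0) ≤
      ∑ i, ∑ j, (if i < j then (1 + A i j) / 2 * (u i * u j) else 0) :=
    sum_le_sum fun i _ => sum_le_sum fun j _ => hpt i j
  have hsplit := two_mul_sum_ite_lt (fun i j => (1 + A i j) / 2 * (u i * u j)) fun i j => by
    rw [show A j i = A i j from (isSymm_adjMatrix _).apply i j, mul_comm (u j)]
  have hfull : ∑ i, ∑ j, (1 + A i j) / 2 * (u i * u j) = ((∑ i, u i) ^ 2 + u ⬝ᵥ A *ᵥ u) / 2 := by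
    rw [sq, Finset.sum_mul_sum]
    simp only [dotProduct, mulVec, mul_sum, ← sum_add_distrib, sum_div]
    exact sum_congr rfl fun i _ => sum_congr rfl fun j _ => by ring
  have hdiag : ∑ i, (1 + A i i) / 2 * (u i * u i) = (∑ i, u i ^ 2) / 2 := by
    simp [A, sq, div_eq_inv_mul, mul_sum]
  linarith

theorem Finset.ne_of_mem_sdiff_of_mem_inter {α : Type*} [DecidableEq α] {s t u : Finset α}
    {x y : α} (hx : x ∈ s \ u) (hy : y ∈ t ∩ u) : x ≠ y := by
  rintro rfl
  exact (mem_sdiff.mp hx).2 (mem_inter.mp hy).2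

variable {V : Type*}

/-- `R` is the graph of red edges and `F` the graph of full edges; the blue edges are those
of `Rᶜ`. -/
structure AvoidsBlueK3RedGenK7 (R F : SimpleGraph V) : Prop where
  compl_cliqueFree : Rᶜ.CliqueFree 3
  card_add_card_ne : ∀ X Y : Finset V, Y ⊆ X → R.IsClique (X : Set V) →
    F.IsClique (Y : Set V) → #X + #Y ≠ 7

namespace AvoidsBlueK3RedGenK7

variable {R F : SimpleGraph V} {X Y K C W : Finset V} {v x y z : V}

theorem card_add_card_le (h : AvoidsBlueK3RedGenK7 R F) (hX : R.IsClique (X : Set V))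
    (hY : F.IsClique (Y : Set V)) (hYX : Y ⊆ X) : #X + #Y ≤ 6 := by
  by_contra! hlt
  by_cases hX7 : 7 ≤ #X
  · obtain ⟨X', hX'X, hX'⟩ := exists_subset_card_eq hX7
    exact h.card_add_card_ne X' ∅ (empty_subset _) (hX.subset hX'X) (by simp) (by simp [hX'])
  · obtain ⟨Y', hY'Y, hY'⟩ := exists_subset_card_eq (show 7 - #X ≤ #Y by omega)
    exact h.card_add_card_ne X Y' (hY'Y.trans hYX) hX (hY.subset hY'Y) (by omega)

variable [DecidableEq V]

theorem adj_of_not_adj (h : AvoidsBlueK3RedGenK7 R F) (hxy : x ≠ y) (hxz : x ≠ z) (hyz : y ≠ z)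
    (h₁ : ¬ R.Adj x y) (h₂ : ¬ R.Adj x z) : R.Adj y z := by
  by_contra h₃
  exact h.compl_cliqueFree {x, y, z} (is3Clique_triple_iff.mpr (by simp [*]))

theorem card_add_card_inter_le (h : AvoidsBlueK3RedGenK7 R F) (hX : R.IsClique (X : Set V))
    (hK : F.IsClique (K : Set V)) : #X + #(X ∩ K) ≤ 6 :=
  h.card_add_card_le hX (hK.subset (by simp)) inter_subset_left

variable [Fintype V] [DecidableRel R.Adj]

theorem isClique_compl_neighborFinset (h : AvoidsBlueK3RedGenK7 R F) (v : V) :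
    R.IsClique (Rᶜ.neighborFinset v : Set V) := by
  rw [coe_neighborFinset]
  simpa using isIndepSet_neighborSet_of_triangleFree _ h.compl_cliqueFree v

theorem isClique_sdiff_neighborFinset (h : AvoidsBlueK3RedGenK7 R F) (hx : x ∉ C) :
    R.IsClique ((C \ R.neighborFinset x : Finset V) : Set V) := by
  refine (h.isClique_compl_neighborFinset x).subset fun a ha => ?_
  simp only [coe_sdiff, Set.mem_sdiff, mem_coe, mem_neighborFinset] at ha
  have hxa : x ≠ a := by rintro rfl; exact hx ha.1
  simp [ha.2, hxa]

theorem card_le_three_of_subset_neighborFinset (h : AvoidsBlueK3RedGenK7 R F)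
    (hv : (Fᶜ.neighborSet v).Subsingleton) (hX : R.IsClique (X : Set V))
    (hXv : X ⊆ R.neighborFinset v) : #X ≤ 3 := by
  by_contra! hX4
  obtain ⟨a, ha, b, hb, hab⟩ := one_lt_card.mp (show 1 < #X by omega)
  have hvX := notMem_of_subset_neighborFinset hXv
  -- `v` has at most one half edge, so it is joined to `a` or `b` by a full edge
  obtain ⟨c, hc, hvc⟩ : ∃ c ∈ X, F.Adj v c := by
    by_contra! hnone
    have hcompl : ∀ c ∈ X, c ∈ Fᶜ.neighborSet v := fun c hc => by
      have hvc : v ≠ c := fun h => hvX (h ▸ hc)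
      simp [hnone c hc, hvc]
    exact hab (hv (hcompl a ha) (hcompl b hb))
  have := h.card_add_card_le (isClique_insert_of_subset_neighborFinset hX hXv) (Y := {v, c})
    (by simp [hvc]) (insert_subset_insert _ (singleton_subset_iff.mpr hc))
  rw [card_insert_of_notMem hvX, card_pair hvc.ne] at this
  omega

theorem card_le_two_of_subset_neighborFinset (h : AvoidsBlueK3RedGenK7 R F)
    (hv : (Fᶜ.neighborSet v).Subsingleton) (hX : R.IsClique (X : Set V))
    (hXv : X ⊆ R.neighborFinset v) (hz : z ∈ R.neighborFinset v) (hXz : X ⊆ R.neighborFinset z) :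
    #X ≤ 2 := by
  have := h.card_le_three_of_subset_neighborFinset hv
    (isClique_insert_of_subset_neighborFinset hX hXz) (insert_subset hz hXv)
  rw [card_insert_of_notMem (notMem_of_subset_neighborFinset hXz)] at this
  omega

theorem degree_le_eight (h : AvoidsBlueK3RedGenK7 R F) (hv : (Fᶜ.neighborSet v).Subsingleton) :
    R.degree v ≤ 8 := by
  rw [← card_neighborSet_eq_degree]
  refine card_le_eight_of_cliqueFree ?_ (h.compl_cliqueFree.compl_induce _)
  rw [cliqueFree_induce_iff]
  intro t ht hcl
  have := h.card_le_three_of_subset_neighborFinset hv hcl.isClique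
    (by simpa [← coe_subset] using ht)
  rw [hcl.card_eq] at this
  omega

theorem card_add_card_inter_le_four (h : AvoidsBlueK3RedGenK7 R F)
    (hX : R.IsClique (X : Set V)) (hXv : X ⊆ R.neighborFinset v)
    (hK : F.IsClique (K : Set V)) (hvK : v ∈ K) : #X + #(X ∩ K) ≤ 4 := by
  have hvX := notMem_of_subset_neighborFinset hXv
  have := h.card_add_card_inter_le (isClique_insert_of_subset_neighborFinset hX hXv) hK
  rw [insert_inter_of_mem hvK, card_insert_of_notMem hvX,
    card_insert_of_notMem (fun hv => hvX (mem_of_mem_inter_left hv))] at this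
  omega

theorem not_adj_of_adj (h : AvoidsBlueK3RedGenK7 R F) (hK : F.IsClique (K : Set V)) (hvK : v ∈ K)
    {a b : V} (ha : a ∈ R.neighborFinset v ∩ K) (hb : b ∈ R.neighborFinset v ∩ K)
    (hx : x ∈ R.neighborFinset v \ K) (hab : R.Adj a b) (hxa : R.Adj x a) : ¬ R.Adj x b := by
  intro hxb
  have hxab : x ∉ ({a, b} : Finset V) := by
    simp only [mem_insert, mem_singleton, not_or]
    exact ⟨ne_of_mem_sdiff_of_mem_inter hx ha, ne_of_mem_sdiff_of_mem_inter hx hb⟩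
  have hX : R.IsClique ((insert x {a, b} : Finset V) : Set V) := by
    simp [isClique_insert, hab, hxa, hxb]
  have hbound := h.card_add_card_inter_le_four hX
    (by simp [insert_subset_iff, (mem_inter.mp ha).1, (mem_inter.mp hb).1, (mem_sdiff.mp hx).1])
    hK hvK
  have hinter := card_le_card (show {a, b} ⊆ insert x {a, b} ∩ K by
    simp [insert_subset_iff, (mem_inter.mp ha).2, (mem_inter.mp hb).2])
  rw [card_insert_of_notMem hxab, card_pair hab.ne] at hbound
  rw [card_pair hab.ne] at hinter
  omega

theorem isClique_compl_inter_neighborFinset (h : AvoidsBlueK3RedGenK7 R F)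
    (hK : F.IsClique (K : Set V)) (hvK : v ∈ K) (hC : C ⊆ R.neighborFinset v ∩ K)
    (hx : x ∈ R.neighborFinset v \ K) :
    Rᶜ.IsClique ((C ∩ R.neighborFinset x : Finset V) : Set V) := by
  intro a ha b hb hab
  simp only [coe_inter, Set.mem_inter_iff, mem_coe] at ha hb
  refine (compl_adj R a b).mpr ⟨hab, fun hadj => ?_⟩
  exact h.not_adj_of_adj hK hvK (hC ha.1) (hC hb.1) hx hadj
    ((mem_neighborFinset _ _ _).mp ha.2) ((mem_neighborFinset _ _ _).mp hb.2)

theorem card_inter_neighborFinset_le_two (h : AvoidsBlueK3RedGenK7 R F)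
    (hK : F.IsClique (K : Set V)) (hvK : v ∈ K) (hC : C ⊆ R.neighborFinset v ∩ K)
    (hx : x ∈ R.neighborFinset v \ K) : #(C ∩ R.neighborFinset x) ≤ 2 :=
  Nat.lt_succ_iff.mp ((h.isClique_compl_inter_neighborFinset hK hvK hC hx).card_lt_of_cliqueFree
    h.compl_cliqueFree)

theorem card_sdiff_neighborFinset_le_two (h : AvoidsBlueK3RedGenK7 R F)
    (hK : F.IsClique (K : Set V)) (hvK : v ∈ K) (hC : C ⊆ R.neighborFinset v ∩ K)
    (hx : x ∈ R.neighborFinset v \ K) : #(C \ R.neighborFinset x) ≤ 2 := by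
  have := h.card_add_card_inter_le_four
    (h.isClique_sdiff_neighborFinset fun hxC => ne_of_mem_sdiff_of_mem_inter hx (hC hxC) rfl)
    (sdiff_subset.trans (hC.trans inter_subset_left)) hK hvK
  rw [inter_eq_left.mpr (sdiff_subset.trans (hC.trans inter_subset_right))] at this
  omega

theorem adj_of_card_eq_four (h : AvoidsBlueK3RedGenK7 R F) (hK : F.IsClique (K : Set V))
    (hvK : v ∈ K) (hC : C ⊆ R.neighborFinset v ∩ K) (hC4 : #C = 4)
    (hx : x ∈ R.neighborFinset v \ K) (hy : y ∈ R.neighborFinset v \ K) (hxy : x ≠ y) :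
    R.Adj x y := by
  by_contra hnxy
  have hsub : C \ R.neighborFinset y ⊆ C ∩ R.neighborFinset x := by
    intro a ha
    rw [mem_sdiff, mem_neighborFinset] at ha
    rw [mem_inter, mem_neighborFinset]
    refine ⟨ha.1, by_contra fun hxa => ha.2 (h.adj_of_not_adj hxy ?_ ?_ hnxy hxa)⟩
    · exact ne_of_mem_sdiff_of_mem_inter hx (hC ha.1)
    · exact ne_of_mem_sdiff_of_mem_inter hy (hC ha.1)
  have := card_le_one_of_isClique_compl
    (h.isClique_sdiff_neighborFinset fun hyC => ne_of_mem_sdiff_of_mem_inter hy (hC hyC) rfl)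
    (h.isClique_compl_inter_neighborFinset hK hvK hC hx) hsub
  have := card_inter_add_card_sdiff C (R.neighborFinset y)
  have := h.card_inter_neighborFinset_le_two hK hvK hC hy
  omega

theorem exists_adj_adj_of_card_eq_four (h : AvoidsBlueK3RedGenK7 R F)
    (hK : F.IsClique (K : Set V)) (hvK : v ∈ K) (hC : C ⊆ R.neighborFinset v ∩ K) (hC4 : #C = 4)
    (hx : x ∈ R.neighborFinset v \ K) (hy : y ∈ R.neighborFinset v \ K) :
    ∃ z ∈ C, R.Adj x z ∧ R.Adj y z := by
  by_contra! hnone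
  have hsub : C ∩ R.neighborFinset y ⊆ C \ R.neighborFinset x := by
    intro a ha
    rw [mem_inter, mem_neighborFinset] at ha
    rw [mem_sdiff, mem_neighborFinset]
    exact ⟨ha.1, fun hxa => hnone a ha.1 hxa ha.2⟩
  have := card_le_one_of_isClique_compl (G := Rᶜ)
    (h.isClique_compl_inter_neighborFinset hK hvK hC hy)
    (by
      rw [compl_compl]
      exact h.isClique_sdiff_neighborFinset fun hxC => ne_of_mem_sdiff_of_mem_inter hx (hC hxC) rfl)
    hsub
  have := card_inter_add_card_sdiff C (R.neighborFinset y)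
  have := h.card_sdiff_neighborFinset_le_two hK hvK hC hy
  omega

theorem false_of_card_eq_four (h : AvoidsBlueK3RedGenK7 R F)
    (hv : (Fᶜ.neighborSet v).Subsingleton) (hK : F.IsClique (K : Set V)) (hvK : v ∈ K)
    (hC : C ⊆ R.neighborFinset v ∩ K) (hW : W ⊆ R.neighborFinset v \ K)
    (hC4 : #C = 4) (hW3 : 2 < #W) : False := by
  obtain ⟨x₁, hx₁, x₂, hx₂, x₃, hx₃, h₁₂, h₁₃, h₂₃⟩ := two_lt_card.mp hW3
  replace hx₁ := hW hx₁
  replace hx₂ := hW hx₂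
  replace hx₃ := hW hx₃
  have hnone : ∀ z ∈ C, R.Adj x₁ z → R.Adj x₂ z → ¬ R.Adj x₃ z := by
    intro z hz h₁ h₂ h₃
    have hX : R.IsClique (({x₁, x₂, x₃} : Finset V) : Set V) := by
      simp [isClique_insert, h.adj_of_card_eq_four hK hvK hC hC4 hx₁ hx₂ h₁₂,
        h.adj_of_card_eq_four hK hvK hC hC4 hx₁ hx₃ h₁₃,
        h.adj_of_card_eq_four hK hvK hC hC4 hx₂ hx₃ h₂₃]
    have := h.card_le_two_of_subset_neighborFinset hv hX
      (by simp [insert_subset_iff, (mem_sdiff.mp hx₁).1, (mem_sdiff.mp hx₂).1,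
        (mem_sdiff.mp hx₃).1]) (mem_inter.mp (hC hz)).1
      (by simp [insert_subset_iff, h₁.symm, h₂.symm, h₃.symm])
    rw [card_eq_three.mpr ⟨x₁, x₂, x₃, h₁₂, h₁₃, h₂₃, rfl⟩] at this
    omega
  obtain ⟨z₁₂, hz₁₂, hx₁z₁₂, hx₂z₁₂⟩ := h.exists_adj_adj_of_card_eq_four hK hvK hC hC4 hx₁ hx₂
  obtain ⟨z₁₃, hz₁₃, hx₁z₁₃, hx₃z₁₃⟩ := h.exists_adj_adj_of_card_eq_four hK hvK hC hC4 hx₁ hx₃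
  obtain ⟨z₂₃, hz₂₃, hx₂z₂₃, hx₃z₂₃⟩ := h.exists_adj_adj_of_card_eq_four hK hvK hC hC4 hx₂ hx₃
  have hblue : ∀ x ∈ R.neighborFinset v \ K, ∀ a ∈ C, ∀ b ∈ C, R.Adj x a → R.Adj x b → a ≠ b →
      Rᶜ.Adj a b := fun x hx a ha b hb hxa hxb hab =>
    h.isClique_compl_inter_neighborFinset hK hvK hC hx (by simp [ha, hxa]) (by simp [hb, hxb]) hab
  -- no vertex of `C` is red to all three, so `z₁₂, z₁₃, z₂₃` form a blue triangle
  refine h.compl_cliqueFree {z₁₂, z₁₃, z₂₃} (is3Clique_triple_iff.mpr ⟨?_, ?_, ?_⟩)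
  · refine hblue x₁ hx₁ _ hz₁₂ _ hz₁₃ hx₁z₁₂ hx₁z₁₃ ?_
    rintro rfl
    exact hnone z₁₂ hz₁₂ hx₁z₁₂ hx₂z₁₂ hx₃z₁₃
  · refine hblue x₂ hx₂ _ hz₁₂ _ hz₂₃ hx₂z₁₂ hx₂z₂₃ ?_
    rintro rfl
    exact hnone z₁₂ hz₁₂ hx₁z₁₂ hx₂z₁₂ hx₃z₂₃
  · refine hblue x₃ hx₃ _ hz₁₃ _ hz₂₃ hx₃z₁₃ hx₃z₂₃ ?_
    rintro rfl
    exact hnone z₁₃ hz₁₃ hx₁z₁₃ hx₂z₂₃ hx₃z₁₃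

theorem false_of_adj_adj_not_adj (h : AvoidsBlueK3RedGenK7 R F)
    (hv : (Fᶜ.neighborSet v).Subsingleton) (hK : F.IsClique (K : Set V)) (hvK : v ∈ K)
    (hx : x ∈ R.neighborFinset v ∩ K) (hy : y ∈ R.neighborFinset v ∩ K)
    (hz : z ∈ R.neighborFinset v ∩ K) (hW : W ⊆ R.neighborFinset v \ K) (hW4 : 3 < #W)
    (hxz : x ≠ z) (hxy : R.Adj x y) (hyz : R.Adj y z) (hnxz : ¬ R.Adj x z) : False := by
  -- every vertex of `W` is blue to `y`, so `W` is a red clique in the red neighbourhood of `v`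
  have hWy : W ⊆ W \ R.neighborFinset y := by
    intro t ht
    refine mem_sdiff.mpr ⟨ht, fun hty => hnxz ?_⟩
    rw [mem_neighborFinset] at hty
    exact h.adj_of_not_adj (ne_of_mem_sdiff_of_mem_inter (hW ht) hx)
      (ne_of_mem_sdiff_of_mem_inter (hW ht) hz) hxz
      (h.not_adj_of_adj hK hvK hy hx (hW ht) hxy.symm hty.symm)
      (h.not_adj_of_adj hK hvK hy hz (hW ht) hyz hty.symm)
  have hyW : y ∉ W := fun hyW => ne_of_mem_sdiff_of_mem_inter (hW hyW) hy rfl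
  have := h.card_le_three_of_subset_neighborFinset hv
    ((h.isClique_sdiff_neighborFinset hyW).subset hWy) (hW.trans sdiff_subset)
  omega

theorem false_of_adj_not_adj_not_adj (h : AvoidsBlueK3RedGenK7 R F)
    (hv : (Fᶜ.neighborSet v).Subsingleton) (hK : F.IsClique (K : Set V)) (hvK : v ∈ K)
    (hx : x ∈ R.neighborFinset v ∩ K) (hy : y ∈ R.neighborFinset v ∩ K)
    (hz : z ∈ R.neighborFinset v ∩ K) (hW : W ⊆ R.neighborFinset v \ K) (hW5 : 4 < #W)
    (hxz : x ≠ z) (hyz : y ≠ z) (hxy : R.Adj x y) (hnxz : ¬ R.Adj x z) (hnyz : ¬ R.Adj y z) :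
    False := by
  have hWz : ∀ t ∈ W, R.Adj z t := by
    intro t ht
    by_contra hzt
    have hzt' := ne_of_mem_sdiff_of_mem_inter (hW ht) hz
    have hxt := h.adj_of_not_adj hxz.symm hzt'.symm (ne_of_mem_sdiff_of_mem_inter (hW ht) hx).symm
      (fun h => hnxz h.symm) hzt
    have hyt := h.adj_of_not_adj hyz.symm hzt'.symm (ne_of_mem_sdiff_of_mem_inter (hW ht) hy).symm
      (fun h => hnyz h.symm) hzt
    exact h.not_adj_of_adj hK hvK hx hy (hW ht) hxy hxt.symm hyt.symm
  have hblue : ∀ a ∈ R.neighborFinset v ∩ K, #(W \ R.neighborFinset a) ≤ 2 := fun a ha =>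
    h.card_le_two_of_subset_neighborFinset hv
      (h.isClique_sdiff_neighborFinset fun haW => ne_of_mem_sdiff_of_mem_inter (hW haW) ha rfl)
      (sdiff_subset.trans (hW.trans sdiff_subset)) (mem_inter.mp hz).1
      (fun t ht => (mem_neighborFinset _ _ _).mpr (hWz t (mem_sdiff.mp ht).1))
  -- no vertex of `W` is red to both `x` and `y`
  have hcover : W ⊆ (W \ R.neighborFinset x) ∪ (W \ R.neighborFinset y) := by
    intro t ht
    by_cases hxt : R.Adj x t
    · refine mem_union_right _ (mem_sdiff.mpr ⟨ht, fun hyt => ?_⟩)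
      exact h.not_adj_of_adj hK hvK hx hy (hW ht) hxy hxt.symm
        ((mem_neighborFinset _ _ _).mp hyt).symm
    · exact mem_union_left _ (mem_sdiff.mpr ⟨ht, fun h => hxt ((mem_neighborFinset _ _ _).mp h)⟩)
  have := (card_le_card hcover).trans (card_union_le _ _)
  have := hblue x hx
  have := hblue y hy
  omega

theorem false_of_card_eq_three (h : AvoidsBlueK3RedGenK7 R F)
    (hv : (Fᶜ.neighborSet v).Subsingleton) (hK : F.IsClique (K : Set V)) (hvK : v ∈ K)
    (hC : C ⊆ R.neighborFinset v ∩ K) (hW : W ⊆ R.neighborFinset v \ K)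
    (hC3 : #C = 3) (hW5 : 4 < #W) : False := by
  have key : ∀ {a b c}, a ∈ C → b ∈ C → c ∈ C → a ≠ c → b ≠ c → R.Adj a b → ¬ R.Adj a c →
      False := by
    intro a b c ha hb hc hac hbc hab hnac
    by_cases hbc' : R.Adj b c
    · exact h.false_of_adj_adj_not_adj hv hK hvK (hC ha) (hC hb) (hC hc) hW (by omega) hac hab
        hbc' hnac
    · exact h.false_of_adj_not_adj_not_adj hv hK hvK (hC ha) (hC hb) (hC hc) hW hW5 hac hbc hab
        hnac hbc'
  obtain ⟨x, y, z, hxy, hxz, hyz, rfl⟩ := card_eq_three.mp hC3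
  have hx : x ∈ ({x, y, z} : Finset V) := by simp
  have hy : y ∈ ({x, y, z} : Finset V) := by simp
  have hz : z ∈ ({x, y, z} : Finset V) := by simp
  by_cases hxy' : R.Adj x y <;> by_cases hxz' : R.Adj x z <;> by_cases hyz' : R.Adj y z
  · have := h.card_add_card_inter_le_four (is3Clique_triple_iff.mpr ⟨hxy', hxz', hyz'⟩).1
      (hC.trans inter_subset_left) hK hvK
    rw [inter_eq_left.mpr (hC.trans inter_subset_right), hC3] at this
    omega
  · exact key hy hx hz hyz hxz hxy'.symm hyz'
  · exact key hx hy hz hxz hyz hxy' hxz'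
  · exact key hx hy hz hxz hyz hxy' hxz'
  · exact key hx hz hy hxy hyz.symm hxz' hxy'
  · exact key hx hz hy hxy hyz.symm hxz' hxy'
  · exact key hy hz hx hxy.symm hxz.symm hyz' fun h => hxy' h.symm
  · exact h.compl_cliqueFree {x, y, z} (is3Clique_triple_iff.mpr (by simp [*]))

theorem cliqueFree_six (h : AvoidsBlueK3RedGenK7 R F) (hV : card V = 13)
    (hv : (Fᶜ.neighborSet v).Subsingleton) : F.CliqueFree 6 := by
  intro T hT
  obtain ⟨K, hvK, hK⟩ := exists_isNClique_mem_of_subsingleton hv hT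
  obtain ⟨B, hB⟩ : ∃ B, B = Rᶜ.neighborFinset v := ⟨_, rfl⟩
  obtain ⟨C, hC⟩ : ∃ C, C = R.neighborFinset v ∩ K := ⟨_, rfl⟩
  obtain ⟨W, hW⟩ : ∃ W, W = R.neighborFinset v \ K := ⟨_, rfl⟩
  have hdeg := h.degree_le_eight hv
  have hBdeg : #B + R.degree v = 12 := by
    rw [hB, card_neighborFinset_eq_degree, R.degree_compl v]
    omega
  have hBK : #B + #(B ∩ K) ≤ 6 :=
    h.card_add_card_inter_le (hB ▸ h.isClique_compl_neighborFinset v) hK.1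
  have hBC : #(B ∩ K) + #C = 5 := by
    have hKN : K \ R.neighborFinset v = insert v (B ∩ K) := by
      ext a
      by_cases hav : a = v
      · simp [hav, hvK, hB]
      · simp [hB, hav, Ne.symm hav, and_comm]
    have := card_sdiff_add_card_inter K (R.neighborFinset v)
    rw [hKN, card_insert_of_notMem (by simp [hB]), hK.card_eq, inter_comm K, ← hC] at this
    omega
  have hWC : #W + #C = R.degree v := by
    rw [hW, hC, ← card_neighborFinset_eq_degree]
    exact card_sdiff_add_card_inter _ _
  obtain ⟨x, hx⟩ : W.Nonempty := card_pos.mp (by omega)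
  have hC4 : #C ≤ 4 := by
    have := card_inter_add_card_sdiff C (R.neighborFinset x)
    have := h.card_inter_neighborFinset_le_two hK.1 hvK hC.subset (hW.subset hx)
    have := h.card_sdiff_neighborFinset_le_two hK.1 hvK hC.subset (hW.subset hx)
    omega
  rcases (show #C = 3 ∨ #C = 4 by omega) with hC3 | hC4
  · exact h.false_of_card_eq_three hv hK.1 hvK hC.subset hW.subset hC3 (by omega)
  · exact h.false_of_card_eq_four hv hK.1 hvK hC.subset hW.subset hC4 (by omega)

end AvoidsBlueK3RedGenK7

theorem avoidsBlueK3RedGenK7_fromRel [DecidableEq V] (w : V → V → ℝ) (red : V → V → Prop)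
    (hwsymm : ∀ i j, w i j = w j i) (hredsymm : ∀ i j, red i j ↔ red j i)
    (hnoBlueTriangle : ∀ a b c : V, a ≠ b → a ≠ c → b ≠ c → red a b ∨ red a c ∨ red b c)
    (hnoRedGenK7 : ¬ ∃ X Y : Finset V, Y ⊆ X ∧ X.card + Y.card = 7 ∧
        (∀ i ∈ X, ∀ j ∈ X, i ≠ j → red i j) ∧
        (∀ i ∈ Y, ∀ j ∈ Y, i ≠ j → w i j = 1)) :
    AvoidsBlueK3RedGenK7 (fromRel red) (fromRel fun i j => w i j = 1) where
  compl_cliqueFree s hs := by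
    obtain ⟨a, b, c, hab, hac, hbc, rfl⟩ := is3Clique_iff.mp hs
    simp only [compl_adj, fromRel_adj] at hab hac hbc
    rcases hnoBlueTriangle a b c hab.1 hac.1 hbc.1 with h | h | h
    · exact hab.2 ⟨hab.1, .inl h⟩
    · exact hac.2 ⟨hac.1, .inl h⟩
    · exact hbc.2 ⟨hbc.1, .inl h⟩
  card_add_card_ne X Y hYX hX hY h7 := by
    refine hnoRedGenK7 ⟨X, Y, hYX, h7, fun i hi j hj hij => ?_, fun i hi j hj hij => ?_⟩
    · rcases (hX hi hj hij).2 with h | h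
      exacts [h, (hredsymm j i).mp h]
    · rcases (hY hi hj hij).2 with h | h
      exacts [h, (hwsymm j i).symm.trans h]

/-- Claim t=13: in a weighted 2-colored K₁₃ (weights in {1/2, 1}) with no blue triangle, no
red generalized K₇, and density at least 7/16, every vertex is incident to at least two
half edges. -/
theorem two_half_edges_K13 (w : Fin 13 → Fin 13 → ℝ) (red : Fin 13 → Fin 13 → Prop)
    (hwsymm : ∀ i j, w i j = w j i)
    (hwval : ∀ i j : Fin 13, i ≠ j → w i j = 1 / 2 ∨ w i j = 1)
    (hredsymm : ∀ i j, red i j ↔ red j i)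
    (hnoBlueTriangle : ∀ a b c : Fin 13, a ≠ b → a ≠ c → b ≠ c →
        red a b ∨ red a c ∨ red b c)
    (hnoRedGenK7 : ¬ ∃ X Y : Finset (Fin 13), Y ⊆ X ∧ X.card + Y.card = 7 ∧
        (∀ i ∈ X, ∀ j ∈ X, i ≠ j → red i j) ∧
        (∀ i ∈ Y, ∀ j ∈ Y, i ≠ j → w i j = 1))
    (hdens : ∃ u : Fin 13 → ℝ, (∀ i, 0 ≤ u i) ∧ ∑ i, u i = 1 ∧
        7 / 16 ≤ ∑ i, ∑ j, if i < j then w i j * u i * u j else 0) :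
    ∀ i : Fin 13, ∃ j k : Fin 13, j ≠ i ∧ k ≠ i ∧ j ≠ k ∧
      w i j = 1 / 2 ∧ w i k = 1 / 2 := by
  intro v
  by_contra hhalf
  have hv : ((fromRel fun i j => w i j = 1)ᶜ.neighborSet v).Subsingleton := by
    have hmem : ∀ j ∈ (fromRel fun i j => w i j = 1)ᶜ.neighborSet v, j ≠ v ∧ w v j = 1 / 2 :=
      fun j hj => by
        simp only [mem_neighborSet, compl_adj, fromRel_adj, not_and, not_or] at hj
        exact ⟨Ne.symm hj.1, (hwval v j hj.1).resolve_right (hj.2 hj.1).1⟩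
    intro j hj k hk
    by_contra hjk
    exact hhalf ⟨j, k, (hmem j hj).1, (hmem k hk).1, hjk, (hmem j hj).2, (hmem k hk).2⟩
  have hK6 : (fromRel fun i j => w i j = 1).CliqueFree 6 := by
    classical
    exact (avoidsBlueK3RedGenK7_fromRel w red hwsymm hredsymm hnoBlueTriangle
      hnoRedGenK7).cliqueFree_six (by simp) hv
  obtain ⟨u, hu, hu1, hdens⟩ := hdens
  have hMS := adjMatrix_dotProduct_mulVec_le_of_cliqueFree (r := 5) hK6 hu
  have hsplit := four_mul_sum_ite_lt_le w hwval hu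
  have hCS : (∑ i, u i) ^ 2 ≤ 13 * ∑ i, u i ^ 2 := by
    simpa using sq_sum_le_card_mul_sum_sq (s := univ) (f := u)
  rw [hu1] at hMS hsplit hCS
  norm_num at hMS
  linarith
end
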